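/- arXiv:2503.23286 — 10 statements merged into one kernel-verified Lean document; each statement's English description precedes it below -/
import Mathlib

section
/- For every integer r ≥ 1 and every fixed integer m ≥ 2, the sum over all weakly decreasing tuples m ≥ n_1 ≥ n_2 ≥ ⋯ ≥ n_r ≥ 1 of 1/(n_1 n_2 ⋯ n_r) is strictly less than m. -/
open scoped BigOperators

/-!
Write `S r m` for the sum. Splitting off the largest entry `n₁ = k` gives
`S (r + 1) m = ∑_{k=1}^{m} S r k / k`, with `S 0 m = 1`. By induction on `r`, `S r k ≤ k`
for all `k ≥ 1`, so every term of the recursion is at most `1`; the term `k = m` is strictly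
smaller than `1` because `S r m < m` for `m ≥ 2`, whence `S (r + 1) m < m`.
-/

open Finset

def antitoneTuples (r m : ℕ) : Finset (Fin r → ℕ) :=
  {n ∈ Fintype.piFinset fun _ => Icc 1 m | Antitone n}

lemma mem_antitoneTuples {r m : ℕ} {n : Fin r → ℕ} :
    n ∈ antitoneTuples r m ↔ Antitone n ∧ ∀ i, 1 ≤ n i ∧ n i ≤ m := by
  simp only [antitoneTuples, mem_filter, Fintype.mem_piFinset, mem_Icc]
  tauto

lemma Fin.antitone_cons_iff {α : Type*} [Preorder α] {r : ℕ} (a : α) (n : Fin r → α) :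
    Antitone (Fin.cons a n : Fin (r + 1) → α) ↔ Antitone n ∧ ∀ i, n i ≤ a := by
  refine ⟨fun h => ⟨fun i j hij => by simpa using h (Fin.succ_le_succ_iff.mpr hij),
    fun i => by simpa using h (Fin.zero_le i.succ)⟩, fun ⟨hn, ha⟩ i j hij => ?_⟩
  cases j using Fin.cases with
  | zero => rw [Fin.le_zero_iff.mp hij]
  | succ j =>
    cases i using Fin.cases with
    | zero => simpa using ha j
    | succ i => simpa using hn (Fin.succ_le_succ_iff.mp hij)

lemma cons_mem_antitoneTuples_iff {r m k : ℕ} {n : Fin r → ℕ} :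
    Fin.cons k n ∈ antitoneTuples (r + 1) m ↔ k ∈ Icc 1 m ∧ n ∈ antitoneTuples r k := by
  simp only [mem_antitoneTuples, Fin.antitone_cons_iff, Fin.forall_fin_succ, Fin.cons_zero,
    Fin.cons_succ, mem_Icc]
  constructor
  · rintro ⟨⟨hn, hle⟩, hk, hbd⟩
    exact ⟨hk, hn, fun i => ⟨(hbd i).1, hle i⟩⟩
  · rintro ⟨hk, hn, hbd⟩
    exact ⟨⟨hn, fun i => (hbd i).2⟩, hk, fun i => ⟨(hbd i).1, (hbd i).2.trans hk.2⟩⟩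

lemma sum_prod_antitoneTuples_zero {R : Type*} [CommSemiring R] (f : ℕ → R) (m : ℕ) :
    ∑ n ∈ antitoneTuples 0 m, ∏ i, f (n i) = 1 := by
  have : antitoneTuples 0 m = univ := eq_univ_of_forall fun n =>
    mem_antitoneTuples.mpr ⟨fun i => i.elim0, fun i => i.elim0⟩
  simp [this]

lemma sum_prod_antitoneTuples_succ {R : Type*} [CommSemiring R] (f : ℕ → R) (r m : ℕ) :
    ∑ n ∈ antitoneTuples (r + 1) m, ∏ i, f (n i) =
      ∑ k ∈ Icc 1 m, f k * ∑ n ∈ antitoneTuples r k, ∏ i, f (n i) := by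
  simp only [mul_sum]
  rw [sum_sigma']
  refine sum_nbij' (fun n => ⟨n 0, Fin.tail n⟩) (fun p => Fin.cons p.1 p.2) ?_ ?_ ?_ ?_ ?_
  · intro n hn
    rw [← Fin.cons_self_tail n, cons_mem_antitoneTuples_iff] at hn
    simpa using hn
  · rintro ⟨k, n⟩ hkn
    exact cons_mem_antitoneTuples_iff.mpr (mem_sigma.mp hkn)
  · intro n _
    exact Fin.cons_self_tail n
  · rintro ⟨k, n⟩ _
    simp
  · intro n _
    exact Fin.prod_univ_succ _

lemma sum_prod_inv_antitoneTuples_le (r : ℕ) {m : ℕ} (hm : 1 ≤ m) :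
    ∑ n ∈ antitoneTuples r m, ∏ i, (n i : ℝ)⁻¹ ≤ m := by
  induction r generalizing m with
  | zero =>
    rw [sum_prod_antitoneTuples_zero (fun k : ℕ => (k : ℝ)⁻¹)]
    exact_mod_cast hm
  | succ r ih =>
    rw [sum_prod_antitoneTuples_succ (fun k : ℕ => (k : ℝ)⁻¹)]
    calc _ ≤ ∑ k ∈ Icc 1 m, (1 : ℝ) := sum_le_sum fun k hk => ?_
      _ = m := by simp
    have hk1 := (mem_Icc.mp hk).1
    rw [inv_mul_le_one₀ (by positivity)]
    exact ih hk1

lemma sum_prod_inv_antitoneTuples_lt (r : ℕ) {m : ℕ} (hm : 2 ≤ m) :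
    ∑ n ∈ antitoneTuples r m, ∏ i, (n i : ℝ)⁻¹ < m := by
  induction r generalizing m with
  | zero =>
    rw [sum_prod_antitoneTuples_zero (fun k : ℕ => (k : ℝ)⁻¹)]
    exact_mod_cast hm
  | succ r ih =>
    rw [sum_prod_antitoneTuples_succ (fun k : ℕ => (k : ℝ)⁻¹)]
    calc _ < ∑ k ∈ Icc 1 m, (1 : ℝ) :=
          sum_lt_sum (fun k hk => ?_) ⟨m, mem_Icc.mpr ⟨by omega, le_rfl⟩, ?_⟩
      _ = m := by simp
    · have hk1 := (mem_Icc.mp hk).1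
      rw [inv_mul_le_one₀ (by positivity)]
      exact sum_prod_inv_antitoneTuples_le r hk1
    · rw [inv_mul_lt_one₀ (by positivity)]
      exact ih hm

theorem stmt0_general (r m : ℕ) (hm : 2 ≤ m) :
    (∑' n : {n : Fin r → ℕ // Antitone n ∧ ∀ i, 1 ≤ n i ∧ n i ≤ m},
      (1 : ℝ) / ∏ i, (n.1 i : ℝ)) < m := by
  calc _ = ∑' n : antitoneTuples r m, ∏ i, (n.1 i : ℝ)⁻¹ := by
        simp only [one_div, ← prod_inv_distrib]
        exact ((Equiv.subtypeEquivRight fun _ => mem_antitoneTuples).tsum_eq _).symm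
    _ = ∑ n ∈ antitoneTuples r m, ∏ i, (n i : ℝ)⁻¹ :=
        Finset.tsum_subtype _ fun n : Fin r → ℕ => ∏ i, (n i : ℝ)⁻¹
    _ < m := sum_prod_inv_antitoneTuples_lt r hm

theorem stmt0 (r m : ℕ) (hr : 1 ≤ r) (hm : 2 ≤ m) :
    (∑' n : {n : Fin r → ℕ // Antitone n ∧ ∀ i, 1 ≤ n i ∧ n i ≤ m},
      (1 : ℝ) / ∏ i, (n.1 i : ℝ)) < m :=
  stmt0_general r m hm
end

section
/- For every fixed integer m ≥ 2, the limit as r → ∞ of the sum over all weakly decreasing tuples m ≥ n_1 ≥ ⋯ ≥ n_r ≥ 1 of 1/(n_1 n_2 ⋯ n_r) equals m. -/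
open scoped BigOperators
open Finset Filter

/-- `hseq r m` is the sum of `1/(n₁⋯n_r)` over antitone tuples `m ≥ n₁ ≥ ⋯ ≥ n_r ≥ 1`. -/
noncomputable def hseq : ℕ → ℕ → ℝ
  | 0, _ => 1
  | (r+1), m => ∑ n ∈ Finset.Icc 1 m, (1 / (n : ℝ)) * hseq r n

lemma hseq_zero (m : ℕ) : hseq 0 m = 1 := rfl

lemma hseq_succ (r m : ℕ) :
    hseq (r+1) m = ∑ n ∈ Finset.Icc 1 m, (1 / (n : ℝ)) * hseq r n := rfl

lemma hseq_nonneg : ∀ r m, 0 ≤ hseq r m := by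
  intro r
  induction r with
  | zero => intro m; simp [hseq_zero]
  | succ r ih =>
    intro m
    rw [hseq_succ]
    apply Finset.sum_nonneg
    intro n _
    exact mul_nonneg (by positivity) (ih n)

lemma hseq_one : ∀ r, hseq r 1 = 1 := by
  intro r
  induction r with
  | zero => rfl
  | succ r ih => simp [hseq_succ, ih]

lemma hseq_top (r m : ℕ) :
    hseq (r+1) (m+1) = hseq (r+1) m + (1 / ((m : ℝ) + 1)) * hseq r (m+1) := by
  rw [hseq_succ, hseq_succ, Finset.sum_Icc_succ_top (by omega)]
  push_cast
  ring

lemma hseq_mono : ∀ r m, 1 ≤ m → hseq r m ≤ hseq (r+1) m := by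
  intro r
  induction r with
  | zero =>
    intro m hm
    rw [hseq_zero, hseq_succ]
    have h1 : (1 : ℕ) ∈ Finset.Icc 1 m := by simp [hm]
    calc (1 : ℝ) = (1 / ((1:ℕ) : ℝ)) * hseq 0 1 := by simp [hseq_zero]
    _ ≤ ∑ n ∈ Finset.Icc 1 m, (1 / (n : ℝ)) * hseq 0 n := by
        apply Finset.single_le_sum (f := fun n : ℕ => (1 / (n : ℝ)) * hseq 0 n) _ h1
        intro i _
        exact mul_nonneg (by positivity) (hseq_nonneg 0 i)
  | succ r ih =>
    intro m _
    rw [hseq_succ, hseq_succ (r+1)]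
    apply Finset.sum_le_sum
    intro n hn
    rw [Finset.mem_Icc] at hn
    exact mul_le_mul_of_nonneg_left (ih n hn.1) (by positivity)

lemma hseq_le : ∀ m r, hseq r (m+1) ≤ (m : ℝ) + 1 := by
  intro m
  induction m with
  | zero => intro r; simp [hseq_one]
  | succ m ihm =>
    intro r
    induction r with
    | zero => rw [hseq_zero]; push_cast; linarith
    | succ r ihr =>
      rw [hseq_top r (m+1)]
      have hB : hseq r (m+1+1) ≤ ((m:ℝ)+1) + 1 := by
        have := ihr; push_cast at this ⊢; linarith
      have h1 : (1 / (((m+1:ℕ) : ℝ) + 1)) * hseq r (m+1+1) ≤ 1 := by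
        rw [div_mul_eq_mul_div, one_mul, div_le_one (by positivity)]
        push_cast
        push_cast at hB
        linarith
      have hA : hseq (r+1) (m+1) ≤ (m:ℝ) + 1 := ihm (r+1)
      push_cast
      push_cast at h1
      linarith

lemma hseq_tendsto : ∀ m, Tendsto (fun r => hseq r (m+1)) atTop (nhds ((m : ℝ) + 1)) := by
  intro m
  induction m with
  | zero =>
    have : (fun r => hseq r (0+1)) = fun _ : ℕ => (1:ℝ) := funext fun r => hseq_one r
    rw [this]
    simp only [Nat.cast_zero, zero_add]
    exact tendsto_const_nhds
  | succ m ihm =>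
    have hb : ∀ r, hseq r (m+1+1) ≤ (m:ℝ) + 1 + 1 := by
      intro r
      have := hseq_le (m+1) r
      push_cast at this ⊢
      linarith
    have hmono : Monotone (fun r => hseq r (m+1+1)) :=
      monotone_nat_of_le_succ fun r => hseq_mono r (m+1+1) (by omega)
    obtain hL | ⟨L, hL⟩ := tendsto_of_monotone hmono
    · exfalso
      obtain ⟨r, hr⟩ := (hL.eventually (eventually_gt_atTop ((m : ℝ) + 1 + 1))).exists
      exact absurd (hb r) (not_le.mpr hr)
    · have heq : ∀ r : ℕ, hseq (r+1) (m+1+1) =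
          hseq (r+1) (m+1) + (1 / ((m : ℝ) + 1 + 1)) * hseq r (m+1+1) := by
        intro r
        have := hseq_top r (m+1)
        push_cast at this
        convert this using 4
      have h1 : Tendsto (fun r : ℕ => hseq (r+1) (m+1+1)) atTop (nhds L) :=
        hL.comp (tendsto_add_atTop_nat 1)
      have h2 : Tendsto (fun r : ℕ => hseq (r+1) (m+1) + (1 / ((m : ℝ) + 1 + 1)) * hseq r (m+1+1))
          atTop (nhds (((m : ℝ) + 1) + (1 / ((m : ℝ) + 1 + 1)) * L)) :=
        (ihm.comp (tendsto_add_atTop_nat 1)).add (tendsto_const_nhds.mul hL)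
      have hLeq : L = ((m : ℝ) + 1) + (1 / ((m : ℝ) + 1 + 1)) * L := by
        apply tendsto_nhds_unique h1
        exact h2.congr fun r => (heq r).symm
      have hM : ((m : ℝ) + 1 + 1) ≠ 0 := by positivity
      have hLval : L = (m : ℝ) + 1 + 1 := by
        field_simp at hLeq
        nlinarith [hLeq]
      rw [hLval] at hL
      have hcast : (((m+1:ℕ)) : ℝ) + 1 = (m : ℝ) + 1 + 1 := by push_cast; ring
      rw [hcast]
      exact hL

instance finAnti (k m : ℕ) :
    Finite {n : Fin k → ℕ // Antitone n ∧ ∀ i, 1 ≤ n i ∧ n i ≤ m} := by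
  apply Finite.of_injective
    (fun n : {n : Fin k → ℕ // Antitone n ∧ ∀ i, 1 ≤ n i ∧ n i ≤ m} =>
      (fun i => (⟨n.1 i, Nat.lt_succ_of_le (n.2.2 i).2⟩ : Fin (m+1))))
  intro a b hab
  apply Subtype.ext
  funext i
  exact congrArg Fin.val (congrFun hab i)

/-- The decomposition equiv: split off the first coordinate. -/
noncomputable def splitEquiv (r m : ℕ) :
    (Σ k : {k : ℕ // k ∈ Finset.Icc 1 m},
      {t : Fin (r+1) → ℕ // Antitone t ∧ ∀ i, 1 ≤ t i ∧ t i ≤ k.1}) ≃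
    {n : Fin (r+2) → ℕ // Antitone n ∧ ∀ i, 1 ≤ n i ∧ n i ≤ m} where
  toFun := fun p =>
    ⟨Fin.cons p.1.1 p.2.1, by
      obtain ⟨k, t⟩ := p
      have hk := Finset.mem_Icc.mp k.2
      constructor
      · exact antitone_vecCons.mpr ⟨(t.2.2 0).2, t.2.1⟩
      · intro i
        refine Fin.cases ?_ ?_ i
        · simpa using hk
        · intro j
          simp only [Fin.cons_succ]
          exact ⟨(t.2.2 j).1, le_trans (t.2.2 j).2 hk.2⟩⟩
  invFun := fun n =>
    ⟨⟨n.1 0, Finset.mem_Icc.mpr ⟨(n.2.2 0).1, (n.2.2 0).2⟩⟩,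
     ⟨Fin.tail n.1, by
        refine ⟨fun i j hij => n.2.1 (Fin.succ_le_succ_iff.mpr hij), fun i => ?_⟩
        exact ⟨(n.2.2 i.succ).1, n.2.1 (Fin.zero_le i.succ)⟩⟩⟩
  left_inv := fun p => by
    refine Sigma.subtype_ext (Subtype.ext ?_) ?_ <;>
      simp [Fin.cons_zero, Fin.tail_cons]
  right_inv := fun n => Subtype.ext (Fin.cons_self_tail n.1)

lemma splitEquiv_apply (r m : ℕ)
    (p : Σ k : {k : ℕ // k ∈ Finset.Icc 1 m},
      {t : Fin (r+1) → ℕ // Antitone t ∧ ∀ i, 1 ≤ t i ∧ t i ≤ k.1}) :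
    ((splitEquiv r m) p).1 = Fin.cons p.1.1 p.2.1 := rfl

/-- Equiv for length-one tuples. -/
def oneEquiv (m : ℕ) : {k : ℕ // k ∈ Finset.Icc 1 m} ≃
    {n : Fin 1 → ℕ // Antitone n ∧ ∀ i, 1 ≤ n i ∧ n i ≤ m} where
  toFun := fun k => ⟨fun _ => k.1, by
    have hk := Finset.mem_Icc.mp k.2
    exact ⟨antitone_const, fun _ => hk⟩⟩
  invFun := fun n => ⟨n.1 0, Finset.mem_Icc.mpr (n.2.2 0)⟩
  left_inv := fun k => rfl
  right_inv := fun n => Subtype.ext (funext fun i =>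
    congrArg n.1 (Subsingleton.elim 0 i))

lemma oneEquiv_apply (m : ℕ) (k : {k : ℕ // k ∈ Finset.Icc 1 m}) (i : Fin 1) :
    ((oneEquiv m k).1 i : ℝ) = (k.1 : ℝ) := rfl

lemma tsum_eq_hseq : ∀ r m : ℕ,
    (∑' n : {n : Fin (r + 1) → ℕ // Antitone n ∧ ∀ i, 1 ≤ n i ∧ n i ≤ m},
      (1 : ℝ) / ∏ i, (n.1 i : ℝ)) = hseq (r+1) m := by
  intro r
  induction r with
  | zero =>
    intro m
    rw [← Equiv.tsum_eq (oneEquiv m) (fun n : {n : Fin 1 → ℕ // Antitone n ∧ ∀ i, 1 ≤ n i ∧ n i ≤ m} =>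
      (1 : ℝ) / ∏ i, (n.1 i : ℝ))]
    calc (∑' c : {k : ℕ // k ∈ Finset.Icc 1 m}, (1 : ℝ) / ∏ i, ((oneEquiv m c).1 i : ℝ))
        = ∑' c : {k : ℕ // k ∈ Finset.Icc 1 m}, (1 : ℝ) / (c.1 : ℝ) :=
          tsum_congr fun c => by rw [Fin.prod_univ_one, oneEquiv_apply]
      _ = ∑ k ∈ Finset.Icc 1 m, (1 : ℝ) / (k : ℝ) :=
          Finset.tsum_subtype (Finset.Icc 1 m) (fun k : ℕ => (1 : ℝ) / (k : ℝ))
      _ = hseq (0+1) m := by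
          rw [hseq_succ]
          exact Finset.sum_congr rfl fun n _ => by rw [hseq_zero, mul_one]
  | succ r ih =>
    intro m
    rw [← Equiv.tsum_eq (splitEquiv r m)
      (fun n : {n : Fin (r+2) → ℕ // Antitone n ∧ ∀ i, 1 ≤ n i ∧ n i ≤ m} =>
        (1 : ℝ) / ∏ i, (n.1 i : ℝ))]
    rw [Summable.tsum_sigma (Summable.of_finite)]
    have inner : ∀ k : {k : ℕ // k ∈ Finset.Icc 1 m},
        (∑' t : {t : Fin (r+1) → ℕ // Antitone t ∧ ∀ i, 1 ≤ t i ∧ t i ≤ k.1},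
          (1 : ℝ) / ∏ i, (((splitEquiv r m) ⟨k, t⟩).1 i : ℝ)) =
        (1 / (k.1 : ℝ)) * hseq (r+1) k.1 := by
      intro k
      rw [← ih k.1, ← tsum_mul_left]
      apply tsum_congr
      intro t
      have hp : (∏ i : Fin (r+2), (((splitEquiv r m) ⟨k, t⟩).1 i : ℝ)) =
          (k.1 : ℝ) * ∏ i : Fin (r+1), (t.1 i : ℝ) := by
        rw [splitEquiv_apply, Fin.prod_univ_succ]
        simp [Fin.cons_succ]
      rw [hp]
      rw [eq_comm, mul_comm]
      rw [div_mul_div_comm, one_mul, mul_comm]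
    calc (∑' k : {k : ℕ // k ∈ Finset.Icc 1 m},
          ∑' t : {t : Fin (r+1) → ℕ // Antitone t ∧ ∀ i, 1 ≤ t i ∧ t i ≤ k.1},
            (1 : ℝ) / ∏ i, (((splitEquiv r m) ⟨k, t⟩).1 i : ℝ))
        = ∑' k : {k : ℕ // k ∈ Finset.Icc 1 m}, (1 / (k.1 : ℝ)) * hseq (r+1) k.1 :=
          tsum_congr inner
      _ = ∑ k ∈ Finset.Icc 1 m, (1 / (k : ℝ)) * hseq (r+1) k :=
          Finset.tsum_subtype (Finset.Icc 1 m) (fun k : ℕ => (1 / (k : ℝ)) * hseq (r+1) k)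
      _ = hseq (r+1+1) m := (hseq_succ (r+1) m).symm

theorem stmt1 (m : ℕ) (hm : 2 ≤ m) :
    Filter.Tendsto
      (fun r : ℕ =>
        ∑' n : {n : Fin (r + 1) → ℕ // Antitone n ∧ ∀ i, 1 ≤ n i ∧ n i ≤ m},
          (1 : ℝ) / ∏ i, (n.1 i : ℝ))
      Filter.atTop (nhds (m : ℝ)) := by
  obtain ⟨m', rfl⟩ : ∃ m', m = m' + 1 := ⟨m - 1, by omega⟩
  have key : (fun r : ℕ =>
      ∑' n : {n : Fin (r + 1) → ℕ // Antitone n ∧ ∀ i, 1 ≤ n i ∧ n i ≤ m' + 1},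
        (1 : ℝ) / ∏ i, (n.1 i : ℝ)) = fun r => hseq (r+1) (m'+1) :=
    funext fun r => tsum_eq_hseq r (m'+1)
  rw [key]
  have h := (hseq_tendsto m').comp (tendsto_add_atTop_nat 1)
  have hcast : ((m'+1 : ℕ) : ℝ) = (m' : ℝ) + 1 := by push_cast; ring
  rw [hcast]
  exact h
end

section
/- For every integer p ≥ 2, the multiple series Σ_{n_1 ≥ n_2 ≥ ⋯ ≥ n_p ≥ 2} 1/(n_1^2 n_2 ⋯ n_p) satisfies 3/4 < Σ < 1. -/
open scoped BigOperators ENNReal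
open Filter ENNReal

namespace Stmt3Aux


abbrev Ch (p : ℕ) := {n : Fin p → ℕ // Antitone n ∧ ∀ i, 2 ≤ n i}

lemma tail_antitone {p : ℕ} {f : Fin (p+1) → ℕ} (hf : Antitone f) :
    Antitone (Fin.tail f) := fun i j h => hf (Fin.succ_le_succ_iff.mpr h)

lemma cons_antitone {p : ℕ} {f : Fin (p+1) → ℕ} (hf : Antitone f) {m : ℕ}
    (hm : f 0 ≤ m) : Antitone (Fin.cons m f : Fin (p+2) → ℕ) := by
  intro i j hij
  induction j using Fin.cases with
  | zero =>
      have : i = 0 := le_antisymm (by simpa using hij) (Fin.zero_le i)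
      simp [this]
  | succ j =>
      induction i using Fin.cases with
      | zero =>
          simp only [Fin.cons_zero, Fin.cons_succ]
          exact le_trans (hf (Fin.zero_le j)) hm
      | succ i =>
          simp only [Fin.cons_succ]
          exact hf (by exact_mod_cast Fin.succ_le_succ_iff.mp hij)

/-- chains of length 1 are just naturals ≥ 2, coded by an offset -/
def e0 : Ch 1 ≃ ℕ where
  toFun c := c.1 0 - 2
  invFun j := ⟨fun _ => 2 + j, antitone_const, fun _ => Nat.le_add_right 2 j⟩
  left_inv c := by
    apply Subtype.ext; funext i
    have h2 := c.2.2 0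
    have : i = 0 := Subsingleton.elim i 0
    subst this
    show 2 + (c.1 0 - 2) = c.1 0
    omega
  right_inv j := by show 2 + j - 2 = j; omega

/-- peel off the head (largest entry) of a chain -/
def eS (p : ℕ) : Ch (p+2) ≃ Ch (p+1) × ℕ where
  toFun c := (⟨Fin.tail c.1, tail_antitone c.2.1, fun i => c.2.2 i.succ⟩,
      c.1 0 - c.1 1)
  invFun x := ⟨Fin.cons (x.1.1 0 + x.2) x.1.1,
      cons_antitone x.1.2.1 (Nat.le_add_right _ _),
      by
        intro i
        induction i using Fin.cases with
        | zero => simpa using le_trans (x.1.2.2 0) (Nat.le_add_right _ _)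
        | succ i => simpa using x.1.2.2 i⟩
  left_inv c := by
    apply Subtype.ext
    have h01 : c.1 1 ≤ c.1 0 := c.2.1 (by simp [Fin.le_def])
    have ht0 : Fin.tail c.1 0 = c.1 1 := by
      simp [Fin.tail, Fin.succ_zero_eq_one]
    simp only [ht0]
    have : c.1 1 + (c.1 0 - c.1 1) = c.1 0 := by omega
    rw [this]
    exact Fin.cons_self_tail c.1
  right_inv x := by
    obtain ⟨c, j⟩ := x
    refine Prod.ext (Subtype.ext ?_) ?_
    · simp [Fin.tail_cons]
    · show (Fin.cons (c.1 0 + j) c.1 : Fin (p+2) → ℕ) 0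
          - (Fin.cons (c.1 0 + j) c.1 : Fin (p+2) → ℕ) 1 = j
      rw [← Fin.succ_zero_eq_one, Fin.cons_succ, Fin.cons_zero]
      omega

noncomputable def cs (p : ℕ) (w : ℕ → ℝ≥0∞) : ℝ≥0∞ :=
  ∑' c : Ch (p+1), w (c.1 0) * ∏ i : Fin p, (↑(c.1 i.succ) : ℝ≥0∞)⁻¹

lemma cs_zero (w : ℕ → ℝ≥0∞) : cs 0 w = ∑' j : ℕ, w (2 + j) := by
  unfold cs
  rw [← Equiv.tsum_eq e0.symm (fun c : Ch 1 => w (c.1 0) * ∏ i : Fin 0, (↑(c.1 i.succ) : ℝ≥0∞)⁻¹)]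
  simp [e0]

lemma cs_succ (p : ℕ) (w : ℕ → ℝ≥0∞) :
    cs (p+1) w = cs p (fun a => (∑' j : ℕ, w (a + j)) * (↑a : ℝ≥0∞)⁻¹) := by
  unfold cs
  rw [← Equiv.tsum_eq ((Equiv.sigmaEquivProd (Ch (p+1)) ℕ).trans (eS p).symm)
      (fun c : Ch (p+2) =>
      w (c.1 0) * ∏ i : Fin (p+1), (↑(c.1 i.succ) : ℝ≥0∞)⁻¹)]
  rw [ENNReal.tsum_sigma']
  apply tsum_congr
  intro c
  have hval : ∀ j : ℕ, ((eS p).symm (c, j)).1 = Fin.cons (c.1 0 + j) c.1 := fun j => rfl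
  calc ∑' j : ℕ, w (((eS p).symm (c, j)).1 0)
          * ∏ i : Fin (p+1), (↑(((eS p).symm (c, j)).1 i.succ) : ℝ≥0∞)⁻¹
      = ∑' j : ℕ, w (c.1 0 + j) *
          ((↑(c.1 0) : ℝ≥0∞)⁻¹ * ∏ i : Fin p, (↑(c.1 i.succ) : ℝ≥0∞)⁻¹) := by
        apply tsum_congr; intro j
        rw [hval j, Fin.cons_zero]
        congr 1
        rw [Fin.prod_univ_succ]
        simp [Fin.cons_succ]
    _ = (∑' j : ℕ, w (c.1 0 + j)) * (↑(c.1 0) : ℝ≥0∞)⁻¹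
          * ∏ i : Fin p, (↑(c.1 i.succ) : ℝ≥0∞)⁻¹ := by
        simp_rw [← mul_assoc]
        rw [ENNReal.tsum_mul_right, ENNReal.tsum_mul_right]

lemma cs_congr {p : ℕ} {w w' : ℕ → ℝ≥0∞} (h : ∀ a, 2 ≤ a → w a = w' a) :
    cs p w = cs p w' := by
  unfold cs
  exact tsum_congr fun c => by rw [h _ (c.2.2 0)]

lemma cs_mono {p : ℕ} {w w' : ℕ → ℝ≥0∞} (h : ∀ a, 2 ≤ a → w a ≤ w' a) :
    cs p w ≤ cs p w' :=
  ENNReal.tsum_le_tsum fun c => mul_le_mul_left (h _ (c.2.2 0)) _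

lemma cs_add (p : ℕ) (u v : ℕ → ℝ≥0∞) :
    cs p (fun a => u a + v a) = cs p u + cs p v := by
  unfold cs
  rw [← ENNReal.tsum_add]
  exact tsum_congr fun c => by rw [add_mul]

lemma cs_const_mul (p : ℕ) (k : ℝ≥0∞) (w : ℕ → ℝ≥0∞) :
    cs p (fun a => k * w a) = k * cs p w := by
  unfold cs
  rw [← ENNReal.tsum_mul_left]
  exact tsum_congr fun c => by rw [mul_assoc]



lemma hasSum_tele (g : ℕ → ℝ) (hmono : ∀ j, g (j+1) ≤ g j)
    (h0 : Tendsto g atTop (nhds 0)) :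
    HasSum (fun j => g j - g (j+1)) (g 0) := by
  have hpart : ∀ N, ∑ j ∈ Finset.range N, (g j - g (j+1)) = g 0 - g N :=
    fun N => Finset.sum_range_sub' g N
  have hanti : Antitone g := antitone_nat_of_succ_le hmono
  have hgnn : ∀ N, 0 ≤ g N := by
    intro N
    refine le_of_tendsto h0 ?_
    exact eventually_atTop.2 ⟨N, fun M hM => hanti hM⟩
  have hnonneg : ∀ j, 0 ≤ g j - g (j+1) := fun j => sub_nonneg.2 (hmono j)
  have hsum : Summable (fun j => g j - g (j+1)) := by
    apply summable_of_sum_range_le hnonneg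
    intro n; rw [hpart]; linarith [hgnn n]
  have h1 := hsum.hasSum.tendsto_sum_nat
  have h2 : Tendsto (fun N => ∑ j ∈ Finset.range N, (g j - g (j+1))) atTop
      (nhds (g 0)) := by
    simp_rw [hpart]
    simpa using tendsto_const_nhds.sub h0
  have heq := tendsto_nhds_unique h1 h2
  exact heq ▸ hsum.hasSum

lemma tsum_ofReal_tele (g : ℕ → ℝ) (hmono : ∀ j, g (j+1) ≤ g j)
    (h0 : Tendsto g atTop (nhds 0)) :
    ∑' j : ℕ, ENNReal.ofReal (g j - g (j+1)) = ENNReal.ofReal (g 0) := by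
  have h := hasSum_tele g hmono h0
  rw [← h.tsum_eq, ENNReal.ofReal_tsum_of_nonneg
      (fun j => sub_nonneg.2 (hmono j)) h.summable]

lemma inv_natCast_ofReal (m : ℕ) (hm : m ≠ 0) :
    ((m : ℝ≥0∞))⁻¹ = ENNReal.ofReal ((m : ℝ))⁻¹ := by
  rw [ENNReal.ofReal_inv_of_pos (by positivity), ENNReal.ofReal_natCast]

noncomputable def wA (n : ℕ) : ℝ≥0∞ := (↑(n*n) : ℝ≥0∞)⁻¹
noncomputable def wB (n : ℕ) : ℝ≥0∞ := (↑((n-1)*n) : ℝ≥0∞)⁻¹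
noncomputable def wD (n : ℕ) : ℝ≥0∞ := (↑((n-1)*n*n) : ℝ≥0∞)⁻¹
noncomputable def wE (n : ℕ) : ℝ≥0∞ := (↑((n-1)*n*(n+1)) : ℝ≥0∞)⁻¹
noncomputable def wF (n : ℕ) : ℝ≥0∞ := (↑((n-1)*n*n*(n+1)) : ℝ≥0∞)⁻¹
noncomputable def wG (n : ℕ) : ℝ≥0∞ := (↑((n-1)*n*(n+1)*(n+2)) : ℝ≥0∞)⁻¹

lemma tendsto_aux (k : ℕ) : Tendsto (fun j : ℕ => ((k + j : ℕ) : ℝ)⁻¹) atTop (nhds 0) := by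
  have h1 : Tendsto (fun j : ℕ => k + j) atTop atTop := by
    apply tendsto_atTop_mono (fun j => Nat.le_add_left j k) tendsto_id
  exact tendsto_inv_atTop_nhds_zero_nat.comp h1

lemma tw_wB (k : ℕ) : ∑' j : ℕ, wB (k+2+j) = ((k+1 : ℕ) : ℝ≥0∞)⁻¹ := by
  have key : ∀ j : ℕ, wB (k+2+j)
      = ENNReal.ofReal (((k+1+j : ℕ) : ℝ)⁻¹ - ((k+1+(j+1) : ℕ) : ℝ)⁻¹) := by
    intro j
    unfold wB
    have e1 : k+2+j-1 = k+1+j := by omega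
    rw [e1, inv_natCast_ofReal _ (by positivity)]
    congr 1
    have h1 : (0:ℝ) < (k+1+j : ℕ) := by positivity
    have h2 : (0:ℝ) < (k+2+j : ℕ) := by positivity
    have e2 : ((k+1+(j+1) : ℕ) : ℝ) = ((k+2+j : ℕ) : ℝ) := by push_cast; ring
    rw [e2]
    rw [Nat.cast_mul]
    field_simp
    push_cast; ring
  simp_rw [key]
  rw [tsum_ofReal_tele]
  · rw [← inv_natCast_ofReal _ (by positivity)]
  · intro j
    have hc : ((k+1+j:ℕ):ℝ) ≤ ((k+1+(j+1):ℕ):ℝ) := by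
      exact_mod_cast (by omega : k+1+j ≤ k+1+(j+1))
    exact inv_anti₀ (by positivity) hc
  · exact tendsto_aux (k+1)

lemma inv_mul_inv_nat (a b : ℕ) (ha : a ≠ 0) :
    (↑a : ℝ≥0∞)⁻¹ * (↑b : ℝ≥0∞)⁻¹ = (↑(a*b) : ℝ≥0∞)⁻¹ := by
  rw [Nat.cast_mul, ENNReal.mul_inv (Or.inl (by exact_mod_cast ha))
    (Or.inl (ENNReal.natCast_ne_top a))]

lemma inv_nat_ne_top (a : ℕ) (ha : a ≠ 0) : (↑a : ℝ≥0∞)⁻¹ ≠ ⊤ :=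
  ENNReal.inv_ne_top.2 (by exact_mod_cast ha)

lemma wB_eq (k : ℕ) : wB (k+2) = wA (k+2) + wD (k+2) := by
  unfold wA wB wD
  have e1 : k+2-1 = k+1 := by omega
  rw [e1]
  have h1 : (k+1)*(k+2) ≠ 0 := by positivity
  have h2 : (k+2)*(k+2) ≠ 0 := by positivity
  have h3 : (k+1)*(k+2)*(k+2) ≠ 0 := by positivity
  rw [inv_natCast_ofReal _ h1, inv_natCast_ofReal _ h2, inv_natCast_ofReal _ h3,
    ← ENNReal.ofReal_add (by positivity) (by positivity)]
  congr 1
  push_cast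
  have p1 : ((k:ℝ)+1) ≠ 0 := by positivity
  have p2 : ((k:ℝ)+2) ≠ 0 := by positivity
  field_simp
  ring

lemma wD_eq (k : ℕ) : wD (k+2) = wE (k+2) + wF (k+2) := by
  unfold wD wE wF
  have e1 : k+2-1 = k+1 := by omega
  rw [e1]
  have h1 : (k+1)*(k+2)*(k+2) ≠ 0 := by positivity
  have h2 : (k+1)*(k+2)*(k+2+1) ≠ 0 := by positivity
  have h3 : (k+1)*(k+2)*(k+2)*(k+2+1) ≠ 0 := by positivity
  rw [inv_natCast_ofReal _ h1, inv_natCast_ofReal _ h2, inv_natCast_ofReal _ h3,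
    ← ENNReal.ofReal_add (by positivity) (by positivity)]
  congr 1
  push_cast
  have p1 : ((k:ℝ)+1) ≠ 0 := by positivity
  have p2 : ((k:ℝ)+2) ≠ 0 := by positivity
  have p3 : ((k:ℝ)+3) ≠ 0 := by positivity
  field_simp

lemma wF_le (k : ℕ) : wF (k+2) ≤ 2 * wG (k+2) := by
  unfold wF wG
  have e1 : k+2-1 = k+1 := by omega
  rw [e1]
  have h1 : (k+1)*(k+2)*(k+2)*(k+2+1) ≠ 0 := by positivity
  have h2 : (k+1)*(k+2)*(k+2+1)*(k+2+2) ≠ 0 := by positivity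
  rw [inv_natCast_ofReal _ h1, inv_natCast_ofReal _ h2]
  have : (2 : ℝ≥0∞) = ENNReal.ofReal 2 := by simp
  rw [this, ← ENNReal.ofReal_mul (by norm_num)]
  apply ENNReal.ofReal_le_ofReal
  rw [inv_eq_one_div, inv_eq_one_div, mul_one_div,
    div_le_div_iff₀ (by positivity) (by positivity)]
  push_cast
  have key : (0:ℝ) ≤ (k:ℝ) * (((k:ℝ)+1)*(((k:ℝ)+2)*((k:ℝ)+3))) := by positivity
  nlinarith [key]

lemma wF_le' (k : ℕ) : 3 * wF (k+3) ≤ 5 * wG (k+3) := by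
  unfold wF wG
  have e1 : k+3-1 = k+2 := by omega
  rw [e1]
  have h1 : (k+2)*(k+3)*(k+3)*(k+3+1) ≠ 0 := by positivity
  have h2 : (k+2)*(k+3)*(k+3+1)*(k+3+2) ≠ 0 := by positivity
  rw [inv_natCast_ofReal _ h1, inv_natCast_ofReal _ h2]
  have ha : (3 : ℝ≥0∞) = ENNReal.ofReal 3 := by simp
  have hb : (5 : ℝ≥0∞) = ENNReal.ofReal 5 := by simp
  rw [ha, hb, ← ENNReal.ofReal_mul (by norm_num), ← ENNReal.ofReal_mul (by norm_num)]
  apply ENNReal.ofReal_le_ofReal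
  rw [inv_eq_one_div, inv_eq_one_div, mul_one_div, mul_one_div,
    div_le_div_iff₀ (by positivity) (by positivity)]
  push_cast
  have key : (0:ℝ) ≤ (k:ℝ) * (((k:ℝ)+2)*(((k:ℝ)+3)*((k:ℝ)+4))) := by positivity
  nlinarith [key]

lemma tendsto_inv_nat_of_le (m : ℕ → ℕ) (h : ∀ j, j ≤ m j) :
    Tendsto (fun j : ℕ => ((m j : ℕ) : ℝ)⁻¹) atTop (nhds 0) :=
  tendsto_inv_atTop_nhds_zero_nat.comp (tendsto_atTop_mono h tendsto_id)

lemma tw_wE (k : ℕ) :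
    ∑' j : ℕ, wE (k+2+j) = ((2*(k+1)*(k+2) : ℕ) : ℝ≥0∞)⁻¹ := by
  have key : ∀ j : ℕ, wE (k+2+j)
      = ENNReal.ofReal (((2*(k+1+j)*(k+2+j) : ℕ) : ℝ)⁻¹
        - ((2*(k+1+(j+1))*(k+2+(j+1)) : ℕ) : ℝ)⁻¹) := by
    intro j
    unfold wE
    have e1 : k+2+j-1 = k+1+j := by omega
    rw [e1, inv_natCast_ofReal _ (by positivity)]
    congr 1
    rw [show k+1+(j+1) = k+2+j from by omega, show k+2+(j+1) = k+3+j from by omega]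
    push_cast
    have p1 : ((k:ℝ)+1+j) ≠ 0 := by positivity
    have p2 : ((k:ℝ)+2+j) ≠ 0 := by positivity
    have p3 : ((k:ℝ)+3+j) ≠ 0 := by positivity
    field_simp
    ring
  simp_rw [key]
  rw [tsum_ofReal_tele]
  · rw [← inv_natCast_ofReal _ (by positivity)]
  · intro j
    have hc : ((2*(k+1+j)*(k+2+j) : ℕ):ℝ) ≤ ((2*(k+1+(j+1))*(k+2+(j+1)) : ℕ):ℝ) := by
      have : 2*(k+1+j)*(k+2+j) ≤ 2*(k+1+(j+1))*(k+2+(j+1)) :=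
        Nat.mul_le_mul (Nat.mul_le_mul_left 2 (by omega)) (by omega)
      exact_mod_cast this
    exact inv_anti₀ (by positivity) hc
  · apply tendsto_inv_nat_of_le
    intro j
    calc j ≤ k+2+j := by omega
    _ ≤ 2*(k+1+j)*(k+2+j) := Nat.le_mul_of_pos_left _ (by positivity)

lemma tw_wG (k : ℕ) :
    ∑' j : ℕ, wG (k+2+j) = ((3*(k+1)*(k+2)*(k+3) : ℕ) : ℝ≥0∞)⁻¹ := by
  have key : ∀ j : ℕ, wG (k+2+j)
      = ENNReal.ofReal (((3*(k+1+j)*(k+2+j)*(k+3+j) : ℕ) : ℝ)⁻¹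
        - ((3*(k+1+(j+1))*(k+2+(j+1))*(k+3+(j+1)) : ℕ) : ℝ)⁻¹) := by
    intro j
    unfold wG
    have e1 : k+2+j-1 = k+1+j := by omega
    rw [e1, inv_natCast_ofReal _ (by positivity)]
    congr 1
    rw [show k+1+(j+1) = k+2+j from by omega, show k+2+(j+1) = k+3+j from by omega,
      show k+3+(j+1) = k+4+j from by omega,
      show k+2+j+1 = k+3+j from by omega, show k+2+j+2 = k+4+j from by omega]
    push_cast
    have p1 : ((k:ℝ)+1+j) ≠ 0 := by positivity
    have p2 : ((k:ℝ)+2+j) ≠ 0 := by positivity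
    have p3 : ((k:ℝ)+3+j) ≠ 0 := by positivity
    have p4 : ((k:ℝ)+4+j) ≠ 0 := by positivity
    field_simp
    ring
  simp_rw [key]
  rw [tsum_ofReal_tele]
  · rw [← inv_natCast_ofReal _ (by positivity)]
  · intro j
    have hc : ((3*(k+1+j)*(k+2+j)*(k+3+j) : ℕ):ℝ)
        ≤ ((3*(k+1+(j+1))*(k+2+(j+1))*(k+3+(j+1)) : ℕ):ℝ) := by
      have : 3*(k+1+j)*(k+2+j)*(k+3+j) ≤ 3*(k+1+(j+1))*(k+2+(j+1))*(k+3+(j+1)) :=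
        Nat.mul_le_mul (Nat.mul_le_mul (Nat.mul_le_mul_left 3 (by omega)) (by omega)) (by omega)
      exact_mod_cast this
    exact inv_anti₀ (by positivity) hc
  · apply tendsto_inv_nat_of_le
    intro j
    calc j ≤ k+3+j := by omega
    _ ≤ 3*(k+1+j)*(k+2+j)*(k+3+j) := Nat.le_mul_of_pos_left _ (by positivity)


lemma two_le_exists (a : ℕ) (ha : 2 ≤ a) : ∃ k, a = k + 2 := ⟨a - 2, by omega⟩

lemma csB_one (n : ℕ) : cs n wB = 1 := by
  induction n with
  | zero =>
      rw [cs_zero]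
      have := tw_wB 0
      simpa using this
  | succ n ih =>
      rw [cs_succ]
      rw [show (1:ℝ≥0∞) = cs n wB from ih.symm]
      apply cs_congr
      intro a ha
      obtain ⟨k, rfl⟩ := two_le_exists a ha
      rw [tw_wB k, inv_mul_inv_nat _ _ (by positivity)]
      unfold wB
      rw [show k+2-1 = k+1 from by omega]

lemma csE_succ (n : ℕ) : cs (n+1) wE = 2⁻¹ * cs n wD := by
  rw [cs_succ, ← cs_const_mul]
  apply cs_congr
  intro a ha
  obtain ⟨k, rfl⟩ := two_le_exists a ha
  rw [tw_wE k, inv_mul_inv_nat _ _ (by positivity)]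
  unfold wD
  rw [show ((2:ℝ≥0∞)) = ((2:ℕ):ℝ≥0∞) from by norm_cast,
    inv_mul_inv_nat _ _ (by positivity), show k+2-1 = k+1 from by omega]
  congr 1
  ring

lemma csG_succ (n : ℕ) : cs (n+1) wG = 3⁻¹ * cs n wF := by
  rw [cs_succ, ← cs_const_mul]
  apply cs_congr
  intro a ha
  obtain ⟨k, rfl⟩ := two_le_exists a ha
  rw [tw_wG k, inv_mul_inv_nat _ _ (by positivity)]
  unfold wF
  rw [show ((3:ℝ≥0∞)) = ((3:ℕ):ℝ≥0∞) from by norm_cast,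
    inv_mul_inv_nat _ _ (by positivity), show k+2-1 = k+1 from by omega]
  congr 1
  ring

lemma csBAD (n : ℕ) : cs n wA + cs n wD = 1 := by
  rw [← cs_add, ← csB_one n]
  apply cs_congr
  intro a ha
  obtain ⟨k, rfl⟩ := two_le_exists a ha
  exact (wB_eq k).symm

lemma csD_split (n : ℕ) : cs n wD = cs n wE + cs n wF := by
  rw [← cs_add]
  apply cs_congr
  intro a ha
  obtain ⟨k, rfl⟩ := two_le_exists a ha
  exact wD_eq k

lemma csF_le (n : ℕ) : cs n wF ≤ 2 * cs n wG := by
  rw [← cs_const_mul]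
  apply cs_mono
  intro a ha
  obtain ⟨k, rfl⟩ := two_le_exists a ha
  exact wF_le k

lemma csE0 : cs 0 wE = ((4:ℕ) : ℝ≥0∞)⁻¹ := by
  rw [cs_zero]
  have := tw_wE 0
  norm_num at this ⊢
  exact this

lemma csF0 : cs 0 wF ≤ ((12:ℕ) : ℝ≥0∞)⁻¹ + 5 * ((216:ℕ) : ℝ≥0∞)⁻¹ := by
  rw [cs_zero]
  rw [tsum_eq_zero_add' ENNReal.summable]
  have h1 : wF (2+0) = ((12:ℕ) : ℝ≥0∞)⁻¹ := by
    unfold wF; norm_num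
  have h2 : (∑' j : ℕ, wF (2+(j+1))) ≤ 5 * ((216:ℕ) : ℝ≥0∞)⁻¹ := by
    have key : ∀ j : ℕ, 3 * wF (2+(j+1)) ≤ 5 * wG (2+(j+1)) := by
      intro j
      rw [show 2+(j+1) = j+3 from by omega]
      exact wF_le' j
    have hsum : 3 * (∑' j : ℕ, wF (2+(j+1))) ≤ 5 * (∑' j : ℕ, wG (2+(j+1))) := by
      rw [← ENNReal.tsum_mul_left, ← ENNReal.tsum_mul_left]
      exact ENNReal.tsum_le_tsum key
    have hg : (∑' j : ℕ, wG (2+(j+1))) = ((72:ℕ) : ℝ≥0∞)⁻¹ := by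
      have := tw_wG 1
      have e : ∀ j : ℕ, 2+(j+1) = 1+2+j := fun j => by omega
      calc (∑' j : ℕ, wG (2+(j+1))) = ∑' j : ℕ, wG (1+2+j) := by
            exact tsum_congr fun j => by rw [e j]
        _ = ((3*(1+1)*(1+2)*(1+3) : ℕ) : ℝ≥0∞)⁻¹ := this
        _ = ((72:ℕ) : ℝ≥0∞)⁻¹ := by norm_num
    rw [hg] at hsum
    calc (∑' j : ℕ, wF (2+(j+1)))
        = 3⁻¹ * (3 * (∑' j : ℕ, wF (2+(j+1)))) := by
          rw [← mul_assoc, ENNReal.inv_mul_cancel (by norm_num) (by norm_num), one_mul]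
      _ ≤ 3⁻¹ * (5 * ((72:ℕ) : ℝ≥0∞)⁻¹) := mul_le_mul_right hsum _
      _ = 5 * ((216:ℕ) : ℝ≥0∞)⁻¹ := by
          rw [show ((3:ℝ≥0∞)) = ((3:ℕ):ℝ≥0∞) from by norm_cast]
          rw [← mul_assoc, mul_comm (((3:ℕ):ℝ≥0∞))⁻¹ 5, mul_assoc,
            inv_mul_inv_nat _ _ (by positivity)]
  calc wF (2+0) + ∑' j : ℕ, wF (2+(j+1))
      ≤ ((12:ℕ) : ℝ≥0∞)⁻¹ + 5 * ((216:ℕ) : ℝ≥0∞)⁻¹ := by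
        rw [h1]; exact add_le_add_right h2 _

lemma inv_nat_anti {a b : ℕ} (h : a ≤ b) : (↑b : ℝ≥0∞)⁻¹ ≤ (↑a : ℝ≥0∞)⁻¹ :=
  ENNReal.inv_le_inv.2 (by exact_mod_cast h)

lemma wA_le (k : ℕ) : wA (k+2) ≤ wB (k+2) := by
  unfold wA wB
  apply inv_nat_anti
  rw [show k+2-1 = k+1 from by omega]
  exact Nat.mul_le_mul_right _ (by omega)

lemma wD_le (k : ℕ) : wD (k+2) ≤ wB (k+2) := by
  unfold wD wB
  exact inv_nat_anti (Nat.le_mul_of_pos_right _ (by omega))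

lemma wE_le (k : ℕ) : wE (k+2) ≤ wB (k+2) := by
  unfold wE wB
  exact inv_nat_anti (Nat.le_mul_of_pos_right _ (by omega))

lemma wF_leB (k : ℕ) : wF (k+2) ≤ wB (k+2) := by
  unfold wF wB
  apply inv_nat_anti
  calc (k+2-1)*(k+2) ≤ (k+2-1)*(k+2)*(k+2) := Nat.le_mul_of_pos_right _ (by omega)
    _ ≤ (k+2-1)*(k+2)*(k+2)*(k+2+1) := Nat.le_mul_of_pos_right _ (by omega)

lemma wG_le (k : ℕ) : wG (k+2) ≤ wB (k+2) := by
  unfold wG wB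
  apply inv_nat_anti
  calc (k+2-1)*(k+2) ≤ (k+2-1)*(k+2)*(k+2+1) := Nat.le_mul_of_pos_right _ (by omega)
    _ ≤ (k+2-1)*(k+2)*(k+2+1)*(k+2+2) := Nat.le_mul_of_pos_right _ (by omega)

lemma cs_le_one {w : ℕ → ℝ≥0∞} (hw : ∀ k, w (k+2) ≤ wB (k+2)) (n : ℕ) :
    cs n w ≤ 1 := by
  rw [← csB_one n]
  apply cs_mono
  intro a ha
  obtain ⟨k, rfl⟩ := two_le_exists a ha
  exact hw k

lemma cs_ne_top {w : ℕ → ℝ≥0∞} (hw : ∀ k, w (k+2) ≤ wB (k+2)) (n : ℕ) :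
    cs n w ≠ ⊤ :=
  ne_top_of_le_ne_top ENNReal.one_ne_top (cs_le_one hw n)

noncomputable def rD (n : ℕ) : ℝ := (cs n wD).toReal
noncomputable def rE (n : ℕ) : ℝ := (cs n wE).toReal
noncomputable def rF (n : ℕ) : ℝ := (cs n wF).toReal

lemma rD_split (n : ℕ) : rD n = rE n + rF n := by
  unfold rD rE rF
  rw [csD_split, ENNReal.toReal_add (cs_ne_top wE_le n) (cs_ne_top wF_leB n)]

lemma rE_succ (n : ℕ) : rE (n+1) = rD n / 2 := by
  unfold rE rD
  rw [csE_succ, ENNReal.toReal_mul, ENNReal.toReal_inv]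
  norm_num
  ring

lemma rF_succ_le (n : ℕ) : rF (n+1) ≤ 2/3 * rF n := by
  unfold rF
  have h : cs (n+1) wF ≤ 2 * (3⁻¹ * cs n wF) := by
    calc cs (n+1) wF ≤ 2 * cs (n+1) wG := csF_le (n+1)
      _ = 2 * (3⁻¹ * cs n wF) := by rw [csG_succ]
  have hfin : (2 : ℝ≥0∞) * (3⁻¹ * cs n wF) ≠ ⊤ := by
    apply ENNReal.mul_ne_top (by norm_num)
    exact ENNReal.mul_ne_top (by norm_num) (cs_ne_top wF_leB n)
  calc (cs (n+1) wF).toReal ≤ ((2:ℝ≥0∞) * (3⁻¹ * cs n wF)).toReal :=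
        (ENNReal.toReal_le_toReal (cs_ne_top wF_leB (n+1)) hfin).2 h
    _ = 2/3 * (cs n wF).toReal := by
        rw [ENNReal.toReal_mul, ENNReal.toReal_mul, ENNReal.toReal_inv]
        norm_num
        ring

lemma rE0 : rE 0 = 1/4 := by
  unfold rE
  rw [csE0, ENNReal.toReal_inv]
  norm_num

lemma rF0 : rF 0 ≤ 23/216 := by
  unfold rF
  have hfin : ((12:ℕ) : ℝ≥0∞)⁻¹ + 5 * ((216:ℕ) : ℝ≥0∞)⁻¹ ≠ ⊤ := by
    apply ENNReal.add_ne_top.2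
    constructor
    · exact inv_nat_ne_top 12 (by norm_num)
    · exact ENNReal.mul_ne_top (by norm_num) (inv_nat_ne_top 216 (by norm_num))
  calc (cs 0 wF).toReal ≤ (((12:ℕ) : ℝ≥0∞)⁻¹ + 5 * ((216:ℕ) : ℝ≥0∞)⁻¹).toReal :=
        (ENNReal.toReal_le_toReal (cs_ne_top wF_leB 0) hfin).2 csF0
    _ = 23/216 := by
        rw [ENNReal.toReal_add (inv_nat_ne_top 12 (by norm_num))
          (ENNReal.mul_ne_top (by norm_num) (inv_nat_ne_top 216 (by norm_num))),
          ENNReal.toReal_mul, ENNReal.toReal_inv, ENNReal.toReal_inv]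
        norm_num

lemma rD_pos (n : ℕ) : 0 < rD n := by
  apply ENNReal.toReal_pos _ (cs_ne_top wD_le n)
  have hterm : wD 2 * ∏ _i : Fin n, ((2:ℕ) : ℝ≥0∞)⁻¹ ≠ 0 := by
    apply mul_ne_zero
    · unfold wD
      exact ENNReal.inv_ne_zero.2 (ENNReal.natCast_ne_top _)
    · rw [Finset.prod_const]
      apply pow_ne_zero
      exact ENNReal.inv_ne_zero.2 (ENNReal.natCast_ne_top _)
  have hle : wD 2 * ∏ _i : Fin n, ((2:ℕ) : ℝ≥0∞)⁻¹ ≤ cs n wD := by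
    unfold cs
    exact ENNReal.le_tsum (⟨fun _ => 2, antitone_const, fun _ => le_refl 2⟩ : Ch (n+1))
  intro h0
  rw [h0] at hle
  exact hterm (le_antisymm hle zero_le)

lemma rD_bound : ∀ n : ℕ, rD (n+1) ≤ 323/1296 ∧ rF (n+1) ≤ 23/324 := by
  intro n
  induction n with
  | zero =>
      have hf1 : rF 1 ≤ 23/324 := by
        have := rF_succ_le 0
        have := rF0
        linarith
      constructor
      · have hd0 : rD 0 ≤ 1/4 + 23/216 := by
          have := rD_split 0
          have := rE0
          have := rF0
          linarith
        have : rD 1 = rD 0 / 2 + rF 1 := by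
          rw [rD_split 1, rE_succ 0]
        linarith
      · exact hf1
  | succ n ih =>
      have hf : rF (n+2) ≤ 23/324 := by
        have := rF_succ_le (n+1)
        linarith [ih.2]
      constructor
      · have : rD (n+2) = rD (n+1) / 2 + rF (n+2) := by
          rw [rD_split (n+2), rE_succ (n+1)]
        have h2 := rF_succ_le (n+1)
        linarith [ih.1, ih.2]
      · exact hf

end Stmt3Aux

open scoped BigOperators

open Stmt3Aux

theorem stmt3 (p : ℕ) (hp : 2 ≤ p) :
    3 / 4 < (∑' n : {n : Fin p → ℕ // Antitone n ∧ ∀ i, 2 ≤ n i},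
        (1 : ℝ) / ((n.1 ⟨0, by omega⟩ : ℝ) * ∏ i, (n.1 i : ℝ))) ∧
    (∑' n : {n : Fin p → ℕ // Antitone n ∧ ∀ i, 2 ≤ n i},
        (1 : ℝ) / ((n.1 ⟨0, by omega⟩ : ℝ) * ∏ i, (n.1 i : ℝ))) < 1 := by
  obtain ⟨q, rfl⟩ : ∃ q, p = q + 2 := ⟨p - 2, by omega⟩
  have hANetop : ∀ c : Ch (q+2),
      wA (c.1 0) * ∏ i : Fin (q+1), ((c.1 i.succ : ℕ) : ℝ≥0∞)⁻¹ ≠ ⊤ := by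
    intro c
    apply ENNReal.mul_ne_top
    · refine inv_nat_ne_top _ ?_
      have := c.2.2 0
      positivity
    · refine (ENNReal.prod_lt_top ?_).ne
      intro i _
      refine (inv_nat_ne_top _ ?_).lt_top
      have := c.2.2 i.succ
      positivity
  have hkey : (∑' n : {n : Fin (q+2) → ℕ // Antitone n ∧ ∀ i, 2 ≤ n i},
        (1 : ℝ) / ((n.1 ⟨0, by omega⟩ : ℝ) * ∏ i, (n.1 i : ℝ)))
      = (cs (q+1) wA).toReal := by
    unfold cs
    rw [ENNReal.tsum_toReal_eq hANetop]
    apply tsum_congr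
    intro c
    have h0 : (2:ℕ) ≤ c.1 0 := c.2.2 0
    have hc0 : ((c.1 0 : ℕ) : ℝ) ≠ 0 := by positivity
    have hprod : (∏ i : Fin (q+1), ((c.1 i.succ : ℕ) : ℝ)) ≠ 0 := by
      apply Finset.prod_ne_zero_iff.2
      intro i _
      have := c.2.2 i.succ
      positivity
    have hP : (∏ i : Fin (q+2), ((c.1 i : ℕ) : ℝ))
        = ((c.1 0 : ℕ) : ℝ) * ∏ i : Fin (q+1), ((c.1 i.succ : ℕ) : ℝ) :=
      Fin.prod_univ_succ _
    rw [show (⟨0, by omega⟩ : Fin (q+2)) = 0 from rfl, hP]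
    unfold wA
    rw [ENNReal.toReal_mul, ENNReal.toReal_prod, ENNReal.toReal_inv, ENNReal.toReal_natCast]
    simp_rw [ENNReal.toReal_inv, ENNReal.toReal_natCast]
    rw [Finset.prod_inv_distrib]
    push_cast
    field_simp
  rw [hkey]
  have h1 : (cs (q+1) wA).toReal + rD (q+1) = 1 := by
    unfold rD
    rw [← ENNReal.toReal_add (cs_ne_top wA_le (q+1)) (cs_ne_top wD_le (q+1)), csBAD (q+1)]
    simp
  have h2 := (rD_bound q).1
  have h3 := rD_pos (q+1)
  constructor
  · linarith
  · linarith
end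

section
/- Let k_1 ≥ 2 and k_2,…,k_r ≥ 1 be integers, and let n_1 ≥ n_2 ≥ ⋯ ≥ n_{r+2} ≥ 2 be integers with n_1 > 2. Then 1/(n_1^{k_1}⋯n_r^{k_r} n_{r+1} n_{r+2}) < 1/((n_1+1) n_1 n_2^{k_1−1} n_3^{k_2}⋯n_{r+1}^{k_r} n_{r+2}) + 1/((n_1+2)(n_1+1) n_2 n_3^{k_1−1} n_4^{k_2}⋯n_{r+2}^{k_r}). -/
open scoped BigOperators

lemma cascade_aux (n k : ℕ → ℕ) (r s : ℕ) (hs1 : 1 ≤ s) (hs2 : s ≤ 2)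
    (hk : ∀ i, 2 ≤ i → i ≤ r → 1 ≤ k i)
    (hmono : ∀ i j, 1 ≤ i → i ≤ j → j ≤ r + 2 → n j ≤ n i) :
    ∀ t, 1 ≤ t → t ≤ r →
      (n (1 + s) : ℝ) * ∏ i ∈ Finset.Icc 2 t, (n (i + s) : ℝ) ^ (k i) ≤
      (∏ i ∈ Finset.Icc 2 t, (n i : ℝ) ^ (k i)) * (n (t + 1) : ℝ) := by
  intro t ht htr
  induction t, ht using Nat.le_induction with
  | base =>
    simp only [Finset.Icc_eq_empty_of_lt (by norm_num : (1:ℕ) < 2), Finset.prod_empty,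
      mul_one, one_mul]
    exact_mod_cast hmono 2 (1 + s) (by omega) (by omega) (by omega)
  | succ t ht ih =>
    have htr' : t ≤ r := by omega
    have ih' := ih htr'
    have h2t : 2 ≤ t + 1 := by omega
    rw [Finset.prod_Icc_succ_top h2t, Finset.prod_Icc_succ_top h2t]
    have hk1 : 1 ≤ k (t + 1) := hk (t + 1) (by omega) (by omega)
    have h1 : (n (t + 1 + s) : ℝ) ≤ (n (t + 1) : ℝ) := by
      exact_mod_cast hmono (t + 1) (t + 1 + s) (by omega) (by omega) (by omega)
    have h2 : (n (t + 1 + s) : ℝ) ≤ (n (t + 2) : ℝ) := by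
      exact_mod_cast hmono (t + 2) (t + 1 + s) (by omega) (by omega) (by omega)
    have hstep : (n (t + 1 + s) : ℝ) ^ (k (t + 1)) ≤
        (n (t + 1) : ℝ) ^ (k (t + 1) - 1) * (n (t + 2) : ℝ) := by
      calc (n (t + 1 + s) : ℝ) ^ (k (t + 1))
          = (n (t + 1 + s) : ℝ) ^ (k (t + 1) - 1) * (n (t + 1 + s) : ℝ) := by
            rw [← pow_succ]; congr 1; omega
        _ ≤ (n (t + 1) : ℝ) ^ (k (t + 1) - 1) * (n (t + 2) : ℝ) :=
            mul_le_mul (pow_le_pow_left₀ (by positivity) h1 _) h2 (by positivity)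
              (by positivity)
    have hQnn : (0:ℝ) ≤ ∏ i ∈ Finset.Icc 2 t, (n (i + s) : ℝ) ^ (k i) := by positivity
    have hPnn : (0:ℝ) ≤ (∏ i ∈ Finset.Icc 2 t, (n i : ℝ) ^ (k i)) * (n (t + 1) : ℝ) := by
      positivity
    calc (n (1 + s) : ℝ) *
        ((∏ i ∈ Finset.Icc 2 t, (n (i + s) : ℝ) ^ (k i)) * (n (t + 1 + s) : ℝ) ^ (k (t + 1)))
        = ((n (1 + s) : ℝ) * ∏ i ∈ Finset.Icc 2 t, (n (i + s) : ℝ) ^ (k i)) *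
            (n (t + 1 + s) : ℝ) ^ (k (t + 1)) := by ring
      _ ≤ ((∏ i ∈ Finset.Icc 2 t, (n i : ℝ) ^ (k i)) * (n (t + 1) : ℝ)) *
            ((n (t + 1) : ℝ) ^ (k (t + 1) - 1) * (n (t + 2) : ℝ)) :=
          mul_le_mul ih' hstep (by positivity) hPnn
      _ = ((∏ i ∈ Finset.Icc 2 t, (n i : ℝ) ^ (k i)) *
            ((n (t + 1) : ℝ) ^ (k (t + 1) - 1) * (n (t + 1) : ℝ))) * (n (t + 2) : ℝ) := by
          ring
      _ = ((∏ i ∈ Finset.Icc 2 t, (n i : ℝ) ^ (k i)) * (n (t + 1) : ℝ) ^ (k (t + 1))) *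
            (n (t + 2) : ℝ) := by
          have hpp : (n (t + 1) : ℝ) ^ (k (t + 1) - 1) * (n (t + 1) : ℝ)
              = (n (t + 1) : ℝ) ^ (k (t + 1)) := by
            rw [← pow_succ]; congr 1; omega
          rw [hpp]

theorem stmt6 (r : ℕ) (hr : 1 ≤ r) (k n : ℕ → ℕ)
    (hk1 : 2 ≤ k 1) (hk : ∀ i, 2 ≤ i → i ≤ r → 1 ≤ k i)
    (hmono : ∀ i j, 1 ≤ i → i ≤ j → j ≤ r + 2 → n j ≤ n i)
    (hn2 : ∀ i, 1 ≤ i → i ≤ r + 2 → 2 ≤ n i)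
    (hn1 : 2 < n 1) :
    (1 : ℝ) / ((∏ i ∈ Finset.Icc 1 r, (n i : ℝ) ^ (k i)) * n (r + 1) * n (r + 2)) <
      1 / (((n 1 : ℝ) + 1) * (n 1 : ℝ) * (n 2 : ℝ) ^ (k 1 - 1) *
          (∏ i ∈ Finset.Icc 2 r, (n (i + 1) : ℝ) ^ (k i)) * (n (r + 2) : ℝ)) +
      1 / (((n 1 : ℝ) + 2) * ((n 1 : ℝ) + 1) * (n 2 : ℝ) * (n 3 : ℝ) ^ (k 1 - 1) *
          (∏ i ∈ Finset.Icc 2 r, (n (i + 2) : ℝ) ^ (k i))) := by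
  -- basic cast facts
  have ha3 : (3:ℝ) ≤ (n 1 : ℝ) := by exact_mod_cast hn1
  have h0a : (0:ℝ) < (n 1 : ℝ) := by linarith
  have hm2 : (2:ℝ) ≤ (n (r+1) : ℝ) := by exact_mod_cast hn2 (r+1) (by omega) (by omega)
  have hp2 : (2:ℝ) ≤ (n (r+2) : ℝ) := by exact_mod_cast hn2 (r+2) (by omega) (by omega)
  have h2n2 : (2:ℝ) ≤ (n 2 : ℝ) := by exact_mod_cast hn2 2 (by omega) (by omega)
  have h2n3 : (2:ℝ) ≤ (n 3 : ℝ) := by exact_mod_cast hn2 3 (by omega) (by omega)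
  have hn2a : (n 2 : ℝ) ≤ (n 1 : ℝ) := by
    exact_mod_cast hmono 1 2 (by omega) (by omega) (by omega)
  have hn3a : (n 3 : ℝ) ≤ (n 1 : ℝ) := by
    exact_mod_cast hmono 1 3 (by omega) (by omega) (by omega)
  have h0m : (0:ℝ) < (n (r+1) : ℝ) := by linarith
  have h0p : (0:ℝ) < (n (r+2) : ℝ) := by linarith
  have h0n2 : (0:ℝ) < (n 2 : ℝ) := by linarith
  have h0n3 : (0:ℝ) < (n 3 : ℝ) := by linarith
  -- positivity of products
  have hP : (0:ℝ) < ∏ i ∈ Finset.Icc 2 r, (n i : ℝ) ^ (k i) := by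
    apply Finset.prod_pos
    intro i hi
    rw [Finset.mem_Icc] at hi
    have : 2 ≤ n i := hn2 i (by omega) (by omega)
    have : (0:ℝ) < (n i : ℝ) := by exact_mod_cast by omega
    positivity
  have hQ : (0:ℝ) < ∏ i ∈ Finset.Icc 2 r, (n (i + 1) : ℝ) ^ (k i) := by
    apply Finset.prod_pos
    intro i hi
    rw [Finset.mem_Icc] at hi
    have : 2 ≤ n (i + 1) := hn2 (i+1) (by omega) (by omega)
    have : (0:ℝ) < (n (i+1) : ℝ) := by exact_mod_cast by omega
    positivity
  have hR : (0:ℝ) < ∏ i ∈ Finset.Icc 2 r, (n (i + 2) : ℝ) ^ (k i) := by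
    apply Finset.prod_pos
    intro i hi
    rw [Finset.mem_Icc] at hi
    have : 2 ≤ n (i + 2) := hn2 (i+2) (by omega) (by omega)
    have : (0:ℝ) < (n (i+2) : ℝ) := by exact_mod_cast by omega
    positivity
  -- cascade bounds
  have hc1 := cascade_aux n k r 1 le_rfl (by omega) hk hmono r hr le_rfl
  have hc2 := cascade_aux n k r 2 (by omega) le_rfl hk hmono r hr le_rfl
  norm_num at hc1 hc2
  -- abbreviations
  set P := ∏ i ∈ Finset.Icc 2 r, (n i : ℝ) ^ (k i) with hPdef
  set Q := ∏ i ∈ Finset.Icc 2 r, (n (i + 1) : ℝ) ^ (k i) with hQdef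
  set R := ∏ i ∈ Finset.Icc 2 r, (n (i + 2) : ℝ) ^ (k i) with hRdef
  set a : ℝ := (n 1 : ℝ) with hadef
  set m : ℝ := (n (r+1) : ℝ) with hmdef
  set p : ℝ := (n (r+2) : ℝ) with hpdef
  -- split the full product
  have hsplit : Finset.Icc 1 r = insert 1 (Finset.Icc 2 r) := by
    ext x
    simp only [Finset.mem_Icc, Finset.mem_insert]
    omega
  have hprod1 : ∏ i ∈ Finset.Icc 1 r, (n i : ℝ) ^ (k i) = a ^ (k 1) * P := by
    rw [hsplit, Finset.prod_insert (by simp)]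
  -- power rewrites
  have hpow2 : (n 2 : ℝ) ^ (k 1 - 1) = (n 2 : ℝ) ^ (k 1 - 2) * (n 2 : ℝ) := by
    rw [← pow_succ]; congr 1; omega
  have hpow3 : (n 3 : ℝ) ^ (k 1 - 1) = (n 3 : ℝ) ^ (k 1 - 2) * (n 3 : ℝ) := by
    rw [← pow_succ]; congr 1; omega
  have hpowa1 : a ^ (k 1 - 1) * a = a ^ (k 1) := by
    rw [← pow_succ]; congr 1; omega
  have hpowa2 : a ^ (k 1 - 2) * a = a ^ (k 1 - 1) := by
    rw [← pow_succ]; congr 1; omega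
  -- core bound 1
  have core1 : a * (n 2 : ℝ) ^ (k 1 - 1) * Q ≤ a ^ (k 1 - 1) * (P * m) := by
    calc a * (n 2 : ℝ) ^ (k 1 - 1) * Q
        = (a * (n 2 : ℝ) ^ (k 1 - 2)) * ((n 2 : ℝ) * Q) := by rw [hpow2]; ring
      _ ≤ (a * a ^ (k 1 - 2)) * (P * m) := by
          apply mul_le_mul _ hc1 (mul_pos h0n2 hQ).le
            (mul_pos h0a (pow_pos h0a _)).le
          exact mul_le_mul_of_nonneg_left (pow_le_pow_left₀ h0n2.le hn2a _)
            (le_of_lt h0a)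
      _ = a ^ (k 1 - 1) * (P * m) := by rw [mul_comm a (a ^ (k 1 - 2)), hpowa2]
  -- core bound 2 (strict)
  have core2 : (a + 2) * (n 2 : ℝ) * (n 3 : ℝ) ^ (k 1 - 1) * R < a ^ (k 1) * (P * m) * p := by
    have hap2 : a + 2 < a * p := by nlinarith
    have hmidpos : (0:ℝ) < a * (a ^ (k 1 - 2) * (P * m)) :=
      mul_pos h0a (mul_pos (pow_pos h0a _) (mul_pos hP h0m))
    calc (a + 2) * (n 2 : ℝ) * (n 3 : ℝ) ^ (k 1 - 1) * R
        = (a + 2) * ((n 2 : ℝ) * ((n 3 : ℝ) ^ (k 1 - 2) * ((n 3 : ℝ) * R))) := by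
          rw [hpow3]; ring
      _ ≤ (a + 2) * (a * (a ^ (k 1 - 2) * (P * m))) := by
          apply mul_le_mul_of_nonneg_left _ (by linarith : (0:ℝ) ≤ a + 2)
          apply mul_le_mul hn2a _
            (mul_pos (pow_pos h0n3 _) (mul_pos h0n3 hR)).le (le_of_lt h0a)
          apply mul_le_mul (pow_le_pow_left₀ h0n3.le hn3a _) hc2
            (mul_pos h0n3 hR).le (pow_pos h0a _).le
      _ < (a * p) * (a * (a ^ (k 1 - 2) * (P * m))) :=
          mul_lt_mul_of_pos_right hap2 hmidpos
      _ = a ^ (k 1) * (P * m) * p := by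
          rw [← hpowa1, ← hpowa2]; ring
  -- positivity of the two right denominators
  have hApos : (0:ℝ) < (a + 1) * a * (n 2 : ℝ) ^ (k 1 - 1) * Q * p :=
    mul_pos (mul_pos (mul_pos (mul_pos (by linarith) h0a) (pow_pos h0n2 _)) hQ) h0p
  have hBpos : (0:ℝ) < (a + 2) * (a + 1) * (n 2 : ℝ) * (n 3 : ℝ) ^ (k 1 - 1) * R :=
    mul_pos (mul_pos (mul_pos (mul_pos (by linarith) (by linarith)) h0n2)
      (pow_pos h0n3 _)) hR
  -- the two denominator comparisons
  have hA : (a + 1) * a * (n 2 : ℝ) ^ (k 1 - 1) * Q * p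
      ≤ (a + 1) * (a ^ (k 1 - 1) * P * m * p) := by
    calc (a + 1) * a * (n 2 : ℝ) ^ (k 1 - 1) * Q * p
        = (a + 1) * (a * (n 2 : ℝ) ^ (k 1 - 1) * Q) * p := by ring
      _ ≤ (a + 1) * (a ^ (k 1 - 1) * (P * m)) * p := by
          apply mul_le_mul_of_nonneg_right _ (le_of_lt h0p)
          exact mul_le_mul_of_nonneg_left core1 (by linarith)
      _ = (a + 1) * (a ^ (k 1 - 1) * P * m * p) := by ring
  have hB : (a + 2) * (a + 1) * (n 2 : ℝ) * (n 3 : ℝ) ^ (k 1 - 1) * R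
      < a * ((a + 1) * (a ^ (k 1 - 1) * P * m * p)) := by
    calc (a + 2) * (a + 1) * (n 2 : ℝ) * (n 3 : ℝ) ^ (k 1 - 1) * R
        = (a + 1) * ((a + 2) * (n 2 : ℝ) * (n 3 : ℝ) ^ (k 1 - 1) * R) := by ring
      _ < (a + 1) * (a ^ (k 1) * (P * m) * p) :=
          mul_lt_mul_of_pos_left core2 (by linarith)
      _ = a * ((a + 1) * (a ^ (k 1 - 1) * P * m * p)) := by rw [← hpowa1]; ring
  -- rewrite the left denominator
  have hXpos : (0:ℝ) < a ^ (k 1 - 1) * P * m * p :=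
    mul_pos (mul_pos (mul_pos (pow_pos h0a _) hP) h0m) h0p
  have hden : (∏ i ∈ Finset.Icc 1 r, (n i : ℝ) ^ (k i)) * m * p
      = a * (a ^ (k 1 - 1) * P * m * p) := by
    rw [hprod1, ← hpowa1]; ring
  rw [hden]
  have hkey : (1:ℝ) / (a * (a ^ (k 1 - 1) * P * m * p))
      = 1 / ((a + 1) * (a ^ (k 1 - 1) * P * m * p))
        + 1 / (a * ((a + 1) * (a ^ (k 1 - 1) * P * m * p))) := by
    have h1 : a ≠ 0 := ne_of_gt h0a
    have h2 : a + 1 ≠ 0 := by intro h; rw [hadef] at h; norm_num at h; linarith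
    have h3 : a ^ (k 1 - 1) * P * m * p ≠ 0 := ne_of_gt hXpos
    field_simp
  rw [hkey]
  apply add_lt_add_of_le_of_lt
  · exact one_div_le_one_div_of_le hApos hA
  · exact one_div_lt_one_div_of_lt hBpos hB
end

section
/- For integers r ≥ t+2 with t ≥ 1, and real u ≥ 1, one has Σ_{n_1 ≥ ⋯ ≥ n_{r+1} ≥ 2} [1/(n_1(n_1−1)(n_2−1)⋯(n_r−1))]·(1/(n_t n_{r+1}^u)) < ζ*(2,{1}^{t−1})/2^u, where ζ*(2,{1}^{t−1}) = Σ_{n_1 ≥ ⋯ ≥ n_t ≥ 1} 1/(n_1^2 n_2⋯n_t). -/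
open scoped BigOperators
open Function

namespace Stmt10Aux

abbrev Idx (k c : ℕ) := {n : Fin k → ℕ // Antitone n ∧ ∀ i, c ≤ n i}

/-- extend a tuple to ℕ by 0 -/
def ext {L : ℕ} (n : Fin L → ℕ) (i : ℕ) : ℕ := if h : i < L then n ⟨i, h⟩ else 0

lemma ext_lt {L : ℕ} (n : Fin L → ℕ) {i : ℕ} (h : i < L) : ext n i = n ⟨i, h⟩ := dif_pos h

lemma ext_snoc_lt {L : ℕ} (n : Fin L → ℕ) (a : ℕ) {i : ℕ} (h : i < L) :
    ext (Fin.snoc n a : Fin (L + 1) → ℕ) i = ext n i := by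
  rw [ext_lt _ (h.trans (Nat.lt_succ_self L)), ext_lt n h]
  have : (⟨i, h.trans (Nat.lt_succ_self L)⟩ : Fin (L + 1)) = Fin.castSucc ⟨i, h⟩ := rfl
  rw [this, Fin.snoc_castSucc]

lemma ext_snoc_last {L : ℕ} (n : Fin L → ℕ) (a : ℕ) :
    ext (Fin.snoc n a : Fin (L + 1) → ℕ) L = a := by
  rw [ext_lt _ (Nat.lt_succ_self L)]
  have : (⟨L, Nat.lt_succ_self L⟩ : Fin (L + 1)) = Fin.last L := rfl
  rw [this, Fin.snoc_last]

lemma antitone_snoc {k : ℕ} (hk : 0 < k) (m : Fin k → ℕ) (hm : Antitone m) (a : ℕ)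
    (ha : a ≤ m ⟨k - 1, by omega⟩) : Antitone (Fin.snoc m a : Fin (k + 1) → ℕ) := by
  intro i j hij
  rcases Fin.eq_castSucc_or_eq_last j with ⟨j', rfl⟩ | rfl
  · rcases Fin.eq_castSucc_or_eq_last i with ⟨i', rfl⟩ | rfl
    · rw [Fin.snoc_castSucc, Fin.snoc_castSucc]
      exact hm (by exact_mod_cast hij)
    · exfalso
      have h1 : (Fin.last k).val ≤ (Fin.castSucc j').val := hij
      simp [Fin.last] at h1
      omega
  · rcases Fin.eq_castSucc_or_eq_last i with ⟨i', rfl⟩ | rfl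
    · rw [Fin.snoc_castSucc, Fin.snoc_last]
      refine le_trans ha (hm ?_)
      have : i'.val ≤ k - 1 := by omega
      exact this
    · simp

lemma le_snoc {k c : ℕ} (m : Fin k → ℕ) (hm : ∀ i, c ≤ m i) (a : ℕ) (ha : c ≤ a) :
    ∀ i, c ≤ (Fin.snoc m a : Fin (k + 1) → ℕ) i := by
  intro i
  rcases Fin.eq_castSucc_or_eq_last i with ⟨i', rfl⟩ | rfl
  · rw [Fin.snoc_castSucc]; exact hm i'
  · rw [Fin.snoc_last]; exact ha

/-- Peel the last coordinate of the antitone-tuple sum. -/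
lemma tsum_peel (c k : ℕ) (hk : 0 < k) (F : (Fin (k + 1) → ℕ) → ENNReal) :
    ∑' n : Idx (k + 1) c, F n.1
      = ∑' m : Idx k c, ∑ a ∈ Finset.Icc c (ext m.1 (k - 1)), F (Fin.snoc m.1 a) := by
  have hkk : k - 1 < k := by omega
  have hcond : ∀ p : Idx k c × ℕ,
      (if p.2 ∈ Finset.Icc c (ext p.1.1 (k - 1)) then F (Fin.snoc p.1.1 p.2) else 0) ≠ 0 →
      p.2 ∈ Finset.Icc c (ext p.1.1 (k - 1)) := by
    intro p h
    by_contra hc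
    exact h (if_neg hc)
  have key : ∑' n : Idx (k + 1) c, F n.1
      = ∑' p : Idx k c × ℕ,
        (if p.2 ∈ Finset.Icc c (ext p.1.1 (k - 1)) then F (Fin.snoc p.1.1 p.2) else 0) := by
    refine tsum_eq_tsum_of_ne_zero_bij
      (i := fun x => ⟨Fin.snoc x.1.1.1 x.1.2,
        antitone_snoc hk _ x.1.1.2.1 _ (by
          have h := hcond x.1 x.2
          rw [Finset.mem_Icc, ext_lt _ hkk] at h
          exact h.2),
        le_snoc _ x.1.1.2.2 _ (by
          have h := hcond x.1 x.2
          rw [Finset.mem_Icc] at h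
          exact h.1)⟩) ?_ ?_ ?_
    · -- injective
      intro x y hxy
      have h1 : (Fin.snoc x.1.1.1 x.1.2 : Fin (k + 1) → ℕ) = Fin.snoc y.1.1.1 y.1.2 :=
        congrArg Subtype.val hxy
      have hm : x.1.1.1 = y.1.1.1 := by
        funext i
        have h2 := congrFun h1 (Fin.castSucc i)
        rwa [Fin.snoc_castSucc, Fin.snoc_castSucc] at h2
      have hval : x.1.2 = y.1.2 := by
        have h2 := congrFun h1 (Fin.last k)
        rwa [Fin.snoc_last, Fin.snoc_last] at h2
      apply Subtype.ext
      exact Prod.ext (Subtype.ext hm) hval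
    · -- support f ⊆ range i
      rintro ⟨n, hn1, hn2⟩ hF
      have hmono : Antitone (Fin.init n) := by
        intro i j hij
        exact hn1 (by exact_mod_cast hij : (Fin.castSucc i) ≤ Fin.castSucc j)
      have hb : ∀ i, c ≤ Fin.init n i := fun i => hn2 _
      have hle : (Fin.castSucc (⟨k - 1, hkk⟩ : Fin k)) ≤ Fin.last k := by
        rw [Fin.le_def]
        simp [Fin.last]
      have hcond2 : n (Fin.last k) ∈ Finset.Icc c (ext (Fin.init n) (k - 1)) := by
        rw [Finset.mem_Icc]
        refine ⟨hn2 _, ?_⟩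
        rw [ext_lt _ hkk]
        exact hn1 hle
      have hsupp : (if (((⟨Fin.init n, hmono, hb⟩ : Idx k c), n (Fin.last k)) : Idx k c × ℕ).2 ∈
            Finset.Icc c (ext ((((⟨Fin.init n, hmono, hb⟩ : Idx k c), n (Fin.last k)) :
              Idx k c × ℕ)).1.1 (k - 1))
          then F (Fin.snoc (⟨Fin.init n, hmono, hb⟩ : Idx k c).1 (n (Fin.last k))) else 0) ≠ 0 := by
      
        simp only [if_pos hcond2]
        simpa [Fin.snoc_init_self] using hF
      refine ⟨⟨((⟨Fin.init n, hmono, hb⟩ : Idx k c), n (Fin.last k)), hsupp⟩, ?_⟩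
      apply Subtype.ext
      exact Fin.snoc_init_self n
    · -- f (i x) = g x
      intro x
      exact (if_pos (hcond x.1 x.2)).symm
  rw [key, ENNReal.tsum_prod']
  congr 1
  funext m
  rw [tsum_eq_sum (s := Finset.Icc c (ext m.1 (k - 1))) (fun a ha => if_neg ha)]
  exact Finset.sum_congr rfl fun a ha => if_pos ha


def Gnat (t L : ℕ) (n : Fin L → ℕ) : ℕ :=
  ext n 0 * (∏ i ∈ Finset.range (L - 1), (ext n i - 1)) * ext n (t - 1)

noncomputable def G (t L : ℕ) (n : Fin L → ℕ) : ENNReal := ((Gnat t L n : ℕ) : ENNReal)⁻¹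

lemma cast_mul_inv (a b : ℕ) : (((a * b : ℕ) : ENNReal))⁻¹ = ((a : ℕ) : ENNReal)⁻¹ * ((b : ℕ) : ENNReal)⁻¹ := by
  push_cast
  rw [ENNReal.mul_inv (Or.inr (ENNReal.natCast_ne_top b)) (Or.inl (ENNReal.natCast_ne_top a))]

lemma cast_cancel (d c : ℕ) (hc : c ≠ 0) :
    ((c : ℕ) : ENNReal) * (((d * c : ℕ) : ENNReal))⁻¹ = ((d : ℕ) : ENNReal)⁻¹ := by
  rw [cast_mul_inv]
  rw [mul_comm ((d : ENNReal))⁻¹ _, ← mul_assoc, ENNReal.mul_inv_cancel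
    (by exact_mod_cast hc) (ENNReal.natCast_ne_top c), one_mul]

lemma gnat_pos {t L : ℕ} (ht : 1 ≤ t) (htL : t ≤ L) (n : Fin L → ℕ) (hn : ∀ i, 2 ≤ n i) :
    0 < Gnat t L n := by
  have h0 : 0 < L := by omega
  have e0 : ext n 0 = n ⟨0, h0⟩ := ext_lt n h0
  have et : ext n (t - 1) = n ⟨t - 1, by omega⟩ := ext_lt n (by omega)
  refine Nat.mul_pos (Nat.mul_pos ?_ ?_) ?_
  · rw [e0]; exact lt_of_lt_of_le (by norm_num) (hn _)
  · apply Finset.prod_pos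
    intro i hi
    rw [Finset.mem_range] at hi
    rw [ext_lt n (by omega)]
    have := hn ⟨i, by omega⟩
    omega
  · rw [et]; exact lt_of_lt_of_le (by norm_num) (hn _)

lemma gnat_snoc {t L : ℕ} (ht : 1 ≤ t) (htL : t ≤ L) (n : Fin L → ℕ) (a : ℕ) :
    Gnat t (L + 1) (Fin.snoc n a) = Gnat t L n * (ext n (L - 1) - 1) := by
  unfold Gnat
  rw [ext_snoc_lt n a (by omega), ext_snoc_lt n a (by omega)]
  have hL : L - 1 + 1 = L := by omega
  have hsplit : ∏ i ∈ Finset.range (L + 1 - 1), (ext (Fin.snoc n a : Fin (L+1) → ℕ) i - 1)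
      = (∏ i ∈ Finset.range (L - 1), (ext n i - 1)) * (ext n (L - 1) - 1) := by
    have : L + 1 - 1 = (L - 1) + 1 := by omega
    rw [this, Finset.prod_range_succ, ext_snoc_lt n a (by omega)]
    congr 1
    apply Finset.prod_congr rfl
    intro i hi
    rw [Finset.mem_range] at hi
    rw [ext_snoc_lt n a (by omega)]
  rw [hsplit]
  ring

/-- collapse the trailing coordinates -/
lemma drop (t : ℕ) (ht : 1 ≤ t) :
    ∀ j, ∑' n : Idx (t + j) 2, G t (t + j) n.1 ≤ ∑' h : Idx t 2, G t t h.1 := by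
  intro j
  induction j with
  | zero => exact le_rfl
  | succ j ih =>
    refine le_trans (le_of_eq ?_) ih
    show ∑' n : Idx (t + j + 1) 2, G t (t + j + 1) n.1 = _
    rw [tsum_peel 2 (t + j) (by omega) (fun n => G t (t + j + 1) n)]
    congr 1
    funext m
    have hM : 2 ≤ ext m.1 (t + j - 1) := by
      rw [ext_lt m.1 (by omega)]
      exact m.2.2 _
    have hterm : ∀ a ∈ Finset.Icc 2 (ext m.1 (t + j - 1)),
        G t (t + j + 1) (Fin.snoc m.1 a) = ((Gnat t (t + j) m.1 * (ext m.1 (t + j - 1) - 1) : ℕ) : ENNReal)⁻¹ := by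
      intro a _
      unfold G
      rw [gnat_snoc ht (by omega) m.1 a]
    rw [Finset.sum_congr rfl hterm, Finset.sum_const, Nat.card_Icc, nsmul_eq_mul]
    have hcard : (ext m.1 (t + j - 1) + 1 - 2) = ext m.1 (t + j - 1) - 1 := by omega
    rw [hcard]
    have hne : ext m.1 (t + j - 1) - 1 ≠ 0 := by omega
    have := cast_cancel (Gnat t (t + j) m.1) (ext m.1 (t + j - 1) - 1) hne
    rw [this]
    rfl


lemma stepB (t L : ℕ) (ht : 1 ≤ t) (hL : t + 1 ≤ L) :
    ∑' n : Idx (L + 1) 2, ((Gnat t (L + 1) n.1 * ext n.1 L : ℕ) : ENNReal)⁻¹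
      ≤ 2⁻¹ * ∑' n : Idx L 2, G t L n.1 := by
  rw [tsum_peel 2 L (by omega) (fun n => ((Gnat t (L + 1) n * ext n L : ℕ) : ENNReal)⁻¹)]
  rw [← ENNReal.tsum_mul_left]
  apply ENNReal.tsum_le_tsum
  intro m
  have hM : 2 ≤ ext m.1 (L - 1) := by rw [ext_lt m.1 (by omega)]; exact m.2.2 _
  have hbound : ∀ a ∈ Finset.Icc 2 (ext m.1 (L - 1)),
      ((Gnat t (L + 1) (Fin.snoc m.1 a) * ext (Fin.snoc m.1 a : Fin (L + 1) → ℕ) L : ℕ) : ENNReal)⁻¹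
        ≤ ((Gnat t L m.1 * (ext m.1 (L - 1) - 1) : ℕ) : ENNReal)⁻¹ * 2⁻¹ := by
    intro a ha
    rw [Finset.mem_Icc] at ha
    rw [gnat_snoc ht (by omega) m.1 a, ext_snoc_last m.1 a, cast_mul_inv]
    refine mul_le_mul' le_rfl (ENNReal.inv_le_inv.mpr ?_)
    exact_mod_cast ha.1
  refine le_trans (Finset.sum_le_sum hbound) ?_
  rw [Finset.sum_const, Nat.card_Icc, nsmul_eq_mul]
  have hcard : (ext m.1 (L - 1) + 1 - 2) = ext m.1 (L - 1) - 1 := by omega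
  rw [hcard, ← mul_assoc]
  have hne : ext m.1 (L - 1) - 1 ≠ 0 := by omega
  rw [cast_cancel (Gnat t L m.1) (ext m.1 (L - 1) - 1) hne, mul_comm]
  exact le_of_eq rfl


/-! ### RHS: finiteness and comparison -/

noncomputable def phi (t a : ℕ) : ENNReal := ENNReal.ofReal ((a : ℝ) ^ (-(1 + (t : ℝ)⁻¹)))

lemma tsum_phi_ne_top (t : ℕ) (ht : 1 ≤ t) : ∑' a : ℕ, phi t a ≠ ⊤ := by
  have htR : (0 : ℝ) < (t : ℝ)⁻¹ := by
    have : (0 : ℝ) < (t : ℝ) := by exact_mod_cast ht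
    positivity
  have hs : Summable (fun a : ℕ => (a : ℝ) ^ (-(1 + (t : ℝ)⁻¹))) := by
    rw [Real.summable_nat_rpow]
    linarith
  unfold phi
  rw [← ENNReal.ofReal_tsum_of_nonneg (fun a => Real.rpow_nonneg (Nat.cast_nonneg a) _) hs]
  exact ENNReal.ofReal_ne_top

def consEquiv (k : ℕ) : ℕ × (Fin k → ℕ) ≃ (Fin (k + 1) → ℕ) where
  toFun p := Fin.cons p.1 p.2
  invFun q := (q 0, fun i => q i.succ)
  left_inv p := by
    refine Prod.ext ?_ ?_
    · simp
    · funext i; simp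
  right_inv q := by
    funext i
    refine Fin.cases ?_ ?_ i <;> simp

lemma tsum_pi_prod (φ : ℕ → ENNReal) : ∀ k, ∑' q : Fin k → ℕ, ∏ i, φ (q i) = (∑' a : ℕ, φ a) ^ k := by
  intro k
  induction k with
  | zero =>
    rw [pow_zero]
    have h1 : (∑' q : Fin 0 → ℕ, ∏ i, φ (q i)) = ∏ i : Fin 0, φ ((fun j : Fin 0 => j.elim0) i) :=
      tsum_eq_single _ (fun b hb => absurd (funext fun i : Fin 0 => i.elim0) hb)
    rw [h1]
    simp
  | succ k ih =>
    rw [← Equiv.tsum_eq (consEquiv k) (fun q : Fin (k + 1) → ℕ => ∏ i, φ (q i))]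
    have hterm : ∀ p : ℕ × (Fin k → ℕ),
        (∏ i, φ ((consEquiv k p) i)) = φ p.1 * ∏ i, φ (p.2 i) := by
      intro p
      rw [Fin.prod_univ_succ]
      simp [consEquiv]
    rw [tsum_congr hterm, ENNReal.tsum_prod']
    have hinner : ∀ a : ℕ, (∑' q : Fin k → ℕ, φ a * ∏ i, φ (q i))
        = φ a * ((∑' b : ℕ, φ b) ^ k) := by
      intro a
      rw [ENNReal.tsum_mul_left, ih]
    rw [tsum_congr hinner, ENNReal.tsum_mul_right, pow_succ]
    ring

def Bnat (t : ℕ) (q : Fin t → ℕ) : ℕ := ext q 0 * ∏ i, q i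

lemma bnat_phi_bound (t : ℕ) (ht : 1 ≤ t) (q : Fin t → ℕ) (hq : Antitone q)
    (hb : ∀ i, 1 ≤ q i) : ((Bnat t q : ℕ) : ENNReal)⁻¹ ≤ ∏ i, phi t (q i) := by
  have ht0 : 0 < t := ht
  have e0 : ext q 0 = q ⟨0, ht0⟩ := ext_lt q ht0
  set s : ℝ := 1 + (t : ℝ)⁻¹ with hs
  set P : ℕ := ∏ i, q i with hP
  have hP1 : 1 ≤ P := Finset.one_le_prod' (fun i _ => hb i)
  have hPle : P ≤ (ext q 0) ^ t := by
    rw [hP, e0]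
    calc ∏ i, q i ≤ ∏ _i : Fin t, q ⟨0, ht0⟩ :=
          Finset.prod_le_prod' (fun i _ => hq (by exact Fin.mk_le_of_le_val (Nat.zero_le _)))
      _ = (q ⟨0, ht0⟩) ^ t := by
          rw [Finset.prod_const, Finset.card_univ, Fintype.card_fin]
  have hPpos : (0 : ℝ) < (P : ℝ) := by exact_mod_cast hP1
  have hstep1 : ((P : ℝ)) ^ ((t : ℝ)⁻¹) ≤ ((ext q 0 : ℕ) : ℝ) := by
    have h1 : ((P : ℝ)) ^ ((t : ℝ)⁻¹) ≤ (((ext q 0 : ℕ) : ℝ) ^ t) ^ ((t : ℝ)⁻¹) := by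
      apply Real.rpow_le_rpow (by positivity) _ (by positivity)
      exact_mod_cast hPle
    rwa [Real.pow_rpow_inv_natCast (Nat.cast_nonneg _) (by omega)] at h1
  have hstep2 : ((P : ℝ)) ^ s ≤ ((Bnat t q : ℕ) : ℝ) := by
    have : ((P : ℝ)) ^ s = (P : ℝ) ^ ((t : ℝ)⁻¹) * (P : ℝ) := by
      rw [hs, Real.rpow_add hPpos, Real.rpow_one]
      ring
    rw [this]
    have hBc : ((Bnat t q : ℕ) : ℝ) = ((ext q 0 : ℕ) : ℝ) * (P : ℝ) := by
      unfold Bnat; rw [hP]; push_cast; ring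
    rw [hBc]
    exact mul_le_mul_of_nonneg_right hstep1 (le_of_lt hPpos)
  have hBpos : (0 : ℝ) < ((Bnat t q : ℕ) : ℝ) := lt_of_lt_of_le (by positivity) hstep2
  have hinv : ((Bnat t q : ℕ) : ℝ)⁻¹ ≤ (P : ℝ) ^ (-s) := by
    rw [Real.rpow_neg (le_of_lt hPpos)]
    exact inv_anti₀ (by positivity) hstep2
  have hprod : (P : ℝ) ^ (-s) = ∏ i, ((q i : ℝ)) ^ (-s) := by
    rw [hP]
    push_cast
    exact (Real.finset_prod_rpow _ _ (fun i _ => Nat.cast_nonneg _) _).symm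
  calc ((Bnat t q : ℕ) : ENNReal)⁻¹
      = ENNReal.ofReal (((Bnat t q : ℕ) : ℝ)⁻¹) := by
        rw [ENNReal.ofReal_inv_of_pos hBpos, ENNReal.ofReal_natCast]
    _ ≤ ENNReal.ofReal ((P : ℝ) ^ (-s)) := ENNReal.ofReal_le_ofReal hinv
    _ = ENNReal.ofReal (∏ i, ((q i : ℝ)) ^ (-s)) := by rw [hprod]
    _ = ∏ i, phi t (q i) := by
        rw [ENNReal.ofReal_prod_of_nonneg (fun i _ => Real.rpow_nonneg (Nat.cast_nonneg _) _)]
        rfl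

lemma B_ne_top (t : ℕ) (ht : 1 ≤ t) :
    ∑' q : Idx t 1, ((Bnat t q.1 : ℕ) : ENNReal)⁻¹ ≠ ⊤ := by
  have h1 : ∑' q : Idx t 1, ((Bnat t q.1 : ℕ) : ENNReal)⁻¹
      ≤ ∑' q : Idx t 1, ∏ i, phi t (q.1 i) :=
    ENNReal.tsum_le_tsum (fun q => bnat_phi_bound t ht q.1 q.2.1 q.2.2)
  have h2 : ∑' q : Idx t 1, ∏ i, phi t (q.1 i) ≤ ∑' q : Fin t → ℕ, ∏ i, phi t (q i) :=
    ENNReal.tsum_comp_le_tsum_of_injective Subtype.val_injective _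
  have h3 := tsum_pi_prod (phi t) t
  refine ne_top_of_le_ne_top ?_ (h1.trans (h2.trans (le_of_eq h3)))
  exact ENNReal.pow_ne_top (tsum_phi_ne_top t ht)

lemma bnat_lt_gnat (t : ℕ) (ht : 1 ≤ t) (h : Fin t → ℕ) (hh : ∀ i, 2 ≤ h i) :
    Bnat t (fun i => h i - 1) < Gnat t t h := by
  have ht0 : 0 < t := ht
  have e0 : ext (fun i => h i - 1) 0 = h ⟨0, ht0⟩ - 1 := ext_lt _ ht0
  have hsplit : (∏ i, (h i - 1)) = (∏ i ∈ Finset.range (t - 1), (ext h i - 1)) * (ext h (t - 1) - 1) := by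
    have h1 : (∏ i : Fin t, (h i - 1)) = ∏ i ∈ Finset.range t, (ext h i - 1) := by
      rw [← Fin.prod_univ_eq_prod_range (fun j => ext h j - 1) t]
      apply Finset.prod_congr rfl
      intro i _
      rw [ext_lt h i.isLt]
    have h2 : t = (t - 1) + 1 := by omega
    have h3 : Finset.range t = Finset.range ((t - 1) + 1) := by rw [← h2]
    rw [h1, h3, Finset.prod_range_succ]
  unfold Bnat Gnat
  rw [e0, hsplit]
  have hA : 2 ≤ h ⟨0, ht0⟩ := hh _
  have hC : 2 ≤ ext h (t - 1) := by rw [ext_lt h (by omega)]; exact hh _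
  have hP : 1 ≤ ∏ i ∈ Finset.range (t - 1), (ext h i - 1) := by
    apply Finset.one_le_prod'
    intro i hi
    rw [Finset.mem_range] at hi
    rw [ext_lt h (by omega)]
    have := hh ⟨i, by omega⟩
    omega
  have he0' : ext h 0 = h ⟨0, ht0⟩ := ext_lt h ht0
  rw [he0']
  set A := h ⟨0, ht0⟩
  set P := ∏ i ∈ Finset.range (t - 1), (ext h i - 1)
  set C := ext h (t - 1)
  calc (A - 1) * (P * (C - 1)) < A * (P * C) := by
        apply Nat.mul_lt_mul_of_lt_of_le (by omega)
        · exact Nat.mul_le_mul_left P (by omega)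
        · positivity
    _ = A * P * C := by ring


lemma Z_lt_B (t : ℕ) (ht : 1 ≤ t) :
    ∑' h : Idx t 2, G t t h.1 < ∑' q : Idx t 1, ((Bnat t q.1 : ℕ) : ENNReal)⁻¹ := by
  classical
  have hBtop := B_ne_top t ht
  -- the injection
  have hpsi : ∀ h : Idx t 2, Antitone (fun i => h.1 i - 1) ∧ ∀ i, 1 ≤ h.1 i - 1 := by
    intro h
    constructor
    · intro i j hij
      exact Nat.sub_le_sub_right (h.2.1 hij) 1
    · intro i
      have := h.2.2 i
      omega
  let ψ : Idx t 2 → Idx t 1 := fun h => ⟨fun i => h.1 i - 1, (hpsi h).1, (hpsi h).2⟩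
  have hinj : Function.Injective ψ := by
    intro x y hxy
    apply Subtype.ext
    funext i
    have h1 : x.1 i - 1 = y.1 i - 1 := congrFun (congrArg Subtype.val hxy) i
    have h2 := x.2.2 i
    have h3 := y.2.2 i
    omega
  have hW : ∑' h : Idx t 2, ((Bnat t (ψ h).1 : ℕ) : ENNReal)⁻¹
      ≤ ∑' q : Idx t 1, ((Bnat t q.1 : ℕ) : ENNReal)⁻¹ :=
    ENNReal.tsum_comp_le_tsum_of_injective hinj (fun q => ((Bnat t q.1 : ℕ) : ENNReal)⁻¹)
  have hWtop : ∑' h : Idx t 2, ((Bnat t (ψ h).1 : ℕ) : ENNReal)⁻¹ ≠ ⊤ :=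
    ne_top_of_le_ne_top hBtop hW
  have hpt : ∀ h : Idx t 2, G t t h.1 ≤ ((Bnat t (ψ h).1 : ℕ) : ENNReal)⁻¹ := by
    intro h
    unfold G
    apply ENNReal.inv_le_inv.mpr
    exact_mod_cast le_of_lt (bnat_lt_gnat t ht h.1 h.2.2)
  set h0 : Idx t 2 := ⟨fun _ => 2, antitone_const, fun i => le_rfl⟩ with hh0
  have hstrict : G t t h0.1 < ((Bnat t (ψ h0).1 : ℕ) : ENNReal)⁻¹ := by
    unfold G
    apply ENNReal.inv_lt_inv.mpr
    exact_mod_cast bnat_lt_gnat t ht h0.1 h0.2.2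
  calc ∑' h : Idx t 2, G t t h.1
      = G t t h0.1 + ∑' h : Idx t 2, @ite ENNReal (h = h0) (Classical.propDecidable _) 0 (G t t h.1) :=
        ENNReal.tsum_eq_add_tsum_ite h0
    _ ≤ G t t h0.1 + ∑' h : Idx t 2, @ite ENNReal (h = h0) (Classical.propDecidable _) 0 (((Bnat t (ψ h).1 : ℕ) : ENNReal)⁻¹) := by
        apply add_le_add_right
        apply ENNReal.tsum_le_tsum
        intro h
        by_cases hc : h = h0
        · simp [hc]
        · simp only [if_neg hc]
          exact hpt h
    _ < ((Bnat t (ψ h0).1 : ℕ) : ENNReal)⁻¹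
        + ∑' h : Idx t 2, @ite ENNReal (h = h0) (Classical.propDecidable _) 0 (((Bnat t (ψ h).1 : ℕ) : ENNReal)⁻¹) := by
        apply ENNReal.add_lt_add_right _ hstrict
        refine ne_top_of_le_ne_top hWtop ?_
        apply ENNReal.tsum_le_tsum
        intro h
        by_cases hc : h = h0
        · simp [hc]
        · simp only [if_neg hc]; exact le_rfl
    _ = ∑' h : Idx t 2, ((Bnat t (ψ h).1 : ℕ) : ENNReal)⁻¹ :=
        (ENNReal.tsum_eq_add_tsum_ite (f := fun h : Idx t 2 => ((Bnat t (ψ h).1 : ℕ) : ENNReal)⁻¹) h0).symm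
    _ ≤ ∑' q : Idx t 1, ((Bnat t q.1 : ℕ) : ENNReal)⁻¹ := hW


lemma drop' (t L : ℕ) (ht : 1 ≤ t) (htL : t ≤ L) :
    ∑' n : Idx L 2, G t L n.1 ≤ ∑' h : Idx t 2, G t t h.1 := by
  obtain ⟨j, rfl⟩ : ∃ j, L = t + j := ⟨L - t, by omega⟩
  exact drop t ht j

lemma stepA (t r : ℕ) (ht : 1 ≤ t) (hr : t + 2 ≤ r) (u : ℝ) (hu : 1 ≤ u)
    (n : Fin (r + 1) → ℕ) (hn : ∀ i, 2 ≤ n i) (h0 : 0 < r + 1) (h1 : t - 1 < r + 1) :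
    ENNReal.ofReal ((1 : ℝ) / ((n ⟨0, h0⟩ : ℝ) * ∏ i : Fin r, ((n i.castSucc : ℝ) - 1)) *
        (1 / ((n ⟨t - 1, h1⟩ : ℝ) * (n (Fin.last r) : ℝ) ^ u)))
      ≤ ENNReal.ofReal (2 / 2 ^ u) * ((Gnat t (r + 1) n * ext n r : ℕ) : ENNReal)⁻¹ := by
  have h2u : (0 : ℝ) < 2 ^ u := Real.rpow_pos_of_pos (by norm_num) u
  set P : ℕ := ∏ i ∈ Finset.range r, (ext n i - 1) with hP
  have hP1 : 1 ≤ P := by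
    apply Finset.one_le_prod'
    intro i hi
    rw [Finset.mem_range] at hi
    rw [ext_lt n (by omega)]
    have := hn ⟨i, by omega⟩
    omega
  have hprod : ∏ i : Fin r, ((n i.castSucc : ℝ) - 1) = (P : ℝ) := by
    have hterm : ∀ i : Fin r, ((n i.castSucc : ℝ) - 1) = ((ext n i.1 - 1 : ℕ) : ℝ) := by
      intro i
      have hcs : n i.castSucc = ext n i.1 := by
        rw [ext_lt n (by omega)]
        exact congrArg n (Fin.ext rfl)
      rw [hcs, Nat.cast_sub (by rw [ext_lt n (by omega)]; have := hn ⟨i.1, by omega⟩; omega)]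
      norm_num
    rw [Finset.prod_congr rfl (fun i _ => hterm i), hP]
    push_cast
    rw [← Fin.prod_univ_eq_prod_range (fun j => ((ext n j - 1 : ℕ) : ℝ)) r]
  have e0 : (n ⟨0, h0⟩ : ℝ) = ((ext n 0 : ℕ) : ℝ) := by rw [ext_lt n h0]
  have et : (n ⟨t - 1, h1⟩ : ℝ) = ((ext n (t - 1) : ℕ) : ℝ) := by rw [ext_lt n h1]
  have er : (n (Fin.last r) : ℝ) = ((ext n r : ℕ) : ℝ) := by
    rw [ext_lt n (by omega)]
    exact congrArg (fun x : ℕ => (x : ℝ)) (congrArg n (Fin.ext rfl))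
  set A : ℝ := ((ext n 0 : ℕ) : ℝ) * (P : ℝ) with hA
  set Cc : ℝ := ((ext n (t - 1) : ℕ) : ℝ) with hCc
  set d : ℝ := ((ext n r : ℕ) : ℝ) with hd
  have hApos : 0 < A := by
    apply mul_pos
    · have : 2 ≤ ext n 0 := by rw [ext_lt n h0]; exact hn _
      exact_mod_cast lt_of_lt_of_le (by norm_num) this
    · exact_mod_cast lt_of_lt_of_le (by norm_num) hP1
  have hC2 : (2 : ℝ) ≤ Cc := by
    rw [hCc]
    have : 2 ≤ ext n (t - 1) := by rw [ext_lt n h1]; exact hn _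
    exact_mod_cast this
  have hd2 : (2 : ℝ) ≤ d := by
    rw [hd]
    have : 2 ≤ ext n r := by rw [ext_lt n (by omega : r < r + 1)]; exact hn _
    exact_mod_cast this
  have hCpos : 0 < Cc := lt_of_lt_of_le (by norm_num) hC2
  have hdpos : 0 < d := lt_of_lt_of_le (by norm_num) hd2
  have hpow : (2 : ℝ) ^ (u - 1) * d ≤ d ^ u := by
    have h1' : (2 : ℝ) ^ (u - 1) ≤ d ^ (u - 1) :=
      Real.rpow_le_rpow (by norm_num) hd2 (by linarith)
    calc (2 : ℝ) ^ (u - 1) * d ≤ d ^ (u - 1) * d :=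
          mul_le_mul_of_nonneg_right h1' (le_of_lt hdpos)
      _ = d ^ u := by
          nth_rewrite 2 [← Real.rpow_one d]
          rw [← Real.rpow_add hdpos]
          norm_num
  have hkey : 1 / (Cc * d ^ u) ≤ 2 / 2 ^ u * (1 / (Cc * d)) := by
    have heq : 2 / 2 ^ u * (1 / (Cc * d)) = 1 / (Cc * ((2 : ℝ) ^ (u - 1) * d)) := by
      have h21 : (2 : ℝ) ^ (u - 1) = 2 ^ u / 2 := by
        rw [Real.rpow_sub (by norm_num), Real.rpow_one]
      rw [h21]
      field_simp
    rw [heq]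
    apply one_div_le_one_div_of_le
    · positivity
    · exact mul_le_mul_of_nonneg_left hpow (le_of_lt hCpos)
  have hreal : (1 : ℝ) / ((n ⟨0, h0⟩ : ℝ) * ∏ i : Fin r, ((n i.castSucc : ℝ) - 1)) *
        (1 / ((n ⟨t - 1, h1⟩ : ℝ) * (n (Fin.last r) : ℝ) ^ u))
      ≤ 2 / 2 ^ u * ((Gnat t (r + 1) n * ext n r : ℕ) : ℝ)⁻¹ := by
    rw [hprod, e0, et, er]
    have hGc : ((Gnat t (r + 1) n * ext n r : ℕ) : ℝ) = A * Cc * d := by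
      unfold Gnat
      have : r + 1 - 1 = r := by omega
      rw [this]
      push_cast [← hP]
      rw [hA, hCc, hd]
      try push_cast
      try ring
    rw [hGc]
    calc (1 : ℝ) / A * (1 / (Cc * d ^ u))
        ≤ 1 / A * (2 / 2 ^ u * (1 / (Cc * d))) := by
          apply mul_le_mul_of_nonneg_left hkey
          positivity
      _ = 2 / 2 ^ u * (A * Cc * d)⁻¹ := by
          field_simp
  calc ENNReal.ofReal ((1 : ℝ) / ((n ⟨0, h0⟩ : ℝ) * ∏ i : Fin r, ((n i.castSucc : ℝ) - 1)) *
        (1 / ((n ⟨t - 1, h1⟩ : ℝ) * (n (Fin.last r) : ℝ) ^ u)))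
      ≤ ENNReal.ofReal (2 / 2 ^ u * ((Gnat t (r + 1) n * ext n r : ℕ) : ℝ)⁻¹) :=
        ENNReal.ofReal_le_ofReal hreal
    _ = ENNReal.ofReal (2 / 2 ^ u) * ((Gnat t (r + 1) n * ext n r : ℕ) : ENNReal)⁻¹ := by
        have hpos : (0 : ℝ) < ((Gnat t (r + 1) n * ext n r : ℕ) : ℝ) := by
          have hg := gnat_pos ht (by omega : t ≤ r + 1) n hn
          have hr' : 0 < ext n r := by
            rw [ext_lt n (by omega : r < r + 1)]
            have := hn ⟨r, by omega⟩
            omega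
          exact_mod_cast Nat.mul_pos hg hr'
        rw [ENNReal.ofReal_mul (by positivity), ENNReal.ofReal_inv_of_pos hpos,
          ENNReal.ofReal_natCast]

end Stmt10Aux

open Stmt10Aux in
theorem stmt10 (t r : ℕ) (ht : 1 ≤ t) (hr : t + 2 ≤ r) (u : ℝ) (hu : 1 ≤ u) :
    (∑' n : {n : Fin (r + 1) → ℕ // Antitone n ∧ ∀ i, 2 ≤ n i},
      (1 : ℝ) / ((n.1 ⟨0, by omega⟩ : ℝ) *
          ∏ i : Fin r, ((n.1 i.castSucc : ℝ) - 1)) *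
        (1 / ((n.1 ⟨t - 1, by omega⟩ : ℝ) * (n.1 (Fin.last r) : ℝ) ^ u))) <
    (∑' q : {q : Fin t → ℕ // Antitone q ∧ ∀ i, 1 ≤ q i},
      (1 : ℝ) / ((q.1 ⟨0, ht⟩ : ℝ) * ∏ i, (q.1 i : ℝ))) / 2 ^ u := by
  have h2u : (0 : ℝ) < 2 ^ u := Real.rpow_pos_of_pos (by norm_num) u
  let F : Idx (r + 1) 2 → ℝ := fun n =>
    (1 : ℝ) / ((n.1 ⟨0, by omega⟩ : ℝ) * ∏ i : Fin r, ((n.1 i.castSucc : ℝ) - 1)) *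
      (1 / ((n.1 ⟨t - 1, by omega⟩ : ℝ) * (n.1 (Fin.last r) : ℝ) ^ u))
  let Gq : Idx t 1 → ℝ := fun q => (1 : ℝ) / ((q.1 ⟨0, ht⟩ : ℝ) * ∏ i, (q.1 i : ℝ))
  have hfnn : ∀ n : Idx (r + 1) 2, 0 ≤ F n := by
    intro n
    apply mul_nonneg
    · apply div_nonneg (by norm_num)
      apply mul_nonneg (Nat.cast_nonneg _)
      apply Finset.prod_nonneg
      intro i _
      have h2 := n.2.2 i.castSucc
      have h3 : (1 : ℝ) ≤ (n.1 i.castSucc : ℝ) := by exact_mod_cast by omega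
      linarith
    · apply div_nonneg (by norm_num)
      exact mul_nonneg (Nat.cast_nonneg _) (Real.rpow_nonneg (Nat.cast_nonneg _) u)
  have hgnn : ∀ q : Idx t 1, 0 ≤ Gq q := by
    intro q
    apply div_nonneg (by norm_num)
    exact mul_nonneg (Nat.cast_nonneg _) (Finset.prod_nonneg fun i _ => Nat.cast_nonneg _)
  set c : ENNReal := ENNReal.ofReal (2 / 2 ^ u) with hc
  set Bsum : ENNReal := ∑' q : Idx t 1, ((Bnat t q.1 : ℕ) : ENNReal)⁻¹ with hBs
  have hstep1 : (∑' n : Idx (r + 1) 2, ENNReal.ofReal (F n))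
      ≤ c * ∑' n : Idx (r + 1) 2, ((Gnat t (r + 1) n.1 * ext n.1 r : ℕ) : ENNReal)⁻¹ := by
    rw [← ENNReal.tsum_mul_left]
    exact ENNReal.tsum_le_tsum fun n => stepA t r ht hr u hu n.1 n.2.2 (by omega) (by omega)
  have hstep2 := stepB t r ht (by omega)
  have hstep3 := drop' t r ht (by omega)
  have hZB := Z_lt_B t ht
  have hBtop : Bsum ≠ ⊤ := B_ne_top t ht
  have hcne0 : c ≠ 0 := by
    rw [hc]
    simp only [ne_eq, ENNReal.ofReal_eq_zero, not_le]
    positivity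
  have hcnetop : c ≠ ⊤ := ENNReal.ofReal_ne_top
  have hchain : (∑' n : Idx (r + 1) 2, ENNReal.ofReal (F n)) < c * (2⁻¹ * Bsum) := by
    refine lt_of_le_of_lt
      (hstep1.trans (mul_le_mul_right (hstep2.trans (mul_le_mul_right hstep3 2⁻¹)) c)) ?_
    rw [ENNReal.mul_lt_mul_iff_right hcne0 hcnetop,
      ENNReal.mul_lt_mul_iff_right (by norm_num) (by norm_num)]
    exact hZB
  have hRne : c * (2⁻¹ * Bsum) ≠ ⊤ := by
    apply ENNReal.mul_ne_top hcnetop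
    exact ENNReal.mul_ne_top (by norm_num) hBtop
  have hAne : (∑' n : Idx (r + 1) 2, ENNReal.ofReal (F n)) ≠ ⊤ :=
    (hchain.trans (lt_top_iff_ne_top.mpr hRne)).ne
  have hAR : (∑' n : Idx (r + 1) 2, F n) = (∑' n : Idx (r + 1) 2, ENNReal.ofReal (F n)).toReal := by
    rw [ENNReal.tsum_toReal_eq (fun _ => ENNReal.ofReal_ne_top)]
    exact tsum_congr fun n => (ENNReal.toReal_ofReal (hfnn n)).symm
  have hGB : ∀ q : Idx t 1, ENNReal.ofReal (Gq q) = ((Bnat t q.1 : ℕ) : ENNReal)⁻¹ := by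
    intro q
    have hb1 : 0 < Bnat t q.1 := by
      apply Nat.mul_pos
      · rw [ext_lt q.1 ht]; exact q.2.2 _
      · exact Finset.prod_pos fun i _ => q.2.2 i
    have hq : Gq q = ((Bnat t q.1 : ℕ) : ℝ)⁻¹ := by
      show (1 : ℝ) / ((q.1 ⟨0, ht⟩ : ℝ) * ∏ i, (q.1 i : ℝ)) = _
      unfold Bnat
      rw [ext_lt q.1 ht]
      push_cast
      rw [one_div]
    rw [hq, ENNReal.ofReal_inv_of_pos (by exact_mod_cast hb1), ENNReal.ofReal_natCast]
  have hBR : (∑' q : Idx t 1, Gq q) = Bsum.toReal := by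
    rw [hBs, ← tsum_congr hGB, ENNReal.tsum_toReal_eq (fun _ => ENNReal.ofReal_ne_top)]
    exact tsum_congr fun q => (ENNReal.toReal_ofReal (hgnn q)).symm
  have hlt : (∑' n : Idx (r + 1) 2, ENNReal.ofReal (F n)).toReal < (c * (2⁻¹ * Bsum)).toReal :=
    (ENNReal.toReal_lt_toReal hAne hRne).mpr hchain
  have hcompute : (c * (2⁻¹ * Bsum)).toReal = (∑' q : Idx t 1, Gq q) / 2 ^ u := by
    rw [ENNReal.toReal_mul, ENNReal.toReal_mul, hc, ENNReal.toReal_ofReal (by positivity),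
      hBR]
    have h2inv : ((2 : ENNReal)⁻¹).toReal = 2⁻¹ := by
      rw [ENNReal.toReal_inv]
      norm_num
    rw [h2inv]
    field_simp
  have final : (∑' n : Idx (r + 1) 2, F n) < (∑' q : Idx t 1, Gq q) / 2 ^ u := by
    rw [hAR, ← hcompute]
    exact hlt
  exact final
end

section
/- For integers t ≥ 1, n_t ≥ 1 and any r ≥ t+1, Σ_{n_t ≥ n_{t+1} ≥ ⋯ ≥ n_{r+1} ≥ 2} 1/((n_{t+1}−1)(n_{t+2}−1)⋯(n_r−1)) = n_t − 1. -/
open scoped BigOperators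

open Classical in
noncomputable def TS (p N : ℕ) : Finset (Fin (p + 1) → ℕ) :=
  (Fintype.piFinset fun _ => Finset.Icc 2 N).filter
    (fun n => Antitone n ∧ (∀ i, 2 ≤ n i) ∧ n 0 ≤ N)

lemma mem_TS {p N : ℕ} {n : Fin (p + 1) → ℕ} :
    n ∈ TS p N ↔ Antitone n ∧ (∀ i, 2 ≤ n i) ∧ n 0 ≤ N := by
  classical
  simp only [TS, Finset.mem_filter, Fintype.mem_piFinset, Finset.mem_Icc]
  constructor
  · rintro ⟨-, h⟩; exact h
  · rintro ⟨h1, h2, h3⟩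
    refine ⟨fun i => ⟨h2 i, ?_⟩, h1, h2, h3⟩
    exact (h1 (Fin.zero_le i)).trans h3

lemma tsum_subtype_eq (p N : ℕ) (f : (Fin (p + 1) → ℕ) → ℝ) :
    (∑' n : {n : Fin (p + 1) → ℕ // Antitone n ∧ (∀ i, 2 ≤ n i) ∧ n 0 ≤ N}, f n.1)
      = ∑ n ∈ TS p N, f n := by
  have h0 : (∑' n : {n : Fin (p + 1) → ℕ // Antitone n ∧ (∀ i, 2 ≤ n i) ∧ n 0 ≤ N}, f n.1)
      = ∑' n, Set.indicator {n : Fin (p + 1) → ℕ | Antitone n ∧ (∀ i, 2 ≤ n i) ∧ n 0 ≤ N} f n :=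
    tsum_subtype _ f
  rw [h0, tsum_eq_sum (s := TS p N) (f := Set.indicator _ f) ?_]
  · refine Finset.sum_congr rfl fun n hn => Set.indicator_of_mem ?_ f
    exact mem_TS.mp hn
  · intro n hn
    refine Set.indicator_of_notMem ?_ f
    exact fun h => hn (mem_TS.mpr h)

lemma antitone_snoc {p : ℕ} {m : Fin (p + 1) → ℕ} (hm : Antitone m) {k : ℕ}
    (hk : k ≤ m (Fin.last p)) : Antitone (Fin.snoc m k : Fin (p + 2) → ℕ) := by
  intro i j hij
  induction j using Fin.lastCases with
  | last =>
    simp only [Fin.snoc_last]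
    induction i using Fin.lastCases with
    | last => simp [Fin.snoc_last]
    | cast i =>
      simp only [Fin.snoc_castSucc]
      exact hk.trans (hm (Fin.le_last i))
  | cast j =>
    induction i using Fin.lastCases with
    | last => exact absurd hij (Fin.castSucc_lt_last j).not_ge
    | cast i =>
      simp only [Fin.snoc_castSucc]
      exact hm (Fin.castSucc_le_castSucc_iff.mp hij)

lemma stepA (p N : ℕ) (f : (Fin (p + 1) → ℕ) → ℝ) :
    ∑ n ∈ TS (p + 1) N, f (Fin.init n)
      = ∑ m ∈ TS p N, ((m (Fin.last p) : ℝ) - 1) * f m := by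
  classical
  have hmaps : ∀ n ∈ TS (p + 1) N, Fin.init n ∈ TS p N := by
    intro n hn
    obtain ⟨h1, h2, h3⟩ := mem_TS.mp hn
    refine mem_TS.mpr ⟨?_, fun i => h2 _, ?_⟩
    · intro i j hij
      exact h1 (Fin.castSucc_le_castSucc_iff.mpr hij)
    · simpa [Fin.init] using h3
  rw [← Finset.sum_fiberwise_of_maps_to hmaps (fun n => f (Fin.init n))]
  refine Finset.sum_congr rfl fun m hm => ?_
  obtain ⟨hm1, hm2, hm3⟩ := mem_TS.mp hm
  have hfib : ∀ n ∈ (TS (p + 1) N).filter (fun n => Fin.init n = m), f (Fin.init n) = f m := by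
    intro n hn
    rw [(Finset.mem_filter.mp hn).2]
  rw [Finset.sum_congr rfl hfib]
  have hcard : ((TS (p + 1) N).filter (fun n => Fin.init n = m)).card
      = (Finset.Icc 2 (m (Fin.last p))).card := by
    apply Finset.card_nbij' (fun n => n (Fin.last (p + 1))) (fun k => Fin.snoc m k)
    · intro n hn
      obtain ⟨hn', hinit⟩ := Finset.mem_filter.mp hn
      obtain ⟨h1, h2, h3⟩ := mem_TS.mp hn'
      refine Finset.mem_Icc.mpr ⟨h2 _, ?_⟩
      have : n (Fin.last (p + 1)) ≤ n (Fin.castSucc (Fin.last p)) := h1 (Fin.le_last _)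
      calc n (Fin.last (p + 1)) ≤ Fin.init n (Fin.last p) := this
        _ = m (Fin.last p) := by rw [hinit]
    · intro k hk
      obtain ⟨hk1, hk2⟩ := Finset.mem_Icc.mp hk
      refine Finset.mem_filter.mpr ⟨mem_TS.mpr ⟨antitone_snoc hm1 hk2, ?_, ?_⟩, by simp⟩
      · intro i
        induction i using Fin.lastCases with
        | last => simpa using hk1
        | cast i => simpa using hm2 i
      · have h0 : (Fin.snoc m k : Fin (p + 2) → ℕ) (Fin.castSucc 0) ≤ N := by
          rw [Fin.snoc_castSucc]; exact hm3
        simpa using h0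
    · intro n hn
      obtain ⟨hn', hinit⟩ := Finset.mem_filter.mp hn
      rw [← hinit]
      exact Fin.snoc_init_self n
    · intro k hk
      simp
  rw [Finset.sum_const, hcard, Nat.card_Icc, nsmul_eq_mul]
  have h2 : (1:ℕ) ≤ m (Fin.last p) := le_trans one_le_two (hm2 _)
  congr 1
  rw [show m (Fin.last p) + 1 - 2 = m (Fin.last p) - 1 by omega, Nat.cast_sub h2]
  simp

lemma key (q : ℕ) : ∀ N : ℕ, 1 ≤ N →
    ∑ n ∈ TS (q + 1) N, (1 : ℝ) / ∏ i : Fin (q + 1), ((n i.castSucc : ℝ) - 1)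
      = (N : ℝ) - 1 := by
  induction q with
  | zero =>
    intro N hN
    have h := stepA 0 N (fun m => (1 : ℝ) / ((m 0 : ℝ) - 1))
    have e1 : ∀ n : Fin 2 → ℕ, (1 : ℝ) / ∏ i : Fin 1, ((n i.castSucc : ℝ) - 1)
        = (fun m : Fin 1 → ℕ => (1 : ℝ) / ((m 0 : ℝ) - 1)) (Fin.init n) := by
      intro n
      simp [Fin.prod_univ_one, Fin.init]
    rw [Finset.sum_congr rfl fun n _ => e1 n, h]
    have e2 : ∀ m ∈ TS 0 N,
        ((m (Fin.last 0) : ℝ) - 1) * ((1 : ℝ) / ((m 0 : ℝ) - 1)) = 1 := by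
      intro m hm
      obtain ⟨h1, h2, h3⟩ := mem_TS.mp hm
      have h2' : (2 : ℝ) ≤ (m 0 : ℝ) := by exact_mod_cast h2 0
      have hne : (m 0 : ℝ) - 1 ≠ 0 := by intro h; linarith
      rw [show Fin.last 0 = 0 from rfl]
      field_simp
    rw [Finset.sum_congr rfl e2, Finset.sum_const, nsmul_eq_mul, mul_one]
    have hcard : (TS 0 N).card = (Finset.Icc 2 N).card := by
      apply Finset.card_nbij' (fun m => m 0) (fun k => fun _ => k)
      · intro m hm
        obtain ⟨h1, h2, h3⟩ := mem_TS.mp hm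
        exact Finset.mem_Icc.mpr ⟨h2 0, h3⟩
      · intro k hk
        obtain ⟨hk1, hk2⟩ := Finset.mem_Icc.mp hk
        exact mem_TS.mpr ⟨fun i j _ => le_rfl, fun _ => hk1, hk2⟩
      · intro m hm
        funext i
        rw [show i = 0 from Fin.fin_one_eq_zero i]
      · intro k hk
        rfl
    rw [hcard, Nat.card_Icc, show N + 1 - 2 = N - 1 by omega, Nat.cast_sub hN]
    simp
  | succ q ih =>
    intro N hN
    have h := stepA (q + 1) N (fun m => (1 : ℝ) / ∏ i : Fin (q + 2), ((m i : ℝ) - 1))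
    have e1 : ∀ n : Fin (q + 3) → ℕ,
        (1 : ℝ) / ∏ i : Fin (q + 2), ((n i.castSucc : ℝ) - 1)
        = (fun m : Fin (q + 2) → ℕ => (1 : ℝ) / ∏ i : Fin (q + 2), ((m i : ℝ) - 1))
          (Fin.init n) := by
      intro n
      simp [Fin.init]
    rw [Finset.sum_congr rfl fun n _ => e1 n, h]
    have e2 : ∀ m ∈ TS (q + 1) N,
        ((m (Fin.last (q + 1)) : ℝ) - 1)
          * ((1 : ℝ) / ∏ i : Fin (q + 2), ((m i : ℝ) - 1))
        = (1 : ℝ) / ∏ i : Fin (q + 1), ((m i.castSucc : ℝ) - 1) := by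
      intro m hm
      obtain ⟨h1, h2, h3⟩ := mem_TS.mp hm
      have h2' : (2 : ℝ) ≤ (m (Fin.last (q + 1)) : ℝ) := by exact_mod_cast h2 _
      have hL : (m (Fin.last (q + 1)) : ℝ) - 1 ≠ 0 := by intro h; linarith
      rw [Fin.prod_univ_castSucc (f := fun i => ((m i : ℝ) - 1)), mul_one_div,
        mul_comm (∏ i : Fin (q + 1), ((m i.castSucc : ℝ) - 1)), ← div_div, div_self hL]
    rw [Finset.sum_congr rfl e2]
    exact ih N hN

theorem stmt11 (N q : ℕ) (hN : 1 ≤ N) :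
    (∑' n : {n : Fin (q + 2) → ℕ // Antitone n ∧ (∀ i, 2 ≤ n i) ∧ n 0 ≤ N},
      (1 : ℝ) / ∏ i : Fin (q + 1), ((n.1 i.castSucc : ℝ) - 1)) = (N : ℝ) - 1 := by
  exact (tsum_subtype_eq (q + 1) N
    (fun n => (1 : ℝ) / ∏ i : Fin (q + 1), ((n i.castSucc : ℝ) - 1))).trans (key q N hN)
end

section
/- For every integer n_i ≥ 1 and integers r > i, the identity n_i = Σ_{n_i ≥ n_{i+1} ≥ ⋯ ≥ n_r ≥ 1} 1/(n_{i+1} n_{i+2} ⋯ n_{r−1}) holds (where for r = i+1 the sum is Σ_{n_i ≥ n_{i+1} ≥ 1} 1 = n_i). -/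
open Finset

lemma snoc_antitone {q : ℕ} {n : Fin (q + 1) → ℕ} {m : ℕ} (hn : Antitone n)
    (hm : m ≤ n (Fin.last q)) : Antitone (Fin.snoc n m : Fin (q + 2) → ℕ) := by
  intro a b hab
  induction b using Fin.lastCases with
  | last =>
    induction a using Fin.lastCases with
    | last => simp
    | cast i =>
      simp only [Fin.snoc_last, Fin.snoc_castSucc]
      exact hm.trans (hn (Fin.le_last i))
  | cast j =>
    induction a using Fin.lastCases with
    | last => exact absurd (hab.trans_lt (Fin.castSucc_lt_last j)) (lt_irrefl _)
    | cast i =>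
      simp only [Fin.snoc_castSucc]
      exact hn (Fin.castSucc_le_castSucc_iff.mp hab)

open Classical in
lemma key_s16 (N : ℕ) : ∀ q : ℕ,
    ∑ n ∈ (Fintype.piFinset fun _ : Fin (q + 1) => Finset.Icc 1 N).filter
        (fun n => Antitone n ∧ (∀ j, 1 ≤ n j) ∧ n 0 ≤ N),
      (1 : ℝ) / ∏ j : Fin q, (n j.castSucc : ℝ) = N := by
  intro q
  induction q with
  | zero =>
    rw [Finset.filter_true_of_mem ?_]
    · simp
    · intro n hn
      simp only [Fintype.mem_piFinset, Finset.mem_Icc] at hn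
      exact ⟨Fin.subsingleton_one.antitone n, fun j => (hn j).1, (hn 0).2⟩
  | succ q ih =>
    set Fq := (Fintype.piFinset fun _ : Fin (q + 1) => Finset.Icc 1 N).filter
        (fun n => Antitone n ∧ (∀ j, 1 ≤ n j) ∧ n 0 ≤ N) with hFq
    have h1 : ∑ n ∈ (Fintype.piFinset fun _ : Fin (q + 2) => Finset.Icc 1 N).filter
          (fun n => Antitone n ∧ (∀ j, 1 ≤ n j) ∧ n 0 ≤ N),
        (1 : ℝ) / ∏ j : Fin (q + 1), (n j.castSucc : ℝ)
        = ∑ p ∈ Fq.sigma (fun n => Finset.Icc 1 (n (Fin.last q))),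
        (1 : ℝ) / ∏ j : Fin (q + 1), ((Fin.snoc p.1 p.2 : Fin (q + 2) → ℕ) j.castSucc : ℝ) := by
      refine Finset.sum_nbij' (fun n => ⟨Fin.init n, n (Fin.last (q + 1))⟩)
        (fun p => Fin.snoc p.1 p.2) ?_ ?_ ?_ ?_ ?_
      · -- forward membership
        intro n hn
        simp only [Finset.mem_filter, Fintype.mem_piFinset, Finset.mem_Icc] at hn
        obtain ⟨hmem, hanti, hone, hle⟩ := hn
        simp only [Finset.mem_sigma, hFq, Finset.mem_filter, Fintype.mem_piFinset,
          Finset.mem_Icc, Fin.init]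
        refine ⟨⟨fun j => hmem _, ?_, fun j => hone _, hle⟩, hone _, ?_⟩
        · exact fun a b hab => hanti (Fin.castSucc_le_castSucc_iff.mpr hab)
        · exact hanti (Fin.castSucc_lt_last _).le
      · -- backward membership
        intro p hp
        simp only [Finset.mem_sigma, hFq, Finset.mem_filter, Fintype.mem_piFinset,
          Finset.mem_Icc] at hp
        obtain ⟨⟨hmem, hanti, hone, hle⟩, hm1, hm2⟩ := hp
        have hA : Antitone (Fin.snoc p.1 p.2 : Fin (q + 2) → ℕ) := snoc_antitone hanti hm2
        simp only [Finset.mem_filter, Fintype.mem_piFinset, Finset.mem_Icc]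
        refine ⟨fun j => ?_, hA, fun j => ?_, ?_⟩
        · constructor
          · induction j using Fin.lastCases with
            | last => simpa using hm1
            | cast i => simpa using hone i
          · induction j using Fin.lastCases with
            | last => simpa using hm2.trans ((hanti (Fin.zero_le _)).trans hle)
            | cast i => simpa using (hmem i).2
        · induction j using Fin.lastCases with
          | last => simpa using hm1
          | cast i => simpa using hone i
        · show (Fin.snoc p.1 p.2 : Fin (q + 2) → ℕ) 0 ≤ N
          have : (0 : Fin (q + 2)) = Fin.castSucc 0 := rfl
          rw [this, Fin.snoc_castSucc]
          exact hle
      · intro n _; exact Fin.snoc_init_self n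
      · intro p _
        simp
      · intro n _
        rw [Fin.snoc_init_self n]
    rw [h1, Finset.sum_sigma]
    have h2 : ∀ n ∈ Fq, (∑ m ∈ Finset.Icc 1 (n (Fin.last q)),
        (1 : ℝ) / ∏ j : Fin (q + 1), ((Fin.snoc n m : Fin (q + 2) → ℕ) j.castSucc : ℝ))
        = (1 : ℝ) / ∏ j : Fin q, (n j.castSucc : ℝ) := by
      intro n hn
      simp only [hFq, Finset.mem_filter] at hn
      obtain ⟨-, -, hone, -⟩ := hn
      have hprod : ∀ m : ℕ, (∏ j : Fin (q + 1), ((Fin.snoc n m : Fin (q + 2) → ℕ) j.castSucc : ℝ))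
          = (∏ j : Fin q, (n j.castSucc : ℝ)) * (n (Fin.last q) : ℝ) := by
        intro m
        rw [Fin.prod_univ_castSucc]
        congr 1
        · exact Finset.prod_congr rfl fun j _ => by rw [Fin.snoc_castSucc]
        · rw [Fin.snoc_castSucc]
      simp only [hprod]
      rw [Finset.sum_const, Nat.card_Icc]
      have hlast : (1 : ℝ) ≤ (n (Fin.last q) : ℝ) := by exact_mod_cast hone (Fin.last q)
      have hc : (∏ j : Fin q, (n j.castSucc : ℝ)) ≠ 0 :=
        Finset.prod_ne_zero_iff.mpr fun j _ =>
          Nat.cast_ne_zero.mpr (by have := hone j.castSucc; omega)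
      have hl0 : (n (Fin.last q) : ℝ) ≠ 0 := by positivity
      rw [nsmul_eq_mul]
      have : ((n (Fin.last q) + 1 - 1 : ℕ) : ℝ) = (n (Fin.last q) : ℝ) := by
        push_cast [Nat.add_sub_cancel]; ring
      rw [this]
      field_simp
    rw [Finset.sum_congr rfl h2]
    exact ih

open scoped BigOperators

theorem stmt16 (N q : ℕ) (hN : 1 ≤ N) :
    (∑' n : {n : Fin (q + 1) → ℕ // Antitone n ∧ (∀ j, 1 ≤ n j) ∧ n 0 ≤ N},
      (1 : ℝ) / ∏ j : Fin q, (n.1 j.castSucc : ℝ)) = N := by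
  classical
  have h0 := tsum_subtype {n : Fin (q + 1) → ℕ | Antitone n ∧ (∀ j, 1 ≤ n j) ∧ n 0 ≤ N}
    (fun n => (1 : ℝ) / ∏ j : Fin q, (n j.castSucc : ℝ))
  refine h0.trans ?_
  rw [tsum_eq_sum (s := Fintype.piFinset fun _ : Fin (q + 1) => Finset.Icc 1 N) ?_]
  · rw [← key_s16 N q]
    rw [Finset.sum_filter]
    refine Finset.sum_congr rfl fun n _ => ?_
    rw [Set.indicator_apply]
    simp only [Set.mem_setOf_eq]
  · intro n hn
    rw [Set.indicator_apply_eq_zero]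
    intro hmem
    exfalso
    apply hn
    obtain ⟨hanti, hone, hle⟩ := hmem
    simp only [Fintype.mem_piFinset, Finset.mem_Icc]
    exact fun j => ⟨hone j, (hanti (Fin.zero_le j)).trans hle⟩
end

section
/- For every real u > 0 and integers r ≥ 1 and K ≥ r+1, one has Σ over all compositions k_0 + k_1 + ⋯ + k_r = K with each k_i ≥ 1 of Σ_{n_1 ≥ ⋯ ≥ n_r ≥ 1} 1/((n_1+u−1)^{k_0}(n_1+u)^{k_1}(n_2+u)^{k_2}⋯(n_r+u)^{k_r}) = 1/u^{K−r}. -/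
open scoped BigOperators

open Filter

lemma l1 (x : ℝ) (hx : 0 < x) (c : ℕ) :
    ∑ j : Fin c, (x ^ ((j : ℕ) + 1) * (x + 1) ^ (c - (j : ℕ)))⁻¹
      = (x ^ c)⁻¹ - ((x + 1) ^ c)⁻¹ := by
  have hx1 : (0:ℝ) < x + 1 := by linarith
  rw [Fin.sum_univ_eq_sum_range (fun j => (x ^ (j + 1) * (x + 1) ^ (c - j))⁻¹) c]
  have h : ∀ i ∈ Finset.range c, (x ^ (i + 1) * (x + 1) ^ (c - i))⁻¹
      = (x ^ (i + 1) * (x + 1) ^ (c - (i + 1)))⁻¹ - (x ^ i * (x + 1) ^ (c - i))⁻¹ := by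
    intro i hi
    rw [Finset.mem_range] at hi
    obtain ⟨e, he⟩ : ∃ e, c - i = e + 1 := ⟨c - i - 1, by omega⟩
    have he2 : c - (i + 1) = e := by omega
    rw [he, he2]
    have h1 : x ^ (i + 1) ≠ 0 := by positivity
    have h2 : (x + 1) ^ (e + 1) ≠ 0 := by positivity
    have h3 : x ^ i ≠ 0 := by positivity
    have h4 : (x + 1) ^ e ≠ 0 := by positivity
    field_simp
    ring
  rw [Finset.sum_congr rfl h, Finset.sum_range_sub (fun i => (x ^ i * (x + 1) ^ (c - i))⁻¹) c]
  simp

lemma l2 (u : ℝ) (hu : 0 < u) (c d : ℕ) (hc : 1 ≤ c) (hd : 1 ≤ d) :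
    HasSum (fun t : ℕ => ((((d + t : ℕ) : ℝ) + u - 1) ^ c)⁻¹ - ((((d + t : ℕ) : ℝ) + u) ^ c)⁻¹)
      (((d : ℝ) + u - 1) ^ c)⁻¹ := by
  set x : ℕ → ℝ := fun t => ((d + t : ℕ) : ℝ) + u - 1 with hxdef
  have hx : ∀ t, 0 < x t := by
    intro t
    have h1 : (1:ℝ) ≤ (d:ℝ) := by exact_mod_cast hd
    have h2 : (0:ℝ) ≤ (t:ℝ) := Nat.cast_nonneg t
    simp only [hxdef]
    push_cast
    linarith
  set G : ℕ → ℝ := fun t => (x t ^ c)⁻¹ with hGdef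
  have hkey : ∀ t, (((d + t : ℕ) : ℝ) + u) = x (t + 1) := by
    intro t; simp only [hxdef]; push_cast; ring
  have hfun : (fun t : ℕ => ((((d + t : ℕ) : ℝ) + u - 1) ^ c)⁻¹ - ((((d + t : ℕ) : ℝ) + u) ^ c)⁻¹)
      = fun t => G t - G (t + 1) := by
    funext t; simp only [hGdef, hkey t, hxdef]
  rw [hfun]
  have hmono : ∀ t, G (t + 1) ≤ G t := by
    intro t
    have hle : x t ≤ x (t + 1) := by
      simp only [hxdef]; push_cast; linarith
    have := pow_le_pow_left₀ (hx t).le hle c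
    exact inv_anti₀ (pow_pos (hx t) c) this
  have hnn : ∀ t, 0 ≤ G t - G (t + 1) := fun t => sub_nonneg.2 (hmono t)
  rw [hasSum_iff_tendsto_nat_of_nonneg hnn]
  have hps : ∀ N, ∑ i ∈ Finset.range N, (G i - G (i + 1)) = G 0 - G N :=
    fun N => Finset.sum_range_sub' G N
  simp only [hps]
  have hx0 : G 0 = (((d : ℝ) + u - 1) ^ c)⁻¹ := by
    simp only [hGdef, hxdef]; norm_num
  have hlim : Tendsto G atTop (nhds 0) := by
    apply Tendsto.inv_tendsto_atTop
    have h1 : Tendsto x atTop atTop := by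
      have : Tendsto (fun t : ℕ => (t : ℝ) + ((d:ℝ) + u - 1)) atTop atTop :=
        tendsto_atTop_add_const_right _ _ tendsto_natCast_atTop_atTop
      apply this.congr
      intro t; simp only [hxdef]; push_cast; ring
    exact (tendsto_pow_atTop (by omega : c ≠ 0)).comp h1
  rw [← hx0]
  simpa using hlim.const_sub (G 0)

lemma l3 (u : ℝ) (hu : 0 < u) (c d : ℕ) (hc : 1 ≤ c) (hd : 1 ≤ d) :
    HasSum (fun p : ℕ × Fin c =>
        ((((d + p.1 : ℕ) : ℝ) + u - 1) ^ ((p.2 : ℕ) + 1)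
          * (((d + p.1 : ℕ) : ℝ) + u) ^ (c - (p.2 : ℕ)))⁻¹)
      (((d : ℝ) + u - 1) ^ c)⁻¹ := by
  set f : ℕ × Fin c → ℝ := fun p =>
    ((((d + p.1 : ℕ) : ℝ) + u - 1) ^ ((p.2 : ℕ) + 1)
      * (((d + p.1 : ℕ) : ℝ) + u) ^ (c - (p.2 : ℕ)))⁻¹ with hfdef
  have hxpos : ∀ t : ℕ, (0:ℝ) < ((d + t : ℕ) : ℝ) + u - 1 := by
    intro t
    have h1 : (1:ℝ) ≤ (d:ℝ) := by exact_mod_cast hd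
    have h2 : (0:ℝ) ≤ (t:ℝ) := Nat.cast_nonneg t
    push_cast
    linarith
  have hx1 : ∀ t : ℕ, ((d + t : ℕ) : ℝ) + u = (((d + t : ℕ) : ℝ) + u - 1) + 1 := by
    intro t; ring
  have hfib : ∀ t : ℕ, HasSum (fun j : Fin c => f (t, j))
      (((((d + t : ℕ) : ℝ) + u - 1) ^ c)⁻¹ - ((((d + t : ℕ) : ℝ) + u) ^ c)⁻¹) := by
    intro t
    have := hasSum_fintype (fun j : Fin c => f (t, j))
    have heq : ∑ j : Fin c, f (t, j)
        = ((((d + t : ℕ) : ℝ) + u - 1) ^ c)⁻¹ - ((((d + t : ℕ) : ℝ) + u) ^ c)⁻¹ := by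
      rw [show (∑ j : Fin c, f (t, j)) = ∑ j : Fin c,
        ((((d + t : ℕ) : ℝ) + u - 1) ^ ((j : ℕ) + 1)
          * ((((d + t : ℕ) : ℝ) + u - 1) + 1) ^ (c - (j : ℕ)))⁻¹ from
          Finset.sum_congr rfl (fun j _ => by rw [hfdef]; rw [← hx1 t]),
        l1 _ (hxpos t) c, ← hx1 t]
    rwa [heq] at this
  have hnn : 0 ≤ f := by
    intro p
    have := hxpos p.1
    have h2 : (0:ℝ) < ((d + p.1 : ℕ) : ℝ) + u := by linarith
    rw [hfdef]
    positivity
  have hsummable : Summable f := by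
    rw [summable_prod_of_nonneg hnn]
    refine ⟨fun t => (hfib t).summable, ?_⟩
    apply Summable.congr (l2 u hu c d hc hd).summable
    intro t
    exact ((hfib t).tsum_eq).symm
  have htsum : ∑' p, f p = (((d : ℝ) + u - 1) ^ c)⁻¹ := by
    rw [Summable.tsum_prod hsummable]
    calc ∑' (t : ℕ), ∑' (j : Fin c), f (t, j)
        = ∑' (t : ℕ), (((((d + t : ℕ) : ℝ) + u - 1) ^ c)⁻¹
            - ((((d + t : ℕ) : ℝ) + u) ^ c)⁻¹) :=
          tsum_congr fun t => (hfib t).tsum_eq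
      _ = (((d : ℝ) + u - 1) ^ c)⁻¹ := (l2 u hu c d hc hd).tsum_eq
  exact htsum ▸ hsummable.hasSum

def Idx (m K : ℕ) : Type :=
  {k : Fin (m + 2) → ℕ // (∀ i, 1 ≤ k i) ∧ ∑ i, k i = K} ×
  {n : Fin (m + 1) → ℕ // Antitone n ∧ ∀ i, 1 ≤ n i}

noncomputable def FF (u : ℝ) (m K : ℕ) (p : Idx m K) : ℝ :=
  (((p.2.1 0 : ℝ) + u - 1) ^ (p.1.1 0) *
    ∏ i, ((p.2.1 i : ℝ) + u) ^ (p.1.1 i.succ))⁻¹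

lemma FF_nonneg (u : ℝ) (hu : 0 < u) (m K : ℕ) (p : Idx m K) : 0 ≤ FF u m K p := by
  apply inv_nonneg.2
  apply mul_nonneg
  · apply pow_nonneg
    have h1 : (1:ℝ) ≤ (p.2.1 0 : ℝ) := by exact_mod_cast p.2.2.2 0
    linarith
  · apply Finset.prod_nonneg
    intro i _
    apply pow_nonneg
    positivity

lemma antitone_cons {m : ℕ} (f : Fin (m + 1) → ℕ) (b : ℕ) (hf : Antitone f)
    (hb : f 0 ≤ b) : Antitone (Fin.cons b f : Fin (m + 2) → ℕ) := by
  intro a a'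
  refine Fin.cases ?_ (fun i => ?_) a'
  · intro h
    have : a = 0 := le_antisymm h (Fin.zero_le a)
    subst this
    exact le_refl _
  · refine Fin.cases ?_ (fun i' => ?_) a
    · intro _
      simp only [Fin.cons_zero, Fin.cons_succ]
      exact le_trans (hf (Fin.zero_le i)) hb
    · intro hi'
      simp only [Fin.cons_succ]
      exact hf (Fin.succ_le_succ_iff.mp hi')

def baseEquiv (K : ℕ) (hK : 2 ≤ K) : (ℕ × Fin (K - 1)) ≃ Idx 0 K where
  toFun p :=
    (⟨fun i => if i = 0 then (p.2 : ℕ) + 1 else (K - 1) - (p.2 : ℕ), by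
        intro i
        fin_cases i <;> simp <;> omega, by
        have hj := p.2.isLt
        rw [Fin.sum_univ_two]
        simp only [if_pos rfl]
        norm_num
        omega⟩,
     ⟨fun _ => 1 + p.1, antitone_const, fun i => Nat.le_add_right 1 p.1⟩)
  invFun q := (q.2.1 0 - 1, ⟨q.1.1 0 - 1, by
      have h := q.1.2.2
      rw [Fin.sum_univ_two] at h
      have h0 := q.1.2.1 0
      have h1 := q.1.2.1 1
      omega⟩)
  left_inv := by
    rintro ⟨t, j⟩
    refine Prod.ext ?_ (Fin.ext ?_) <;> simp
  right_inv := by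
    rintro ⟨⟨k, hk1, hk2⟩, ⟨n, hn1, hn2⟩⟩
    rw [Fin.sum_univ_two] at hk2
    have h0 := hk1 0
    have h1 := hk1 1
    have hn0 := hn2 0
    refine Prod.ext (Subtype.ext ?_) (Subtype.ext ?_)
    · funext i
      fin_cases i <;> simp <;> omega
    · funext i
      fin_cases i
      simp
      omega

lemma base_case (u : ℝ) (hu : 0 < u) (K : ℕ) (hK : 2 ≤ K) :
    HasSum (FF u 0 K) ((u ^ (K - 1))⁻¹) := by
  have h3 := l3 u hu (K - 1) 1 (by omega) le_rfl
  apply (baseEquiv K hK).hasSum_iff.mp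
  have hfe : FF u 0 K ∘ (baseEquiv K hK) = fun p : ℕ × Fin (K - 1) =>
      ((((1 + p.1 : ℕ) : ℝ) + u - 1) ^ ((p.2 : ℕ) + 1)
        * (((1 + p.1 : ℕ) : ℝ) + u) ^ ((K - 1) - (p.2 : ℕ)))⁻¹ := by
    funext p
    simp only [Function.comp_apply, baseEquiv, Equiv.coe_fn_mk, FF, Fin.prod_univ_succ, Fin.prod_univ_zero]
    erw [Equiv.coe_fn_mk]
    norm_num
  rw [hfe]
  have hv : ((((1:ℕ) : ℝ) + u - 1) ^ (K - 1))⁻¹ = (u ^ (K - 1))⁻¹ := by norm_num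
  rw [← hv]
  exact h3

lemma sig_ext {m K : ℕ} {q q' : Idx m K} {p : ℕ × Fin (q.1.1 0)} {p' : ℕ × Fin (q'.1.1 0)}
    (hq : q = q') (ht : p.1 = p'.1) (hj : (p.2 : ℕ) = (p'.2 : ℕ)) :
    (⟨q, p⟩ : Σ q : Idx m K, ℕ × Fin (q.1.1 0)) = ⟨q', p'⟩ := by
  subst hq
  obtain ⟨t, j⟩ := p
  obtain ⟨t', j'⟩ := p'
  simp only at ht hj
  cases ht
  cases (Fin.ext hj : j = j')
  rfl

def stepEquiv (m K : ℕ) (hK : m + 3 ≤ K) :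
    (Σ q : Idx m (K - 1), ℕ × Fin (q.1.1 0)) ≃ Idx (m + 1) K where
  toFun x :=
    (⟨Fin.cons ((x.2.2 : ℕ) + 1)
        (Fin.cons (x.1.1.1 0 - (x.2.2 : ℕ)) (fun i => x.1.1.1 i.succ)), by
        intro i
        refine Fin.cases ?_ (fun i' => ?_) i
        · show 1 ≤ (x.2.2 : ℕ) + 1
          omega
        · show (1:ℕ) ≤ (Fin.cons (x.1.1.1 0 - (x.2.2 : ℕ))
              (fun i => x.1.1.1 i.succ) : Fin (m + 2) → ℕ) i'
          refine Fin.cases ?_ (fun i'' => ?_) i'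
          · show 1 ≤ x.1.1.1 0 - (x.2.2 : ℕ)
            have := x.2.2.isLt
            omega
          · show 1 ≤ x.1.1.1 i''.succ
            exact x.1.1.2.1 _, by
        have hsum : x.1.1.1 0 + ∑ i : Fin (m + 1), x.1.1.1 i.succ = K - 1 := by
          have h := x.1.1.2.2
          rw [Fin.sum_univ_succ] at h
          exact h
        have hlt : (x.2.2 : ℕ) < x.1.1.1 0 := x.2.2.isLt
        rw [Fin.sum_univ_succ, Fin.sum_univ_succ]
        show (x.2.2 : ℕ) + 1 + (x.1.1.1 0 - (x.2.2 : ℕ)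
          + ∑ i : Fin (m + 1), x.1.1.1 i.succ) = K
        omega⟩,
     ⟨Fin.cons (x.1.2.1 0 + x.2.1) x.1.2.1,
        antitone_cons _ _ x.1.2.2.1 (Nat.le_add_right _ _), by
        intro i
        refine Fin.cases ?_ (fun i' => ?_) i
        · show 1 ≤ x.1.2.1 0 + x.2.1
          have := x.1.2.2.2 0
          omega
        · show 1 ≤ x.1.2.1 i'
          exact x.1.2.2.2 _⟩)
  invFun p :=
    ⟨(⟨Fin.cons (p.1.1 0 + p.1.1 1 - 1) (fun i => p.1.1 i.succ.succ), by
        have h0 := p.1.2.1 0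
        have h1 := p.1.2.1 1
        intro i
        refine Fin.cases ?_ (fun i' => ?_) i
        · show 1 ≤ p.1.1 0 + p.1.1 1 - 1
          omega
        · show 1 ≤ p.1.1 i'.succ.succ
          exact p.1.2.1 _, by
        have h0 := p.1.2.1 0
        have h1 := p.1.2.1 1
        have hsum : p.1.1 0 + (p.1.1 1 + ∑ i : Fin (m + 1), p.1.1 i.succ.succ) = K := by
          have h := p.1.2.2
          rw [Fin.sum_univ_succ, Fin.sum_univ_succ] at h
          exact h
        rw [Fin.sum_univ_succ]
        show p.1.1 0 + p.1.1 1 - 1 + ∑ i : Fin (m + 1), p.1.1 i.succ.succ = K - 1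
        omega⟩,
      ⟨fun i => p.2.1 i.succ,
        fun a b hab => p.2.2.1 (Fin.succ_le_succ_iff.mpr hab),
        fun i => p.2.2.2 _⟩),
     (p.2.1 0 - p.2.1 1, ⟨p.1.1 0 - 1, by
        have h0 := p.1.2.1 0
        have h1 := p.1.2.1 1
        show p.1.1 0 - 1 < p.1.1 0 + p.1.1 1 - 1
        omega⟩)⟩
  left_inv := by
    rintro ⟨⟨⟨k, hk1, hk2⟩, ⟨n, hn1, hn2⟩⟩, t, j⟩
    have hj : (j : ℕ) < k 0 := j.isLt
    refine sig_ext (Prod.ext (Subtype.ext ?_) (Subtype.ext ?_)) ?_ ?_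
    · funext i
      refine Fin.cases ?_ (fun i' => ?_) i
      · show (j : ℕ) + 1 + (k 0 - (j : ℕ)) - 1 = k 0
        omega
      · show k i'.succ = k i'.succ
        rfl
    · funext i
      show n i = n i
      rfl
    · show n 0 + t - n 0 = t
      omega
    · show (j : ℕ) + 1 - 1 = (j : ℕ)
      omega
  right_inv := by
    rintro ⟨⟨k, hk1, hk2⟩, ⟨n, hn1, hn2⟩⟩
    have h0 := hk1 0
    have h1 := hk1 1
    have hn01 : n 1 ≤ n 0 := hn1 (Fin.zero_le 1)
    refine Prod.ext (Subtype.ext ?_) (Subtype.ext ?_)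
    · funext i
      refine Fin.cases ?_ (fun i' => ?_) i
      · show k 0 - 1 + 1 = k 0
        omega
      · refine Fin.cases ?_ (fun i'' => ?_) i'
        · show k 0 + k 1 - 1 - (k 0 - 1) = k 1
          omega
        · show k i''.succ.succ = k i''.succ.succ
          rfl
    · funext i
      refine Fin.cases ?_ (fun i' => ?_) i
      · show n 1 + (n 0 - n 1) = n 0
        omega
      · show n i'.succ = n i'.succ
        rfl

lemma step_case (u : ℝ) (hu : 0 < u) (m K : ℕ) (hK : m + 3 ≤ K)
    (IH : HasSum (FF u m (K - 1)) ((u ^ (K - 1 - (m + 1)))⁻¹)) :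
    HasSum (FF u (m + 1) K) ((u ^ (K - (m + 2)))⁻¹) := by
  rw [show K - 1 - (m + 1) = K - (m + 2) from by omega] at IH
  set e := stepEquiv m K hK with he
  have hfib : ∀ q : Idx m (K - 1),
      HasSum (fun p : ℕ × Fin (q.1.1 0) => (FF u (m + 1) K ∘ e) ⟨q, p⟩)
        (FF u m (K - 1) q) := by
    intro q
    have hc : 1 ≤ q.1.1 0 := q.1.2.1 0
    have hd : 1 ≤ q.2.1 0 := q.2.2.2 0
    have h3 := (l3 u hu (q.1.1 0) (q.2.1 0) hc hd).mul_left
      ((∏ i : Fin (m + 1), ((q.2.1 i : ℝ) + u) ^ (q.1.1 i.succ))⁻¹)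
    have hval : (∏ i : Fin (m + 1), ((q.2.1 i : ℝ) + u) ^ (q.1.1 i.succ))⁻¹ *
        (((q.2.1 0 : ℝ) + u - 1) ^ (q.1.1 0))⁻¹ = FF u m (K - 1) q := by
      rw [FF, mul_inv]
      ring
    rw [hval] at h3
    refine HasSum.congr_fun h3 ?_
    intro p
    obtain ⟨t, j⟩ := p
    simp only [he, Function.comp_apply, stepEquiv, Equiv.coe_fn_mk, FF,
      Fin.cons_zero, Fin.cons_succ, Fin.prod_univ_succ, mul_inv]
    simp only [DFunLike.coe, EquivLike.coe, Fin.cons_zero, Fin.cons_succ, Fin.prod_univ_succ, mul_inv]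
    ring
  have hnn : ∀ x : (Σ q : Idx m (K - 1), ℕ × Fin (q.1.1 0)),
      0 ≤ (FF u (m + 1) K ∘ e) x := fun x => FF_nonneg u hu _ _ _
  have hsummable : Summable (FF u (m + 1) K ∘ e) := by
    rw [summable_sigma_of_nonneg hnn]
    exact ⟨fun q => (hfib q).summable,
      IH.summable.congr fun q => ((hfib q).tsum_eq).symm⟩
  exact e.hasSum_iff.mp (HasSum.sigma_of_hasSum IH hfib hsummable)

lemma main (u : ℝ) (hu : 0 < u) : ∀ m K : ℕ, m + 2 ≤ K →
    HasSum (FF u m K) ((u ^ (K - (m + 1)))⁻¹) := by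
  intro m
  induction m with
  | zero => exact fun K hK => base_case u hu K hK
  | succ m ih =>
    intro K hK
    exact step_case u hu m K hK (ih (K - 1) (by omega))

theorem stmt17 (u : ℝ) (hu : 0 < u) (r K : ℕ) (hr : 1 ≤ r) (hK : r + 1 ≤ K) :
    (∑' k : {k : Fin (r + 1) → ℕ // (∀ i, 1 ≤ k i) ∧ ∑ i, k i = K},
      ∑' n : {n : Fin r → ℕ // Antitone n ∧ ∀ i, 1 ≤ n i},
        (1 : ℝ) / (((n.1 ⟨0, hr⟩ : ℝ) + u - 1) ^ (k.1 0) *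
          ∏ i : Fin r, ((n.1 i : ℝ) + u) ^ (k.1 i.succ))) = 1 / u ^ (K - r) := by
  obtain ⟨m, rfl⟩ : ∃ m, r = m + 1 := ⟨r - 1, by omega⟩
  have H := main u hu m K (by omega)
  show (∑' k : {k : Fin (m + 2) → ℕ // (∀ i, 1 ≤ k i) ∧ ∑ i, k i = K},
      ∑' n : {n : Fin (m + 1) → ℕ // Antitone n ∧ ∀ i, 1 ≤ n i},
        (1 : ℝ) / (((n.1 0 : ℝ) + u - 1) ^ (k.1 0) *
          ∏ i : Fin (m + 1), ((n.1 i : ℝ) + u) ^ (k.1 i.succ))) = 1 / u ^ (K - (m + 1))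
  calc (∑' k : {k : Fin (m + 2) → ℕ // (∀ i, 1 ≤ k i) ∧ ∑ i, k i = K},
      ∑' n : {n : Fin (m + 1) → ℕ // Antitone n ∧ ∀ i, 1 ≤ n i},
        (1 : ℝ) / (((n.1 0 : ℝ) + u - 1) ^ (k.1 0) *
          ∏ i : Fin (m + 1), ((n.1 i : ℝ) + u) ^ (k.1 i.succ)))
      = ∑' k : {k : Fin (m + 2) → ℕ // (∀ i, 1 ≤ k i) ∧ ∑ i, k i = K},
        ∑' n : {n : Fin (m + 1) → ℕ // Antitone n ∧ ∀ i, 1 ≤ n i},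
          FF u m K (k, n) := by
        apply tsum_congr
        intro k
        apply tsum_congr
        intro n
        simp only [FF, one_div]
    _ = ∑' p : Idx m K, FF u m K p := (Summable.tsum_prod H.summable).symm
    _ = (u ^ (K - (m + 1)))⁻¹ := H.tsum_eq
    _ = 1 / u ^ (K - (m + 1)) := (one_div _).symm
end

section
/- For every real u > 0 and integer r ≥ 1, Σ_{n_1 ≥ n_2 ≥ ⋯ ≥ n_r ≥ 1} 1/((n_1+u−1)(n_1+u)(n_2+u)⋯(n_r+u)) = 1/u. -/
open scoped BigOperators

-- telescoping real sum
lemma tele (v : ℝ) (hv : 0 < v) :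
    HasSum (fun k : ℕ => 1 / ((v + k) * (v + k + 1))) (1 / v) := by
  have hpos : ∀ k : ℕ, (0:ℝ) < v + k := fun k => by positivity
  have hnn : ∀ k : ℕ, (0:ℝ) ≤ 1 / ((v + k) * (v + k + 1)) := fun k => by positivity
  rw [hasSum_iff_tendsto_nat_of_nonneg hnn]
  have hsum : ∀ n : ℕ, ∑ i ∈ Finset.range n, 1 / ((v + i) * (v + i + 1))
      = 1 / v - 1 / (v + n) := by
    intro n
    have := Finset.sum_range_sub' (fun i : ℕ => 1 / (v + i)) n
    rw [show (1:ℝ)/v - 1/(v+n) = 1/(v+(0:ℕ)) - 1/(v+n) by norm_num, ← this]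
    apply Finset.sum_congr rfl
    intro i _
    have h1 : v + i ≠ 0 := (hpos i).ne'
    have h2 : v + i + 1 ≠ 0 := by positivity
    push_cast
    rw [show v + ((i:ℝ)+1) = v + i + 1 by ring, div_sub_div _ _ h1 h2]
    norm_num
  simp only [hsum]
  have : Filter.Tendsto (fun n : ℕ => 1 / (v + n)) Filter.atTop (nhds 0) := by
    simp only [one_div]
    apply Filter.Tendsto.inv_tendsto_atTop
    apply Filter.tendsto_atTop_add_const_left
    exact tendsto_natCast_atTop_atTop
  simpa using (tendsto_const_nhds.sub this)

lemma teleE (v : ℝ) (hv : 0 < v) :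
    ∑' k : ℕ, ENNReal.ofReal (1 / ((v + k) * (v + k + 1))) = ENNReal.ofReal (1 / v) := by
  have hnn : ∀ k : ℕ, (0:ℝ) ≤ 1 / ((v + k) * (v + k + 1)) := fun k => by positivity
  rw [← ENNReal.ofReal_tsum_of_nonneg hnn (tele v hv).summable, (tele v hv).tsum_eq]

def eShift (a : ℕ) : ℕ ≃ {k : ℕ // a ≤ k} :=
  { toFun := fun k => ⟨a + k, Nat.le_add_right a k⟩
    invFun := fun n => n.1 - a
    left_inv := fun k => by simp
    right_inv := fun n => by simp [Nat.add_sub_cancel' n.2] }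

lemma shifted (u : ℝ) (hu : 0 < u) (a : ℕ) (ha : 1 ≤ a) :
    ∑' k : {k : ℕ // a ≤ k}, ENNReal.ofReal (1 / (((k:ℝ) + u - 1) * ((k:ℝ) + u)))
      = ENNReal.ofReal (1 / ((a:ℝ) + u - 1)) := by
  have hv : (0:ℝ) < (a:ℝ) + u - 1 := by
    have : (1:ℝ) ≤ a := by exact_mod_cast ha
    linarith
  have e := eShift a
  rw [← (eShift a).tsum_eq]
  have key : ∀ k : ℕ, ENNReal.ofReal (1 / ((((eShift a k : ℕ):ℝ) + u - 1) * (((eShift a k : ℕ):ℝ) + u)))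
      = ENNReal.ofReal (1 / ((((a:ℝ)+u-1) + k) * (((a:ℝ)+u-1) + k + 1))) := by
    intro k
    have hk : ((eShift a k : ℕ) : ℝ) = (a:ℝ) + k := by
      have h0 : (eShift a k : ℕ) = a + k := rfl
      rw [h0]; push_cast; ring
    congr 2
    rw [hk]; ring
  calc ∑' k : ℕ, ENNReal.ofReal (1 / (((((eShift a k : ℕ)):ℝ) + u - 1) * (((eShift a k : ℕ):ℝ) + u)))
      = ∑' k : ℕ, ENNReal.ofReal (1 / ((((a:ℝ)+u-1) + k) * (((a:ℝ)+u-1) + k + 1))) :=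
        tsum_congr key
    _ = ENNReal.ofReal (1 / ((a:ℝ) + u - 1)) := teleE _ hv

def e0 : {n : Fin 1 → ℕ // Antitone n ∧ ∀ i, 1 ≤ n i} ≃ {k : ℕ // 1 ≤ k} :=
  { toFun := fun n => ⟨n.1 0, n.2.2 0⟩
    invFun := fun k => ⟨fun _ => k.1, antitone_const, fun _ => k.2⟩
    left_inv := fun n => Subtype.ext (funext fun i => by
      have : i = 0 := Subsingleton.elim i 0
      rw [this])
    right_inv := fun k => rfl }

def eStep (r : ℕ) : {n : Fin (r+2) → ℕ // Antitone n ∧ ∀ i, 1 ≤ n i} ≃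
    Σ m : {n : Fin (r+1) → ℕ // Antitone n ∧ ∀ i, 1 ≤ n i}, {k : ℕ // m.1 0 ≤ k} :=
  { toFun := fun n =>
      ⟨⟨Fin.tail n.1, fun i j hij => n.2.1 (Fin.succ_le_succ_iff.mpr hij),
        fun i => n.2.2 _⟩,
       ⟨n.1 0, by simpa [Fin.tail] using n.2.1 (Fin.zero_le 1)⟩⟩
    invFun := fun σ =>
      ⟨Fin.cons σ.2.1 σ.1.1, by
        rw [Fin.antitone_iff_succ_le]
        intro i
        refine Fin.cases ?_ ?_ i
        · simpa using σ.2.2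
        · intro j
          simp only [← Fin.succ_castSucc, Fin.cons_succ]
          exact σ.1.2.1 (Fin.castSucc_le_succ j),
       by
        intro i
        refine Fin.cases ?_ ?_ i
        · simpa using le_trans (σ.1.2.2 0) σ.2.2
        · intro j; simpa using σ.1.2.2 j⟩
    left_inv := fun n => Subtype.ext (Fin.cons_self_tail n.1)
    right_inv := fun σ => by
      rcases σ with ⟨⟨m, hm⟩, ⟨k, hk⟩⟩
      simp [Fin.tail_cons, Fin.cons_zero]
      rfl }

lemma mainE (r : ℕ) (u : ℝ) (hu : 0 < u) :
    ∑' n : {n : Fin (r+1) → ℕ // Antitone n ∧ ∀ i, 1 ≤ n i},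
      ENNReal.ofReal (1 / (((n.1 0 : ℝ) + u - 1) * ∏ i, ((n.1 i : ℝ) + u)))
      = ENNReal.ofReal (1 / u) := by
  induction r generalizing u with
  | zero =>
    rw [← Equiv.tsum_eq e0.symm]
    have key : ∀ k : {k : ℕ // 1 ≤ k},
        ENNReal.ofReal (1 / ((((e0.symm k).1 0 : ℝ) + u - 1) * ∏ i, (((e0.symm k).1 i : ℝ) + u)))
        = ENNReal.ofReal (1 / (((k:ℕ):ℝ) + u - 1) / (((k:ℕ):ℝ) + u)) := by
      intro k
      have h0 : (e0.symm k).1 = fun _ => k.1 := rfl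
      rw [h0]
      congr 1
      rw [Fin.prod_univ_one, div_div]
    rw [tsum_congr key]
    simp only [div_div]
    rw [shifted u hu 1 le_rfl]
    norm_num
  | succ r ih =>
    rw [← Equiv.tsum_eq (eStep r).symm, ENNReal.tsum_sigma']
    have key : ∀ m : {n : Fin (r+1) → ℕ // Antitone n ∧ ∀ i, 1 ≤ n i},
        (∑' k : {k : ℕ // m.1 0 ≤ k},
          ENNReal.ofReal (1 / (((((eStep r).symm ⟨m, k⟩).1 0 : ℝ) + u - 1) *
            ∏ i, ((((eStep r).symm ⟨m, k⟩).1 i : ℝ) + u))))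
        = ENNReal.ofReal (1 / (((m.1 0 : ℝ) + u - 1) * ∏ i, ((m.1 i : ℝ) + u))) := by
      intro m
      set Q : ℝ := ∏ i, ((m.1 i : ℝ) + u) with hQ
      have hQpos : 0 < Q := Finset.prod_pos (fun i _ => by positivity)
      have step1 : ∀ k : {k : ℕ // m.1 0 ≤ k},
          ENNReal.ofReal (1 / (((((eStep r).symm ⟨m, k⟩).1 0 : ℝ) + u - 1) *
            ∏ i, ((((eStep r).symm ⟨m, k⟩).1 i : ℝ) + u)))
          = ENNReal.ofReal (1 / ((((k:ℕ):ℝ) + u - 1) * (((k:ℕ):ℝ) + u))) * ENNReal.ofReal (1 / Q) := by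
        intro k
        have hk1 : (1:ℝ) ≤ ((k:ℕ):ℝ) := by exact_mod_cast le_trans (m.2.2 0) k.2
        have hx1 : (0:ℝ) < ((k:ℕ):ℝ) + u - 1 := by linarith
        have hx2 : (0:ℝ) < ((k:ℕ):ℝ) + u := by linarith
        have h0 : ((eStep r).symm ⟨m, k⟩).1 = Fin.cons k.1 m.1 := rfl
        rw [h0]
        have hprod : ∏ i, (((Fin.cons k.1 m.1 : Fin (r+2) → ℕ) i : ℝ) + u)
            = (((k:ℕ):ℝ) + u) * Q := by
          rw [Fin.prod_univ_succ]
          simp [Fin.cons_succ, Fin.cons_zero, hQ]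
        rw [hprod, Fin.cons_zero]
        rw [← ENNReal.ofReal_mul (div_nonneg zero_le_one (mul_pos hx1 hx2).le)]
        congr 1
        rw [div_mul_div_comm]
        ring_nf
      have hm1 : (1:ℝ) ≤ (m.1 0 : ℝ) := by exact_mod_cast m.2.2 0
      rw [tsum_congr step1, ENNReal.tsum_mul_right, shifted u hu (m.1 0) (m.2.2 0),
        ← ENNReal.ofReal_mul (div_nonneg zero_le_one (by linarith)), div_mul_div_comm, one_mul]
    rw [tsum_congr key]
    exact ih u hu

theorem stmt18 (u : ℝ) (hu : 0 < u) (r : ℕ) (hr : 1 ≤ r) :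
    (∑' n : {n : Fin r → ℕ // Antitone n ∧ ∀ i, 1 ≤ n i},
      (1 : ℝ) / (((n.1 ⟨0, hr⟩ : ℝ) + u - 1) * ∏ i, ((n.1 i : ℝ) + u))) = 1 / u := by
  obtain ⟨s, rfl⟩ : ∃ s, r = s + 1 := ⟨r - 1, by omega⟩
  simp only [show (⟨0, hr⟩ : Fin (s+1)) = 0 from rfl]
  have hnn : ∀ n : {n : Fin (s+1) → ℕ // Antitone n ∧ ∀ i, 1 ≤ n i},
      0 ≤ (1:ℝ) / (((n.1 0 : ℝ) + u - 1) * ∏ i, ((n.1 i : ℝ) + u)) := by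
    intro n
    have h1 : (1:ℝ) ≤ (n.1 0 : ℝ) := by exact_mod_cast n.2.2 0
    have h2 : (0:ℝ) < ∏ i, ((n.1 i : ℝ) + u) :=
      Finset.prod_pos fun i _ => by positivity
    exact div_nonneg zero_le_one (mul_pos (by linarith) h2).le
  have h1 : (∑' n : {n : Fin (s+1) → ℕ // Antitone n ∧ ∀ i, 1 ≤ n i},
      (1 : ℝ) / (((n.1 0 : ℝ) + u - 1) * ∏ i, ((n.1 i : ℝ) + u)))
      = (∑' n : {n : Fin (s+1) → ℕ // Antitone n ∧ ∀ i, 1 ≤ n i},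
        ENNReal.ofReal ((1 : ℝ) / (((n.1 0 : ℝ) + u - 1) * ∏ i, ((n.1 i : ℝ) + u)))).toReal := by
    rw [ENNReal.tsum_toReal_eq (fun n => ENNReal.ofReal_ne_top)]
    exact tsum_congr fun n => (ENNReal.toReal_ofReal (hnn n)).symm
  rw [h1, mainE s u hu, ENNReal.toReal_ofReal (by positivity)]
end

section
/- For integers m ≥ 2, r ≥ 1, and K ≥ r+1, one has Σ over all compositions k_1 + ⋯ + k_r = K with k_1 ≥ 2 and k_2,…,k_r ≥ 1 of (k_1 − 1)·Σ_{n_1 ≥ n_2 ≥ ⋯ ≥ n_r ≥ m} 1/(n_1^{k_1} n_2^{k_2} ⋯ n_r^{k_r}) < 1/(m−1)^{K−r}. -/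
open scoped BigOperators
open scoped ENNReal

-- finite geometric identity in ℝ
lemma geomR (x y : ℝ) (hxy : x = y + x * y) (d : ℕ) :
    ∑ k ∈ Finset.range d, x ^ (d - k) * y ^ (k + 1) = x ^ d - y ^ d := by
  induction d with
  | zero => simp
  | succ d ih =>
    rw [Finset.sum_range_succ]
    have h1 : ∀ k ∈ Finset.range d, x ^ (d + 1 - k) * y ^ (k+1) = x * (x ^ (d-k) * y ^ (k+1)) := by
      intro k hk
      rw [Finset.mem_range] at hk
      rw [show d + 1 - k = (d - k) + 1 by omega, pow_succ]
      ring
    rw [Finset.sum_congr rfl h1, ← Finset.mul_sum, ih]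
    have h2 : d + 1 - d = 1 := by omega
    rw [h2]
    linear_combination (-(y^d)) * hxy

open ENNReal in
lemma enn_nat_inv_pow (n e : ℕ) (hn : 1 ≤ n) :
    ((n : ℝ≥0∞))⁻¹ ^ e = ENNReal.ofReal ((1 / (n:ℝ)) ^ e) := by
  have h0 : (0:ℝ) < n := by exact_mod_cast hn
  rw [ENNReal.ofReal_pow (by positivity), one_div, ENNReal.ofReal_inv_of_pos h0,
    ENNReal.ofReal_natCast]

lemma telesc (u c : ℕ) (hu : 1 ≤ u) (hc : 2 ≤ c) :
    HasSum (fun j : ℕ => (1/((j+u:ℕ):ℝ))^(c-1) - (1/((j+1+u:ℕ):ℝ))^(c-1))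
      ((1/(u:ℝ))^(c-1)) := by
  set g : ℕ → ℝ := fun j => (1/((j+u:ℕ):ℝ))^(c-1) with hg
  have hmono : ∀ j : ℕ, g (j+1) ≤ g j := by
    intro j
    apply pow_le_pow_left₀ (by positivity)
    apply one_div_le_one_div_of_le (by exact_mod_cast Nat.add_pos_right j hu)
    exact_mod_cast Nat.add_le_add_right (Nat.le_succ j) u
  have hnon : ∀ j : ℕ, 0 ≤ g j - g (j+1) := fun j => sub_nonneg.2 (hmono j)
  have heq : (fun j : ℕ => (1/((j+u:ℕ):ℝ))^(c-1) - (1/((j+1+u:ℕ):ℝ))^(c-1))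
      = fun j => g j - g (j+1) := by
    funext j; simp only [hg]
  rw [heq]
  rw [hasSum_iff_tendsto_nat_of_nonneg hnon]
  have hps : ∀ n : ℕ, ∑ i ∈ Finset.range n, (g i - g (i+1)) = g 0 - g n :=
    fun n => Finset.sum_range_sub' g n
  simp only [hps]
  have hg0 : g 0 = (1/(u:ℝ))^(c-1) := by simp [hg]
  have hlim : Filter.Tendsto g Filter.atTop (nhds 0) := by
    have h1 : Filter.Tendsto (fun j : ℕ => ((j+u:ℕ):ℝ)) Filter.atTop Filter.atTop := by
      apply Filter.tendsto_atTop_mono (f := fun j : ℕ => (j:ℝ))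
        (fun j => by exact_mod_cast Nat.le_add_right j u)
      exact tendsto_natCast_atTop_atTop
    have h2 := h1.inv_tendsto_atTop
    have h3 := h2.pow (c-1)
    rw [zero_pow (by omega)] at h3
    simpa [hg, one_div] using h3
  have h4 := Filter.Tendsto.sub (tendsto_const_nhds (x := g 0)) hlim
  rw [sub_zero] at h4
  rw [← hg0]
  exact h4

open ENNReal in
lemma L2 (u c : ℕ) (hu : 1 ≤ u) (hc : 2 ≤ c) :
    (∑' j : ℕ, ∑ k ∈ Finset.range (c-1),
        ((j+u:ℕ):ℝ≥0∞)⁻¹ ^ (c-1-k) * ((j+1+u:ℕ):ℝ≥0∞)⁻¹ ^ (k+1))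
      = ((u:ℕ):ℝ≥0∞)⁻¹ ^ (c-1) := by
  have hterm : ∀ j : ℕ, ∑ k ∈ Finset.range (c-1),
      ((j+u:ℕ):ℝ≥0∞)⁻¹ ^ (c-1-k) * ((j+1+u:ℕ):ℝ≥0∞)⁻¹ ^ (k+1)
      = ENNReal.ofReal ((1/((j+u:ℕ):ℝ))^(c-1) - (1/((j+1+u:ℕ):ℝ))^(c-1)) := by
    intro j
    have hx : (0:ℝ) < ((j+u:ℕ):ℝ) := by positivity
    have hxy : (1/((j+u:ℕ):ℝ)) = (1/((j+1+u:ℕ):ℝ)) + (1/((j+u:ℕ):ℝ)) * (1/((j+1+u:ℕ):ℝ)) := by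
      have h1 : ((j+u:ℕ):ℝ) = (j:ℝ) + u := by push_cast; ring
      have h2 : ((j+1+u:ℕ):ℝ) = (j:ℝ) + 1 + u := by push_cast; ring
      rw [h1, h2]
      have hu' : (1:ℝ) ≤ u := by exact_mod_cast hu
      field_simp
      ring
    have := geomR (1/((j+u:ℕ):ℝ)) (1/((j+1+u:ℕ):ℝ)) hxy (c-1)
    rw [← this, ENNReal.ofReal_sum_of_nonneg (fun k _ => by positivity)]
    apply Finset.sum_congr rfl
    intro k hk
    rw [Finset.mem_range] at hk
    rw [ENNReal.ofReal_mul (by positivity), enn_nat_inv_pow _ _ (by omega),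
      enn_nat_inv_pow _ _ (by omega)]
  simp only [hterm]
  have hts := telesc u c hu hc
  rw [← ENNReal.ofReal_tsum_of_nonneg
      (fun j => sub_nonneg.2 ?_) hts.summable]
  · rw [hts.tsum_eq, enn_nat_inv_pow u (c-1) hu]
  · apply pow_le_pow_left₀ (by positivity)
    apply one_div_le_one_div_of_le (by positivity)
    exact_mod_cast Nat.add_le_add_right (by omega : j + u ≤ j+1+u) 0

open ENNReal in
noncomputable def Srec : (r : ℕ) → (Fin r → ℕ) → ℕ → ℝ≥0∞
  | 0, _, _ => 1
  | (r+1), k, m => ∑' j : ℕ, ((j+m:ℕ):ℝ≥0∞)⁻¹ ^ (k (Fin.last r)) * Srec r (k ∘ Fin.castSucc) (j+m)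

open ENNReal in
noncomputable def Hrec : (r : ℕ) → ℕ → ℕ → ℝ≥0∞
  | 0, _, _ => 0
  | 1, K, m => ∑' j : ℕ, ∑ k ∈ Finset.range (K-1),
      ((j+(m-1):ℕ):ℝ≥0∞)⁻¹ ^ (K-1-k) * ((j+m:ℕ):ℝ≥0∞)⁻¹ ^ (k+1)
  | (r+2), K, m => ∑' i : ℕ, ∑' j : ℕ,
      ((i+m:ℕ):ℝ≥0∞)⁻¹ ^ (j+1) * Hrec (r+1) (K-(j+1)) (i+m)

lemma C1 : ∀ r K m : ℕ, K ≤ r → Hrec r K m = 0 := by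
  intro r
  induction r using Nat.strong_induction_on with
  | _ r ih =>
    match r with
    | 0 => intro K m _; rfl
    | 1 =>
      intro K m hK
      have : K - 1 = 0 := by omega
      simp [Hrec, this]
    | (r+2) =>
      intro K m hK
      have h0 : ∀ i j : ℕ, Hrec (r+1) (K-(j+1)) (i+m) = 0 := by
        intro i j
        exact ih (r+1) (by omega) _ _ (by omega)
      simp [Hrec, h0]

lemma C2 : ∀ r K m : ℕ, 1 ≤ r → r + 1 ≤ K → 2 ≤ m →
    Hrec r K m = ((m-1:ℕ):ℝ≥0∞)⁻¹ ^ (K - r) := by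
  intro r
  induction r using Nat.strong_induction_on with
  | _ r ih =>
    match r with
    | 0 => intro K m h; omega
    | 1 =>
      intro K m _ hK hm
      have hmu : ∀ j : ℕ, ((j+m:ℕ):ℝ≥0∞) = ((j+1+(m-1):ℕ):ℝ≥0∞) := by
        intro j; congr 1; omega
      have := L2 (m-1) K (by omega) (by omega)
      rw [Hrec]
      simp only [hmu]
      exact this
    | (r+2) =>
      intro K m _ hK hm
      set u := m - 1 with hu
      set c := K - (r+1) with hc
      have hinner : ∀ i : ℕ, (∑' j : ℕ,
          ((i+m:ℕ):ℝ≥0∞)⁻¹ ^ (j+1) * Hrec (r+1) (K-(j+1)) (i+m))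
          = ∑ k ∈ Finset.range (c-1),
            ((i+u:ℕ):ℝ≥0∞)⁻¹ ^ (c-1-k) * ((i+1+u:ℕ):ℝ≥0∞)⁻¹ ^ (k+1) := by
        intro i
        rw [tsum_eq_sum (s := Finset.range (c-1))
          (fun j hj => by
            rw [C1 (r+1) (K-(j+1)) (i+m) (by simp [Finset.mem_range] at hj; omega), mul_zero])]
        apply Finset.sum_congr rfl
        intro j hj
        rw [Finset.mem_range] at hj
        rw [ih (r+1) (by omega) (K-(j+1)) (i+m) (by omega) (by omega) (by omega)]
        have h1 : ((i+m:ℕ):ℝ≥0∞) = ((i+1+u:ℕ):ℝ≥0∞) := by congr 1; omega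
        have h2 : ((i+m-1:ℕ):ℝ≥0∞) = ((i+u:ℕ):ℝ≥0∞) := by congr 1; omega
        have h3 : K - (j+1) - (r+1) = c - 1 - j := by omega
        rw [h1, h2, h3, mul_comm]
      rw [Hrec]
      simp only [hinner]
      rw [L2 u c (by omega) (by omega)]
      have hce : c - 1 = K - (r+2) := by omega
      rw [hce]

lemma sigma_subtype_ext {α : Type*} {P : ℕ → α → Prop} (x y : Σ j : ℕ, {a : α // P j a})
    (h1 : x.1 = y.1) (h2 : x.2.1 = y.2.1) : x = y := by
  obtain ⟨j, a, ha⟩ := x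
  obtain ⟨j', a', ha'⟩ := y
  simp only at h1 h2
  subst h1
  subst h2
  rfl

lemma snoc_antitone_s19 {r : ℕ} (n' : Fin r → ℕ) (x : ℕ) (hA : Antitone n')
    (hx : ∀ i, x ≤ n' i) : Antitone (Fin.snoc n' x : Fin (r+1) → ℕ) := by
  rw [Fin.antitone_iff_succ_le]
  intro i
  rcases Nat.lt_or_ge (i.val + 1) r with h | h
  · have hs : i.succ = Fin.castSucc ⟨i.val + 1, h⟩ := by
      apply Fin.ext; simp
    rw [hs, Fin.snoc_castSucc, Fin.snoc_castSucc]
    exact hA (by simp [Fin.le_def])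
  · have hr : i.val + 1 = r := by omega
    have hs : i.succ = Fin.last r := by apply Fin.ext; simp [hr]
    rw [hs, Fin.snoc_last, Fin.snoc_castSucc]
    exact hx i

def TupEquiv (r m : ℕ) :
    {n : Fin (r+1) → ℕ // Antitone n ∧ ∀ i, m ≤ n i} ≃
      Σ j : ℕ, {n' : Fin r → ℕ // Antitone n' ∧ ∀ i, (j+m) ≤ n' i} where
  toFun x := ⟨x.1 (Fin.last r) - m,
    ⟨x.1 ∘ Fin.castSucc,
      ⟨fun a b hab => x.2.1 (Fin.castSucc_le_castSucc_iff.2 hab),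
       fun i => by
        have h1 : x.1 (Fin.last r) - m + m = x.1 (Fin.last r) :=
          Nat.sub_add_cancel (x.2.2 _)
        rw [h1]
        exact x.2.1 (Fin.le_last (Fin.castSucc i))⟩⟩⟩
  invFun y := ⟨Fin.snoc y.2.1 (y.1 + m),
    ⟨snoc_antitone_s19 y.2.1 (y.1 + m) y.2.2.1 y.2.2.2,
     by
      intro i
      refine Fin.lastCases ?_ (fun i' => ?_) i
      · simp only [Fin.snoc_last]; omega
      · simp only [Fin.snoc_castSucc]
        exact le_trans (Nat.le_add_left m _) (y.2.2.2 i')⟩⟩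
  left_inv x := by
    apply Subtype.ext
    funext i
    refine Fin.lastCases ?_ (fun i' => ?_) i
    · simp only [Fin.snoc_last]
      exact Nat.sub_add_cancel (x.2.2 _)
    · simp only [Fin.snoc_castSucc]; rfl
  right_inv y := by
    apply sigma_subtype_ext
    · simp only [Fin.snoc_last]; omega
    · funext i
      simp only [Function.comp_apply, Fin.snoc_castSucc]

def CompEquiv (r K : ℕ) (hr : 0 < r) (hr1 : 0 < r + 1) :
    {k : Fin (r+1) → ℕ // 2 ≤ k ⟨0, hr1⟩ ∧ (∀ i, 1 ≤ k i) ∧ ∑ i, k i = K} ≃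
      Σ j : ℕ, {k' : Fin r → ℕ // 2 ≤ k' ⟨0, hr⟩ ∧ (∀ i, 1 ≤ k' i) ∧ ∑ i, k' i = K - (j+1)} where
  toFun x := ⟨x.1 (Fin.last r) - 1,
    ⟨x.1 ∘ Fin.castSucc,
      ⟨by
        have hz : Fin.castSucc (⟨0, hr⟩ : Fin r) = (⟨0, hr1⟩ : Fin (r+1)) := by
          apply Fin.ext; simp
        simp only [Function.comp_apply, hz]
        exact x.2.1,
       fun i => x.2.2.1 _,
       by
        have hs := x.2.2.2
        rw [Fin.sum_univ_castSucc] at hs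
        have h1 : 1 ≤ x.1 (Fin.last r) := x.2.2.1 _
        simp only [Function.comp_apply]
        omega⟩⟩⟩
  invFun y := ⟨Fin.snoc y.2.1 (y.1 + 1),
    ⟨by
      have hz : (⟨0, hr1⟩ : Fin (r+1)) = Fin.castSucc (⟨0, hr⟩ : Fin r) := by
        apply Fin.ext; simp
      rw [hz, Fin.snoc_castSucc]
      exact y.2.2.1,
     fun i => by
      refine Fin.lastCases ?_ (fun i' => ?_) i
      · simp only [Fin.snoc_last]; omega
      · simp only [Fin.snoc_castSucc]
        exact y.2.2.2.1 i',
     by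
      have hK : y.1 + 1 ≤ K := by
        have h2 := y.2.2.1
        have h3 : y.2.1 ⟨0, hr⟩ ≤ ∑ i, y.2.1 i :=
          Finset.single_le_sum (fun i _ => Nat.zero_le _) (Finset.mem_univ _)
        have h4 := y.2.2.2.2
        omega
      rw [Fin.sum_univ_castSucc]
      simp only [Fin.snoc_castSucc, Fin.snoc_last]
      have h4 := y.2.2.2.2
      omega⟩⟩
  left_inv x := by
    apply Subtype.ext
    funext i
    refine Fin.lastCases ?_ (fun i' => ?_) i
    · simp only [Fin.snoc_last]
      have h1 : 1 ≤ x.1 (Fin.last r) := x.2.2.1 _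
      omega
    · simp only [Fin.snoc_castSucc]; rfl
  right_inv y := by
    apply sigma_subtype_ext
    · simp only [Fin.snoc_last]; omega
    · funext i
      simp only [Function.comp_apply, Fin.snoc_castSucc]

open ENNReal in
lemma bridgeS : ∀ (r : ℕ) (k : Fin r → ℕ) (m : ℕ), 2 ≤ m →
    (∑' n : {n : Fin r → ℕ // Antitone n ∧ ∀ i, m ≤ n i},
      (∏ i, ((n.1 i : ℕ) : ℝ≥0∞) ^ (k i))⁻¹) = Srec r k m := by
  intro r
  induction r with
  | zero =>
    intro k m hm
    have e0 : {n : Fin 0 → ℕ // Antitone n ∧ ∀ i, m ≤ n i} :=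
      ⟨fun i => Fin.elim0 i, ⟨fun a b _ => Fin.elim0 a, fun i => Fin.elim0 i⟩⟩
    rw [tsum_eq_single e0 (fun b hb => absurd (Subtype.ext (funext fun i => Fin.elim0 i)) hb)]
    simp [Srec]
  | succ r ih =>
    intro k m hm
    rw [← (TupEquiv r m).symm.tsum_eq, ENNReal.tsum_sigma']
    rw [Srec]
    apply tsum_congr
    intro j
    have hterm : ∀ n' : {n' : Fin r → ℕ // Antitone n' ∧ ∀ i, (j+m) ≤ n' i},
        (∏ i, (((TupEquiv r m).symm ⟨j, n'⟩).1 i : ℝ≥0∞) ^ (k i))⁻¹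
        = ((j+m:ℕ):ℝ≥0∞)⁻¹ ^ (k (Fin.last r)) *
          (∏ i, ((n'.1 i : ℕ) : ℝ≥0∞) ^ ((k ∘ Fin.castSucc) i))⁻¹ := by
      intro n'
      have hval : ((TupEquiv r m).symm ⟨j, n'⟩).1 = Fin.snoc n'.1 (j+m) := rfl
      rw [hval, Fin.prod_univ_castSucc]
      have hA : (∏ i : Fin r, (((Fin.snoc n'.1 (j+m) : Fin (r+1) → ℕ) (Fin.castSucc i) : ℕ) : ℝ≥0∞) ^ (k (Fin.castSucc i)))
          = ∏ i, ((n'.1 i : ℕ) : ℝ≥0∞) ^ ((k ∘ Fin.castSucc) i) := by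
        apply Finset.prod_congr rfl
        intro i _
        rw [Fin.snoc_castSucc]
        rfl
      rw [hA, Fin.snoc_last]
      have hAne0 : (∏ i, ((n'.1 i : ℕ) : ℝ≥0∞) ^ ((k ∘ Fin.castSucc) i)) ≠ 0 := by
        rw [Finset.prod_ne_zero_iff]
        intro i _
        apply pow_ne_zero
        have h5 := n'.2.2 i
        exact Nat.cast_ne_zero.2 (by omega)
      have hBnetop : (((j+m:ℕ):ℝ≥0∞)) ^ (k (Fin.last r)) ≠ ⊤ :=
        ENNReal.pow_ne_top (ENNReal.natCast_ne_top _)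
      rw [ENNReal.mul_inv (Or.inl hAne0) (Or.inr (by
        apply pow_ne_zero
        exact Nat.cast_ne_zero.2 (by omega)))]
      rw [ENNReal.inv_pow, mul_comm]
    rw [tsum_congr hterm, ENNReal.tsum_mul_left, ih (k ∘ Fin.castSucc) (j+m) (by omega)]


lemma comp_empty (r K : ℕ) (hr : 0 < r) (hK : K ≤ r) :
    IsEmpty {k : Fin r → ℕ // 2 ≤ k ⟨0, hr⟩ ∧ (∀ i, 1 ≤ k i) ∧ ∑ i, k i = K} := by
  constructor
  rintro ⟨k, h2, h1, hs⟩
  have hmem : (⟨0, hr⟩ : Fin r) ∈ Finset.univ := Finset.mem_univ _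
  have h3 := Finset.sum_erase_add Finset.univ k hmem
  have h4 : (Finset.univ.erase (⟨0, hr⟩ : Fin r)).card • 1 ≤
      ∑ i ∈ Finset.univ.erase (⟨0, hr⟩ : Fin r), k i :=
    Finset.card_nsmul_le_sum _ _ _ (fun i _ => h1 i)
  rw [Finset.card_erase_of_mem hmem] at h4
  simp only [Finset.card_univ, Fintype.card_fin, smul_eq_mul, mul_one] at h4
  omega

open ENNReal in
lemma Mlt : ∀ (r K m : ℕ) (hr : 0 < r), r + 1 ≤ K → 2 ≤ m →
    (∑' k : {k : Fin r → ℕ // 2 ≤ k ⟨0, hr⟩ ∧ (∀ i, 1 ≤ k i) ∧ ∑ i, k i = K},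
      ((k.1 ⟨0, hr⟩ - 1 : ℕ) : ℝ≥0∞) * Srec r k.1 m) < Hrec r K m := by
  intro r
  induction r using Nat.strong_induction_on with
  | _ r ih =>
    match r with
    | 0 => intro K m hr; omega
    | 1 =>
      intro K m hr hK hm
      set e0 : {k : Fin 1 → ℕ // 2 ≤ k ⟨0, hr⟩ ∧ (∀ i, 1 ≤ k i) ∧ ∑ i, k i = K} :=
        ⟨fun _ => K, by show 2 ≤ K; omega, fun _ => by show 1 ≤ K; omega, by simp⟩ with he0
      have hsub : ∀ b : {k : Fin 1 → ℕ // 2 ≤ k ⟨0, hr⟩ ∧ (∀ i, 1 ≤ k i) ∧ ∑ i, k i = K},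
          b = e0 := by
        rintro ⟨k, hk2, hk1, hks⟩
        apply Subtype.ext
        funext i
        have hi : i = ⟨0, hr⟩ := Subsingleton.elim _ _
        rw [Fin.sum_univ_one] at hks
        have h0 : (0 : Fin 1) = ⟨0, hr⟩ := Subsingleton.elim _ _
        rw [h0] at hks
        simp only [he0, hi, hks]
      rw [tsum_eq_single e0 (fun b hb => absurd (hsub b) hb)]
      have hsrec : Srec 1 (fun _ => K) m = ∑' j : ℕ, ((j+m:ℕ):ℝ≥0∞)⁻¹ ^ K := by
        rw [Srec]
        apply tsum_congr
        intro j
        rw [show Srec 0 ((fun _ => K) ∘ Fin.castSucc) (j+m) = 1 from rfl, mul_one]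
      have he0v : e0.1 ⟨0, hr⟩ = K := rfl
      rw [he0v, hsrec, ← ENNReal.tsum_mul_left]
      have hfin : Hrec 1 K m ≠ ⊤ := by
        rw [C2 1 K m (by omega) (by omega) hm]
        exact ENNReal.pow_ne_top (ENNReal.inv_ne_top.2 (Nat.cast_ne_zero.2 (by omega)))
      have hle : ∀ j : ℕ, ((K - 1 : ℕ) : ℝ≥0∞) * ((j+m:ℕ):ℝ≥0∞)⁻¹ ^ K ≤
          ∑ k ∈ Finset.range (K-1),
            ((j+(m-1):ℕ):ℝ≥0∞)⁻¹ ^ (K-1-k) * ((j+m:ℕ):ℝ≥0∞)⁻¹ ^ (k+1) := by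
        intro j
        have hconst : ((K - 1 : ℕ) : ℝ≥0∞) * ((j+m:ℕ):ℝ≥0∞)⁻¹ ^ K =
            ∑ _k ∈ Finset.range (K-1), ((j+m:ℕ):ℝ≥0∞)⁻¹ ^ K := by
          rw [Finset.sum_const, Finset.card_range, nsmul_eq_mul]
        rw [hconst]
        apply Finset.sum_le_sum
        intro k hk
        rw [Finset.mem_range] at hk
        have hsplit : ((j+m:ℕ):ℝ≥0∞)⁻¹ ^ K =
            ((j+m:ℕ):ℝ≥0∞)⁻¹ ^ (K-1-k) * ((j+m:ℕ):ℝ≥0∞)⁻¹ ^ (k+1) := by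
          rw [← pow_add]
          congr 1
          omega
        rw [hsplit]
        apply mul_le_mul_left
        exact pow_le_pow_left' (ENNReal.inv_le_inv.2
          (by exact_mod_cast (by omega : j + (m-1) ≤ j + m))) _
      apply ENNReal.tsum_lt_tsum (i := 0)
      · exact ne_top_of_le_ne_top hfin (ENNReal.tsum_le_tsum hle)
      · exact hle
      · have hconst : ((K - 1 : ℕ) : ℝ≥0∞) * ((0+m:ℕ):ℝ≥0∞)⁻¹ ^ K =
            ∑ _k ∈ Finset.range (K-1), ((0+m:ℕ):ℝ≥0∞)⁻¹ ^ K := by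
          rw [Finset.sum_const, Finset.card_range, nsmul_eq_mul]
        rw [hconst]
        apply ENNReal.sum_lt_sum_of_nonempty ⟨0, Finset.mem_range.2 (by omega)⟩
        intro k hk
        rw [Finset.mem_range] at hk
        have hsplit : ((0+m:ℕ):ℝ≥0∞)⁻¹ ^ K =
            ((0+m:ℕ):ℝ≥0∞)⁻¹ ^ (K-1-k) * ((0+m:ℕ):ℝ≥0∞)⁻¹ ^ (k+1) := by
          rw [← pow_add]; congr 1; omega
        rw [hsplit]
        apply ENNReal.mul_lt_mul_left ?_ ?_
        · apply ENNReal.pow_lt_pow_left (by omega : K-1-k ≠ 0) ?_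
          apply ENNReal.inv_lt_inv.2
          exact_mod_cast (by omega : 0 + (m-1) < 0 + m)
        · exact pow_ne_zero _ (ENNReal.inv_ne_zero.2 (ENNReal.natCast_ne_top _))
        · exact ENNReal.pow_ne_top (ENNReal.inv_ne_top.2 (Nat.cast_ne_zero.2 (by omega)))
    | (r+2) =>
      intro K m hr hK hm
      have hr1 : 0 < r + 1 := Nat.succ_pos r
      have hfin : Hrec (r+2) K m ≠ ⊤ := by
        rw [C2 (r+2) K m (by omega) (by omega) hm]
        exact ENNReal.pow_ne_top (ENNReal.inv_ne_top.2 (Nat.cast_ne_zero.2 (by omega)))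
      have h1 : (∑' k : {k : Fin (r+2) → ℕ // 2 ≤ k ⟨0, hr⟩ ∧ (∀ i, 1 ≤ k i) ∧ ∑ i, k i = K},
            ((k.1 ⟨0, hr⟩ - 1 : ℕ) : ℝ≥0∞) * Srec (r+2) k.1 m)
          = ∑' (j : ℕ), ∑' k' : {k' : Fin (r+1) → ℕ // 2 ≤ k' ⟨0, hr1⟩ ∧ (∀ i, 1 ≤ k' i) ∧
              ∑ i, k' i = K - (j+1)},
              ((((CompEquiv (r+1) K hr1 hr).symm ⟨j, k'⟩).1 ⟨0, hr⟩ - 1 : ℕ) : ℝ≥0∞)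
                * Srec (r+2) ((CompEquiv (r+1) K hr1 hr).symm ⟨j, k'⟩).1 m := by
        rw [← Equiv.tsum_eq (CompEquiv (r+1) K hr1 hr).symm]
        exact ENNReal.tsum_sigma' _
      rw [h1]
      have hterm : ∀ (j : ℕ) (k' : {k' : Fin (r+1) → ℕ // 2 ≤ k' ⟨0, hr1⟩ ∧ (∀ i, 1 ≤ k' i) ∧
            ∑ i, k' i = K - (j+1)}),
          ((((CompEquiv (r+1) K hr1 hr).symm ⟨j, k'⟩).1 ⟨0, hr⟩ - 1 : ℕ) : ℝ≥0∞)
              * Srec (r+2) ((CompEquiv (r+1) K hr1 hr).symm ⟨j, k'⟩).1 m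
          = ∑' i : ℕ, ((i+m:ℕ):ℝ≥0∞)⁻¹ ^ (j+1) *
              (((k'.1 ⟨0, hr1⟩ - 1 : ℕ) : ℝ≥0∞) * Srec (r+1) k'.1 (i+m)) := by
        intro j k'
        have hval : ((CompEquiv (r+1) K hr1 hr).symm ⟨j, k'⟩).1 = Fin.snoc k'.1 (j+1) := rfl
        rw [hval]
        have h0 : (Fin.snoc k'.1 (j+1) : Fin (r+2) → ℕ) ⟨0, hr⟩ = k'.1 ⟨0, hr1⟩ := by
          have hz : (⟨0, hr⟩ : Fin (r+2)) = Fin.castSucc ⟨0, hr1⟩ := by apply Fin.ext; simp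
          rw [hz, Fin.snoc_castSucc]
        rw [h0, Srec]
        have hlast : (Fin.snoc k'.1 (j+1) : Fin (r+2) → ℕ) (Fin.last (r+1)) = j+1 := by simp
        have hcomp : (Fin.snoc k'.1 (j+1) : Fin (r+2) → ℕ) ∘ Fin.castSucc = k'.1 := by
          funext i; simp
        rw [hlast, hcomp, ← ENNReal.tsum_mul_left]
        apply tsum_congr
        intro i
        ring
      rw [tsum_congr (fun j => tsum_congr (fun k' => hterm j k'))]
      have h2 : ∀ j : ℕ,
          (∑' k' : {k' : Fin (r+1) → ℕ // 2 ≤ k' ⟨0, hr1⟩ ∧ (∀ i, 1 ≤ k' i) ∧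
              ∑ i, k' i = K - (j+1)},
            ∑' i : ℕ, ((i+m:ℕ):ℝ≥0∞)⁻¹ ^ (j+1) *
              (((k'.1 ⟨0, hr1⟩ - 1 : ℕ) : ℝ≥0∞) * Srec (r+1) k'.1 (i+m)))
          = ∑' i : ℕ, ((i+m:ℕ):ℝ≥0∞)⁻¹ ^ (j+1) *
              (∑' k' : {k' : Fin (r+1) → ℕ // 2 ≤ k' ⟨0, hr1⟩ ∧ (∀ i, 1 ≤ k' i) ∧
                ∑ i, k' i = K - (j+1)},
                ((k'.1 ⟨0, hr1⟩ - 1 : ℕ) : ℝ≥0∞) * Srec (r+1) k'.1 (i+m)) := by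
        intro j
        rw [ENNReal.tsum_comm]
        apply tsum_congr
        intro i
        rw [ENNReal.tsum_mul_left]
      rw [tsum_congr h2]
      conv_lhs => rw [ENNReal.tsum_comm]
      rw [Hrec]
      have hAle : ∀ (j i : ℕ),
          (∑' k' : {k' : Fin (r+1) → ℕ // 2 ≤ k' ⟨0, hr1⟩ ∧ (∀ i, 1 ≤ k' i) ∧
              ∑ i, k' i = K - (j+1)},
            ((k'.1 ⟨0, hr1⟩ - 1 : ℕ) : ℝ≥0∞) * Srec (r+1) k'.1 (i+m))
          ≤ Hrec (r+1) (K-(j+1)) (i+m) := by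
        intro j i
        rcases le_or_gt (K-(j+1)) (r+1) with hsmall | hbig
        · haveI := comp_empty (r+1) (K-(j+1)) hr1 hsmall
          rw [tsum_empty]
          exact zero_le
        · exact (ih (r+1) (by omega) (K-(j+1)) (i+m) hr1 (by omega) (by omega)).le
      have hfg : ∀ i : ℕ,
          (∑' j : ℕ, ((i+m:ℕ):ℝ≥0∞)⁻¹ ^ (j+1) *
            (∑' k' : {k' : Fin (r+1) → ℕ // 2 ≤ k' ⟨0, hr1⟩ ∧ (∀ i, 1 ≤ k' i) ∧
              ∑ i, k' i = K - (j+1)},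
              ((k'.1 ⟨0, hr1⟩ - 1 : ℕ) : ℝ≥0∞) * Srec (r+1) k'.1 (i+m)))
          ≤ ∑' j : ℕ, ((i+m:ℕ):ℝ≥0∞)⁻¹ ^ (j+1) * Hrec (r+1) (K-(j+1)) (i+m) := by
        intro i
        exact ENNReal.tsum_le_tsum (fun j => mul_le_mul_right (hAle j i) _)
      have hgfin : ∀ i : ℕ,
          (∑' j : ℕ, ((i+m:ℕ):ℝ≥0∞)⁻¹ ^ (j+1) * Hrec (r+1) (K-(j+1)) (i+m)) ≠ ⊤ := by
        intro i
        apply ne_top_of_le_ne_top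
        · rw [Hrec] at hfin; exact hfin
        · exact ENNReal.le_tsum i
      apply ENNReal.tsum_lt_tsum (i := 0)
      · apply ne_top_of_le_ne_top
        · rw [Hrec] at hfin; exact hfin
        · exact ENNReal.tsum_le_tsum hfg
      · exact hfg
      · apply ENNReal.tsum_lt_tsum (i := 0)
        · exact ne_top_of_le_ne_top (hgfin 0)
            (ENNReal.tsum_le_tsum (fun j => mul_le_mul_right (hAle j 0) _))
        · exact fun j => mul_le_mul_right (hAle j 0) _
        · apply ENNReal.mul_lt_mul_right
          · exact pow_ne_zero _ (ENNReal.inv_ne_zero.2 (ENNReal.natCast_ne_top _))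
          · exact ENNReal.pow_ne_top (ENNReal.inv_ne_top.2 (Nat.cast_ne_zero.2 (by omega)))
          · exact ih (r+1) (by omega) (K-(0+1)) (0+m) hr1 (by omega) (by omega)

theorem stmt19 (m r K : ℕ) (hm : 2 ≤ m) (hr : 1 ≤ r) (hK : r + 1 ≤ K) :
    (∑' k : {k : Fin r → ℕ // 2 ≤ k ⟨0, hr⟩ ∧ (∀ i, 1 ≤ k i) ∧ ∑ i, k i = K},
      ((k.1 ⟨0, hr⟩ : ℝ) - 1) *
        ∑' n : {n : Fin r → ℕ // Antitone n ∧ ∀ i, m ≤ n i},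
          (1 : ℝ) / ∏ i, (n.1 i : ℝ) ^ (k.1 i)) <
      1 / ((m : ℝ) - 1) ^ (K - r) := by
  have hmain := Mlt r K m hr hK hm
  have hHne : Hrec r K m ≠ ⊤ := by
    rw [C2 r K m hr (by omega) hm]
    exact ENNReal.pow_ne_top (ENNReal.inv_ne_top.2 (Nat.cast_ne_zero.2 (by omega)))
  have htop : (∑' k : {k : Fin r → ℕ // 2 ≤ k ⟨0, hr⟩ ∧ (∀ i, 1 ≤ k i) ∧ ∑ i, k i = K},
      ((k.1 ⟨0, hr⟩ - 1 : ℕ) : ℝ≥0∞) * Srec r k.1 m) ≠ ⊤ :=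
    (hmain.trans_le (le_top.trans_eq rfl)).ne_top
  -- inner tsum conversion
  have hinner : ∀ k : {k : Fin r → ℕ // 2 ≤ k ⟨0, hr⟩ ∧ (∀ i, 1 ≤ k i) ∧ ∑ i, k i = K},
      (∑' n : {n : Fin r → ℕ // Antitone n ∧ ∀ i, m ≤ n i},
        (1 : ℝ) / ∏ i, (n.1 i : ℝ) ^ (k.1 i)) = (Srec r k.1 m).toReal := by
    intro k
    rw [← bridgeS r k.1 m hm]
    rw [ENNReal.tsum_toReal_eq (fun n => by
      apply ENNReal.inv_ne_top.2
      rw [Finset.prod_ne_zero_iff]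
      intro i _
      apply pow_ne_zero
      have h5 := n.2.2 i
      exact Nat.cast_ne_zero.2 (by omega))]
    apply tsum_congr
    intro n
    simp [ENNReal.toReal_inv, ENNReal.toReal_prod, ENNReal.toReal_pow, ENNReal.toReal_natCast,
      one_div]
  have houter : (∑' k : {k : Fin r → ℕ // 2 ≤ k ⟨0, hr⟩ ∧ (∀ i, 1 ≤ k i) ∧ ∑ i, k i = K},
      ((k.1 ⟨0, hr⟩ : ℝ) - 1) *
        ∑' n : {n : Fin r → ℕ // Antitone n ∧ ∀ i, m ≤ n i},
          (1 : ℝ) / ∏ i, (n.1 i : ℝ) ^ (k.1 i))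
      = (∑' k : {k : Fin r → ℕ // 2 ≤ k ⟨0, hr⟩ ∧ (∀ i, 1 ≤ k i) ∧ ∑ i, k i = K},
          ((k.1 ⟨0, hr⟩ - 1 : ℕ) : ℝ≥0∞) * Srec r k.1 m).toReal := by
    rw [ENNReal.tsum_toReal_eq (fun k => ne_top_of_le_ne_top htop (ENNReal.le_tsum k))]
    apply tsum_congr
    intro k
    rw [ENNReal.toReal_mul, ENNReal.toReal_natCast, hinner k]
    congr 1
    have h2 := k.2.1
    push_cast [Nat.cast_sub (by omega : 1 ≤ k.1 ⟨0, hr⟩)]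
    ring
  rw [houter]
  have hRHS : (1 : ℝ) / ((m : ℝ) - 1) ^ (K - r) = (Hrec r K m).toReal := by
    rw [C2 r K m hr (by omega) hm, ENNReal.toReal_pow, ENNReal.toReal_inv,
      ENNReal.toReal_natCast]
    rw [Nat.cast_sub (by omega : 1 ≤ m), Nat.cast_one]
    rw [one_div, inv_pow]
  rw [hRHS]
  exact (ENNReal.toReal_lt_toReal htop hHne).2 hmain
end
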